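/- arXiv:2503.08448 — 4 statements merged into one kernel-verified Lean document; each statement's English description precedes it below -/
import Mathlib

section
/- Let n ≥ 3 be an integer, 0 < m < (n-2)/n, γ > 0 with γ ≠ 2/(1-m), η > 0 and ε > 0. Suppose either (i) α ≠ 0 and β = 0, or (ii) α ∈ ℝ and β ≠ 0. If there exists a radially symmetric solution f of Δ(f^m/m) + αf + βx·∇f = 0, f > 0, in B_ε \ {0} ⊂ ℝ^n satisfying lim_{r→0⁺} r^γ f(r) = η, then case (ii) must hold with β ≠ 0, γ = α/β and γ > 2/(1-m). -/
open Set Filter Real Topology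

private lemma mymono {u U : ℝ → ℝ} {δ : ℝ}
    (hu : ∀ t ∈ Ioo (0:ℝ) δ, HasDerivAt u (U t) t)
    (hU : ∀ t ∈ Ioo (0:ℝ) δ, 0 ≤ U t) : MonotoneOn u (Ioo (0:ℝ) δ) := by
  apply monotoneOn_of_hasDerivWithinAt_nonneg (f' := U) (convex_Ioo _ _)
  · exact fun t ht => (hu t ht).continuousAt.continuousWithinAt
  · intro t ht; rw [isOpen_Ioo.interior_eq] at ht; exact (hu t ht).hasDerivWithinAt
  · intro t ht; rw [isOpen_Ioo.interior_eq] at ht; exact hU t ht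

/-- Key extraction: two-sided affine-in-`Ψ` bounds near `0`. -/
private lemma mlkey {g G Ψ P : ℝ → ℝ} {b c : ℝ} (hb : 0 < b)
    (hg : ∀ t ∈ Ioo (0:ℝ) b, HasDerivAt g (G t) t)
    (hΨ : ∀ t ∈ Ioo (0:ℝ) b, HasDerivAt Ψ (P t) t)
    (hP : ∀ t ∈ Ioo (0:ℝ) b, P t < 0)
    (hGP : Tendsto (fun r => G r / P r) (𝓝[>] (0:ℝ)) (𝓝 c))
    {ε : ℝ} (hε : 0 < ε) :
    ∃ δ, 0 < δ ∧ ∃ C₁ C₂ : ℝ, ∀ r ∈ Ioo (0:ℝ) δ,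
      g r ≤ (c + ε) * Ψ r + C₁ ∧ (c - ε) * Ψ r - C₂ ≤ g r := by
  have h1 : ∀ᶠ r in 𝓝[>] (0:ℝ), |G r / P r - c| < ε := by
    have := Metric.tendsto_nhds.1 hGP ε hε
    simpa [Real.dist_eq] using this
  have h2 : ∀ᶠ r in 𝓝[>] (0:ℝ), r ∈ Ioo (0:ℝ) b := Ioo_mem_nhdsGT_of_mem ⟨le_refl 0, hb⟩
  obtain ⟨u, hu, hsub⟩ := mem_nhdsGT_iff_exists_Ioo_subset.1 (h1.and h2)
  have hu0 : 0 < u := hu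
  -- derivative sign facts on `Ioo 0 u`
  have hfacts : ∀ t ∈ Ioo (0:ℝ) u, 0 ≤ G t - (c + ε) * P t ∧ 0 ≤ (c - ε) * P t - G t := by
    intro t ht
    obtain ⟨habs, htb⟩ := hsub ht
    have hPt := hP t htb
    have hGt : G t = (G t / P t) * P t := (div_mul_cancel₀ _ hPt.ne).symm
    obtain ⟨hl, hr⟩ := abs_lt.1 habs
    constructor <;> nlinarith [hGt]
  have hmono1 : MonotoneOn (fun t => g t - (c + ε) * Ψ t) (Ioo (0:ℝ) u) := by
    apply mymono (U := fun t => G t - (c + ε) * P t)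
    · intro t ht
      have htb := (hsub ht).2
      exact (hg t htb).sub ((hΨ t htb).const_mul _)
    · exact fun t ht => (hfacts t ht).1
  have hmono2 : MonotoneOn (fun t => (c - ε) * Ψ t - g t) (Ioo (0:ℝ) u) := by
    apply mymono (U := fun t => (c - ε) * P t - G t)
    · intro t ht
      have htb := (hsub ht).2
      exact ((hΨ t htb).const_mul _).sub (hg t htb)
    · exact fun t ht => (hfacts t ht).2
  refine ⟨u / 2, by linarith, g (u/2) - (c + ε) * Ψ (u/2), (c - ε) * Ψ (u/2) - g (u/2), ?_⟩
  intro r hr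
  have hrU : r ∈ Ioo (0:ℝ) u := ⟨hr.1, by linarith [hr.2]⟩
  have hu2 : u / 2 ∈ Ioo (0:ℝ) u := ⟨by linarith, by linarith⟩
  have hle : r ≤ u / 2 := le_of_lt hr.2
  constructor
  · have := hmono1 hrU hu2 hle; simpa using by linarith [this]
  · have := hmono2 hrU hu2 hle; simpa using by linarith [this]

/-- L'Hôpital-type ∞/∞ comparison at `0⁺` via monotone sandwich. -/
private lemma ml1 {g G Ψ P : ℝ → ℝ} {b c : ℝ} (hb : 0 < b)
    (hg : ∀ t ∈ Ioo (0:ℝ) b, HasDerivAt g (G t) t)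
    (hΨ : ∀ t ∈ Ioo (0:ℝ) b, HasDerivAt Ψ (P t) t)
    (hP : ∀ t ∈ Ioo (0:ℝ) b, P t < 0)
    (hΨtop : Tendsto Ψ (𝓝[>] (0:ℝ)) atTop)
    (hGP : Tendsto (fun r => G r / P r) (𝓝[>] (0:ℝ)) (𝓝 c)) :
    Tendsto (fun r => g r / Ψ r) (𝓝[>] (0:ℝ)) (𝓝 c) := by
  rw [Metric.tendsto_nhds]
  intro ε hε
  have hε2 : 0 < ε / 2 := by linarith
  obtain ⟨δ, hδ, C₁, C₂, hbd⟩ := mlkey hb hg hΨ hP hGP hε2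
  have hev1 : ∀ᶠ r in 𝓝[>] (0:ℝ), r ∈ Ioo (0:ℝ) δ := Ioo_mem_nhdsGT_of_mem ⟨le_refl 0, hδ⟩
  have hev2 : ∀ᶠ r in 𝓝[>] (0:ℝ), (|C₁| + |C₂|) * (2 / ε) + 1 ≤ Ψ r :=
    hΨtop.eventually_ge_atTop _
  filter_upwards [hev1, hev2] with r hr hΨr
  have hΨpos : 0 < Ψ r := by nlinarith [abs_nonneg C₁, abs_nonneg C₂, div_pos two_pos hε]
  obtain ⟨hub, hlb⟩ := hbd r hr
  have hC1 : C₁ ≤ |C₁| := le_abs_self C₁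
  have hC2 : C₂ ≤ |C₂| := le_abs_self C₂
  have hkey : (|C₁| + |C₂|) < Ψ r * (ε / 2) := by
    have h2ε : 0 < 2 / ε := div_pos two_pos hε
    have := mul_le_mul_of_nonneg_right hΨr (le_of_lt hε2)
    calc (|C₁| + |C₂|) = ((|C₁| + |C₂|) * (2/ε)) * (ε/2) := by field_simp
    _ < Ψ r * (ε/2) := by
        apply mul_lt_mul_of_pos_right _ hε2
        nlinarith
  have key : |g r - c * Ψ r| < ε * Ψ r := by
    rw [abs_lt]; constructor <;> nlinarith [abs_nonneg C₁, abs_nonneg C₂]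
  have heq : g r / Ψ r - c = (g r - c * Ψ r) / Ψ r := by
    field_simp
  rw [Real.dist_eq, heq, abs_div, abs_of_pos hΨpos, div_lt_iff₀ hΨpos]
  linarith [key, mul_comm ε (Ψ r)]

private lemma mlkey2 {g G Ψ P : ℝ → ℝ} {b c : ℝ} (hb : 0 < b)
    (hg : ∀ t ∈ Ioo (0:ℝ) b, HasDerivAt g (G t) t)
    (hΨ : ∀ t ∈ Ioo (0:ℝ) b, HasDerivAt Ψ (P t) t)
    (hP : ∀ t ∈ Ioo (0:ℝ) b, P t < 0)
    (hGP : Tendsto (fun r => G r / P r) (𝓝[>] (0:ℝ)) (𝓝 c))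
    {ε : ℝ} (hε : 0 < ε) :
    ∃ δ, 0 < δ ∧ MonotoneOn (fun t => g t - (c + ε) * Ψ t) (Ioo (0:ℝ) δ) ∧
      MonotoneOn (fun t => (c - ε) * Ψ t - g t) (Ioo (0:ℝ) δ) := by
  have h1 : ∀ᶠ r in 𝓝[>] (0:ℝ), |G r / P r - c| < ε := by
    have := Metric.tendsto_nhds.1 hGP ε hε
    simpa [Real.dist_eq] using this
  have h2 : ∀ᶠ r in 𝓝[>] (0:ℝ), r ∈ Ioo (0:ℝ) b := Ioo_mem_nhdsGT_of_mem ⟨le_refl 0, hb⟩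
  obtain ⟨u, hu, hsub⟩ := mem_nhdsGT_iff_exists_Ioo_subset.1 (h1.and h2)
  have hu0 : 0 < u := hu
  have hfacts : ∀ t ∈ Ioo (0:ℝ) u, 0 ≤ G t - (c + ε) * P t ∧ 0 ≤ (c - ε) * P t - G t := by
    intro t ht
    obtain ⟨habs, htb⟩ := hsub ht
    have hPt := hP t htb
    have hGt : G t = (G t / P t) * P t := (div_mul_cancel₀ _ hPt.ne).symm
    obtain ⟨hl, hr⟩ := abs_lt.1 habs
    constructor <;> nlinarith [hGt]
  refine ⟨u, hu0, ?_, ?_⟩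
  · apply mymono (U := fun t => G t - (c + ε) * P t)
    · intro t ht
      have htb := (hsub ht).2
      exact (hg t htb).sub ((hΨ t htb).const_mul _)
    · exact fun t ht => (hfacts t ht).1
  · apply mymono (U := fun t => (c - ε) * P t - G t)
    · intro t ht
      have htb := (hsub ht).2
      exact ((hΨ t htb).const_mul _).sub (hg t htb)
    · exact fun t ht => (hfacts t ht).2

private lemma ml_bdd {g G Ψ P : ℝ → ℝ} {b c : ℝ} (hb : 0 < b)
    (hg : ∀ t ∈ Ioo (0:ℝ) b, HasDerivAt g (G t) t)
    (hΨ : ∀ t ∈ Ioo (0:ℝ) b, HasDerivAt Ψ (P t) t)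
    (hP : ∀ t ∈ Ioo (0:ℝ) b, P t < 0)
    (hΨ0 : Tendsto Ψ (𝓝[>] (0:ℝ)) (𝓝 0))
    (hGP : Tendsto (fun r => G r / P r) (𝓝[>] (0:ℝ)) (𝓝 c)) :
    ∃ M, ∀ᶠ r in 𝓝[>] (0:ℝ), g r ≤ M := by
  obtain ⟨δ, hδ, C₁, C₂, hbd⟩ := mlkey hb hg hΨ hP hGP one_pos
  refine ⟨|c + 1| + C₁, ?_⟩
  have hev1 : ∀ᶠ r in 𝓝[>] (0:ℝ), r ∈ Ioo (0:ℝ) δ := Ioo_mem_nhdsGT_of_mem ⟨le_refl 0, hδ⟩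
  have hev2 : ∀ᶠ r in 𝓝[>] (0:ℝ), |Ψ r| ≤ 1 := by
    have := Metric.tendsto_nhds.1 hΨ0 1 one_pos
    simp only [Real.dist_eq, sub_zero] at this
    exact this.mono fun r hr => le_of_lt hr
  filter_upwards [hev1, hev2] with r hr hΨr
  have hub := (hbd r hr).1
  have : (c + 1) * Ψ r ≤ |c + 1| := by
    calc (c + 1) * Ψ r ≤ |(c + 1) * Ψ r| := le_abs_self _
    _ = |c + 1| * |Ψ r| := abs_mul _ _
    _ ≤ |c + 1| * 1 := by nlinarith [abs_nonneg (c+1), abs_nonneg (Ψ r)]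
    _ = |c + 1| := mul_one _
  linarith

private lemma ml_lim {g G Ψ P : ℝ → ℝ} {b c : ℝ} (hb : 0 < b)
    (hg : ∀ t ∈ Ioo (0:ℝ) b, HasDerivAt g (G t) t)
    (hΨ : ∀ t ∈ Ioo (0:ℝ) b, HasDerivAt Ψ (P t) t)
    (hP : ∀ t ∈ Ioo (0:ℝ) b, P t < 0)
    (hΨ0 : Tendsto Ψ (𝓝[>] (0:ℝ)) (𝓝 0))
    (hGP : Tendsto (fun r => G r / P r) (𝓝[>] (0:ℝ)) (𝓝 c)) :
    ∃ L, Tendsto g (𝓝[>] (0:ℝ)) (𝓝 L) := by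
  obtain ⟨δ, hδ, hm1, hm2⟩ := mlkey2 hb hg hΨ hP hGP one_pos
  have hev2 : ∀ᶠ r in 𝓝[>] (0:ℝ), |Ψ r| ≤ 1 := by
    have := Metric.tendsto_nhds.1 hΨ0 1 one_pos
    simp only [Real.dist_eq, sub_zero] at this
    exact this.mono fun r hr => le_of_lt hr
  obtain ⟨r1, hr1, hsub⟩ := mem_nhdsGT_iff_exists_Ioo_subset.1 hev2
  have hr1' : (0:ℝ) < r1 := hr1
  set r0 : ℝ := min δ r1 / 2 with hr0def
  have hr0pos : 0 < r0 := by
    have := lt_min hδ hr1'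
    positivity
  have hr0δ : r0 < δ := by
    have h := min_le_left δ r1
    have := lt_min hδ hr1'
    simp only [hr0def]
    linarith
  have hr0r1 : r0 < r1 := by
    have h := min_le_right δ r1
    have := lt_min hδ hr1'
    simp only [hr0def]
    linarith
  set u : ℝ → ℝ := fun t => g t - (c + 1) * Ψ t with hu
  set S : Set ℝ := Ioo (0:ℝ) r0 with hS
  have humono : MonotoneOn u (Ioo (0:ℝ) r0) := hm1.mono (Ioo_subset_Ioo le_rfl hr0δ.le)
  have hubd : ∀ r ∈ S, -((c - 1) * Ψ r0 - g r0) - 2 ≤ u r := by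
    intro r hrS
    have h1 : (c - 1) * Ψ r - g r ≤ (c - 1) * Ψ r0 - g r0 :=
      hm2 ⟨hrS.1, lt_trans hrS.2 hr0δ⟩ ⟨hr0pos, hr0δ⟩ hrS.2.le
    have h2 : |Ψ r| ≤ 1 := hsub ⟨hrS.1, lt_trans hrS.2 hr0r1⟩
    obtain ⟨h2a, h2b⟩ := abs_le.1 h2
    simp only [hu]
    linarith
  have hne : (u '' S).Nonempty :=
    ⟨u (r0 / 2), mem_image_of_mem _ ⟨by positivity, by linarith⟩⟩
  have hbdd : BddBelow (u '' S) := by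
    refine ⟨-((c - 1) * Ψ r0 - g r0) - 2, ?_⟩
    rintro y ⟨x, hx, rfl⟩
    exact hubd x hx
  set A := sInf (u '' S) with hA
  have hulim : Tendsto u (𝓝[>] (0:ℝ)) (𝓝 A) := by
    rw [Metric.tendsto_nhds]
    intro ε' hε'
    obtain ⟨y, hyS, hy⟩ := exists_lt_of_csInf_lt hne (lt_add_of_pos_right A hε')
    obtain ⟨x, hxS, rfl⟩ := hyS
    filter_upwards [Ioo_mem_nhdsGT_of_mem (⟨le_refl 0, hxS.1⟩ : (0:ℝ) ∈ Ico 0 x)] with r hr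
    have hrS : r ∈ S := ⟨hr.1, lt_trans hr.2 hxS.2⟩
    have h1 : u r ≤ u x := humono hrS hxS hr.2.le
    have h2 : A ≤ u r := csInf_le hbdd (mem_image_of_mem _ hrS)
    rw [Real.dist_eq, abs_lt]
    constructor <;> linarith
  refine ⟨A, ?_⟩
  have h3 : Tendsto (fun r => u r + (c + 1) * Ψ r) (𝓝[>] (0:ℝ)) (𝓝 (A + (c + 1) * 0)) :=
    hulim.add (hΨ0.const_mul _)
  simp only [mul_zero, add_zero] at h3
  refine h3.congr fun r => by simp [hu]

private lemma rpow_t0 {q : ℝ} (hq : 0 < q) :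
    Tendsto (fun r : ℝ => r ^ q) (𝓝[>] (0:ℝ)) (𝓝[>] (0:ℝ)) := by
  rw [tendsto_nhdsWithin_iff]
  constructor
  · have hc : ContinuousAt (fun r : ℝ => r ^ q) 0 := Real.continuousAt_rpow_const 0 q (Or.inr hq.le)
    have h2 := hc.tendsto.mono_left (nhdsWithin_le_nhds (s := Ioi (0:ℝ)))
    rwa [Real.zero_rpow hq.ne'] at h2
  · filter_upwards [self_mem_nhdsWithin] with r hr
    exact Real.rpow_pos_of_pos hr q

private lemma rpow_t0' {q : ℝ} (hq : 0 < q) :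
    Tendsto (fun r : ℝ => r ^ q) (𝓝[>] (0:ℝ)) (𝓝 0) :=
  (rpow_t0 hq).mono_right nhdsWithin_le_nhds

private lemma rpow_tatTop {q : ℝ} (hq : q < 0) :
    Tendsto (fun r : ℝ => r ^ q) (𝓝[>] (0:ℝ)) atTop := by
  have h := (rpow_t0 (neg_pos.2 hq)).inv_tendsto_nhdsGT_zero
  apply Filter.Tendsto.congr' _ h
  filter_upwards [self_mem_nhdsWithin] with r hr
  simp only [Pi.inv_apply]
  rw [← Real.rpow_neg (le_of_lt hr), neg_neg]

private lemma psi_hasDeriv {q r : ℝ} (hr : 0 < r) (hq : q ≠ 0) :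
    HasDerivAt (fun s : ℝ => s ^ q / (-q)) (-(r ^ (q - 1))) r := by
  have h := (Real.hasDerivAt_rpow_const (p := q) (Or.inl hr.ne')).div_const (-q)
  refine h.congr_deriv ?_
  rw [div_eq_iff (neg_ne_zero.2 hq)]
  ring

set_option maxHeartbeats 1600000

/-- **Theorem 1.1.** Let `n ≥ 3`, `0 < m < (n-2)/n`, `γ > 0` with `γ ≠ 2/(1-m)`, `η > 0`,
`ε > 0`. Suppose either (i) `α ≠ 0` and `β = 0` or (ii) `β ≠ 0`. If there exists a radially
symmetric solution `f` of `Δ(f^m/m) + αf + βx·∇f = 0`, `f > 0`, in `B_ε \ {0} ⊆ ℝⁿ`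
satisfying `lim_{r→0⁺} r^γ f(r) = η`, then (ii) holds with `γ = α/β` and `γ > 2/(1-m)`. -/
theorem stmt_0 (n : ℕ) (hn : 3 ≤ n) (m γ η ε α β : ℝ)
    (hm0 : 0 < m) (hm1 : m < ((n : ℝ) - 2) / n)
    (hγ0 : 0 < γ) (hγ : γ ≠ 2 / (1 - m)) (hη : 0 < η) (hε : 0 < ε)
    (hab : (α ≠ 0 ∧ β = 0) ∨ β ≠ 0)
    (f : ℝ → ℝ)
    (hpos : ∀ r ∈ Ioo (0 : ℝ) ε, 0 < f r)
    (hreg : ContDiffOn ℝ 2 f (Ioo (0 : ℝ) ε))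
    (hode : ∀ r ∈ Ioo (0 : ℝ) ε,
      deriv (deriv (fun s => f s ^ m / m)) r
        + ((n : ℝ) - 1) / r * deriv (fun s => f s ^ m / m) r
        + α * f r + β * r * deriv f r = 0)
    (hlim : Tendsto (fun r => r ^ γ * f r) (nhdsWithin 0 (Ioi 0)) (nhds η)) :
    β ≠ 0 ∧ γ = α / β ∧ γ > 2 / (1 - m) := by
  set l : Filter ℝ := 𝓝[>] (0:ℝ) with hldef
  -- basic arithmetic facts
  have hn3 : (3:ℝ) ≤ (n:ℝ) := by exact_mod_cast hn
  have hn0 : (0:ℝ) < n := by linarith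
  have hmn : m * n < n - 2 := by
    have := (lt_div_iff₀ hn0).1 hm1
    linarith
  have hm1' : m < 1 := by nlinarith
  have h1m : 0 < 1 - m := by linarith
  have h2n : 2 / (1 - m) < n := by rw [div_lt_iff₀ h1m]; nlinarith
  -- the common closing step
  have hfinal : α = β * γ → 2 / (1 - m) < γ → β ≠ 0 ∧ γ = α / β ∧ γ > 2 / (1 - m) := by
    intro hq hgt
    have hβ : β ≠ 0 := by
      intro hβ0
      rcases hab with ⟨hα, _⟩ | hβ
      · exact hα (by rw [hq, hβ0, zero_mul])
      · exact hβ hβ0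
    exact ⟨hβ, by rw [hq, mul_div_cancel_left₀ _ hβ], hgt⟩
  -- setup
  set b : ℝ := min ε 1 with hbdef
  have hb0 : 0 < b := lt_min hε one_pos
  have hbsub : Ioo (0:ℝ) b ⊆ Ioo (0:ℝ) ε := Ioo_subset_Ioo le_rfl (min_le_left _ _)
  have hb1 : b ≤ 1 := min_le_right _ _
  have hIooB : Ioo (0:ℝ) b ∈ l := Ioo_mem_nhdsGT_of_mem ⟨le_refl (0:ℝ), hb0⟩
  have hIooE : Ioo (0:ℝ) ε ∈ l := Ioo_mem_nhdsGT_of_mem ⟨le_refl (0:ℝ), hε⟩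
  set W : ℝ → ℝ := fun s => f s ^ m / m with hWdef
  have hWca : ∀ r ∈ Ioo (0:ℝ) ε, ContDiffAt ℝ 2 W r := by
    intro r hr
    have hf : ContDiffAt ℝ 2 f r := hreg.contDiffAt (isOpen_Ioo.mem_nhds hr)
    have hpow : ContDiffAt ℝ 2 (fun x : ℝ => x ^ m) (f r) :=
      Real.contDiffAt_rpow_const_of_ne (ne_of_gt (hpos r hr))
    exact (hpow.comp r hf).div_const m
  have hfd : ∀ r ∈ Ioo (0:ℝ) ε, HasDerivAt f (deriv f r) r := fun r hr =>
    ((hreg.contDiffAt (isOpen_Ioo.mem_nhds hr)).differentiableAt (by norm_num)).hasDerivAt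
  have hWd : ∀ r ∈ Ioo (0:ℝ) ε, HasDerivAt W (deriv W r) r := fun r hr =>
    ((hWca r hr).differentiableAt (by norm_num)).hasDerivAt
  have hW2 : ContDiffOn ℝ 2 W (Ioo (0:ℝ) ε) := fun r hr => (hWca r hr).contDiffWithinAt
  have hdW1 : ContDiffOn ℝ 1 (deriv W) (Ioo (0:ℝ) ε) :=
    hW2.deriv_of_isOpen isOpen_Ioo (by norm_num)
  have hWdd : ∀ r ∈ Ioo (0:ℝ) ε, HasDerivAt (deriv W) (deriv (deriv W) r) r := fun r hr =>
    (((hdW1.differentiableOn one_ne_zero).differentiableAt (isOpen_Ioo.mem_nhds hr))).hasDerivAt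
  -- the integrated quantity
  set hq : ℝ → ℝ := fun r => r ^ ((n:ℝ) - 1) * deriv W r + β * (r ^ (n:ℝ) * f r) with hhqdef
  set Gh : ℝ → ℝ := fun r => ((n:ℝ) * β - α) * (r ^ ((n:ℝ) - 1) * f r) with hGhdef
  have hhd : ∀ r ∈ Ioo (0:ℝ) ε, HasDerivAt hq (Gh r) r := by
    intro r hr
    have hr0 : 0 < r := hr.1
    have d1 : HasDerivAt (fun s : ℝ => s ^ ((n:ℝ) - 1)) (((n:ℝ) - 1) * r ^ ((n:ℝ) - 1 - 1)) r :=
      Real.hasDerivAt_rpow_const (Or.inl hr0.ne')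
    have d2 : HasDerivAt (fun s : ℝ => s ^ (n:ℝ)) ((n:ℝ) * r ^ ((n:ℝ) - 1)) r :=
      Real.hasDerivAt_rpow_const (Or.inl hr0.ne')
    have dh := (d1.mul (hWdd r hr)).add ((d2.mul (hfd r hr)).const_mul β)
    have hode' := hode r hr
    have hX : deriv (deriv W) r =
        -(((n:ℝ) - 1) / r * deriv W r) - α * f r - β * (r * deriv f r) := by linarith
    have e1 : r ^ ((n:ℝ) - 1 - 1) = r ^ ((n:ℝ) - 1) * r⁻¹ := by
      rw [show (n:ℝ) - 1 - 1 = ((n:ℝ) - 1) + (-1) by ring, Real.rpow_add hr0,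
        Real.rpow_neg_one]
    have e2 : r ^ (n:ℝ) = r ^ ((n:ℝ) - 1) * r := by
      rw [← Real.rpow_add_one hr0.ne']
      congr 1
      ring
    refine dh.congr_deriv ?_
    simp only [hGhdef]
    rw [hX, e1, e2]
    field_simp
    ring
  -- limits of the data
  have hη' : 0 < η ^ m / m := div_pos (Real.rpow_pos_of_pos hη m) hm0
  have hWlim : Tendsto (fun r => r ^ (m * γ) * W r) l (𝓝 (η ^ m / m)) := by
    have hcont : ContinuousAt (fun x : ℝ => x ^ m) η :=
      Real.continuousAt_rpow_const η m (Or.inl hη.ne')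
    have hc : Tendsto (fun r => (r ^ γ * f r) ^ m / m) l (𝓝 (η ^ m / m)) :=
      (hcont.tendsto.comp hlim).div_const m
    refine hc.congr' ?_
    filter_upwards [hIooE] with r hr
    have hr0 : 0 < r := hr.1
    rw [Real.mul_rpow (Real.rpow_nonneg hr0.le γ) (hpos r hr).le, ← Real.rpow_mul hr0.le,
      mul_comm γ m, hWdef]
    ring
  set c₀ : ℝ := ((n:ℝ) * β - α) * η with hc₀def
  -- ratio fact for the `h` equation (used when γ ≠ n)
  have hGhP : Tendsto (fun r => Gh r / (-(r ^ ((n:ℝ) - γ - 1)))) l (𝓝 (-c₀)) := by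
    have ht : Tendsto (fun r => -(((n:ℝ) * β - α) * (r ^ γ * f r))) l (𝓝 (-c₀)) :=
      (hlim.const_mul _).neg
    refine Tendsto.congr' ?_ ht
    filter_upwards [hIooB] with r hr
    have hr0 : 0 < r := hr.1
    have hne : r ^ ((n:ℝ) - γ - 1) ≠ 0 := (Real.rpow_pos_of_pos hr0 _).ne'
    have hsplit : r ^ ((n:ℝ) - 1) = r ^ ((n:ℝ) - γ - 1) * r ^ γ := by
      rw [← Real.rpow_add hr0]; ring_nf
    rw [hGhdef]
    beta_reduce
    rw [hsplit, div_neg, neg_inj, eq_div_iff hne]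
    ring
  -- generic helper: derivative / weight ratio conversions
  have hΨd : ∀ q : ℝ, q ≠ 0 → ∀ t ∈ Ioo (0:ℝ) b, HasDerivAt (fun s : ℝ => s ^ q / (-q)) (-(t ^ (q - 1))) t :=
    fun q hq0 t ht => psi_hasDeriv ht.1 hq0
  have hPneg : ∀ q : ℝ, ∀ t ∈ Ioo (0:ℝ) b, -(t ^ (q - 1)) < 0 :=
    fun q t ht => neg_lt_zero.mpr (Real.rpow_pos_of_pos ht.1 _)
  have hWratioGen : ∀ q K : ℝ, Tendsto (fun r => deriv W r * r ^ (1 - q)) l (𝓝 K) →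
      Tendsto (fun r => deriv W r / (-(r ^ (q - 1)))) l (𝓝 (-K)) := by
    intro q K hT
    refine Tendsto.congr' ?_ hT.neg
    filter_upwards [hIooB] with r hr
    have hr0 : 0 < r := hr.1
    have hx : r ^ (q - 1) = (r ^ (1 - q))⁻¹ := by
      rw [← Real.rpow_neg hr0.le]; congr 1; ring
    rw [hx, div_neg, div_inv_eq_mul]
  have hWother : ∀ q : ℝ, q ≠ 0 →
      (fun r => W r / (r ^ q / (-q))) =ᶠ[l]
        (fun r => (-q) * ((r ^ (m * γ) * W r) * r ^ (-q - m * γ))) := by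
    intro q hqne
    filter_upwards [hIooB] with r hr
    have hr0 : 0 < r := hr.1
    have e1 : r ^ (-q - m * γ) = (r ^ q)⁻¹ * (r ^ (m * γ))⁻¹ := by
      rw [← Real.rpow_neg hr0.le q, ← Real.rpow_neg hr0.le (m * γ), ← Real.rpow_add hr0]
      congr 1 <;> ring
    have h1 : r ^ q ≠ 0 := (Real.rpow_pos_of_pos hr0 q).ne'
    have h2 : r ^ (m * γ) ≠ 0 := (Real.rpow_pos_of_pos hr0 (m * γ)).ne'
    rw [e1]
    field_simp
    try ring
  rcases lt_trichotomy γ (n:ℝ) with hγn | hγn | hγn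
  · -- CASE γ < n
    have hql : (0:ℝ) < (n:ℝ) - γ := by linarith
    have hΨ0 : Tendsto (fun s : ℝ => s ^ ((n:ℝ) - γ) / (-((n:ℝ) - γ))) l (𝓝 0) := by
      have h1 := (rpow_t0' hql).div_const (-((n:ℝ) - γ))
      rwa [zero_div] at h1
    obtain ⟨L, hL⟩ := ml_lim hb0 (fun t ht => hhd t (hbsub ht)) (hΨd _ hql.ne') (hPneg _) hΨ0 hGhP
    have hrnf0 : Tendsto (fun r => r ^ (n:ℝ) * f r) l (𝓝 0) := by
      have h1 : Tendsto (fun r => r ^ ((n:ℝ) - γ) * (r ^ γ * f r)) l (𝓝 (0 * η)) :=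
        (rpow_t0' hql).mul hlim
      rw [zero_mul] at h1
      refine Tendsto.congr' ?_ h1
      filter_upwards [hIooB] with r hr
      rw [← mul_assoc, ← Real.rpow_add hr.1]
      have : (n:ℝ) - γ + γ = (n:ℝ) := by ring
      rw [this]
    have hW'L : Tendsto (fun r => deriv W r * r ^ ((n:ℝ) - 1)) l (𝓝 L) := by
      have h1 := hL.sub (hrnf0.const_mul β)
      rw [mul_zero, sub_zero] at h1
      refine Tendsto.congr' ?_ h1
      filter_upwards with r
      rw [hhqdef]
      beta_reduce
      ring
    have hq3ne : (2 - (n:ℝ)) ≠ 0 := by linarith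
    have hWq3 : Tendsto (fun r => W r / (r ^ (2 - (n:ℝ)) / (-(2 - (n:ℝ))))) l (𝓝 (-L)) := by
      apply ml1 hb0 (fun t ht => hWd t (hbsub ht)) (hΨd _ hq3ne) (hPneg _)
        ((rpow_tatTop (by linarith)).atTop_div_const (by linarith))
      exact hWratioGen _ L (by simpa only [show 1 - (2 - (n:ℝ)) = (n:ℝ) - 1 by ring] using hW'L)
    have hexp3 : (0:ℝ) < -(2 - (n:ℝ)) - m * γ := by nlinarith
    have hzero3 : Tendsto (fun r => W r / (r ^ (2 - (n:ℝ)) / (-(2 - (n:ℝ))))) l (𝓝 0) := by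
      have h1 := (hWlim.mul (rpow_t0' hexp3)).const_mul (-(2 - (n:ℝ)))
      rw [mul_zero, mul_zero] at h1
      exact Tendsto.congr' (hWother _ hq3ne).symm h1
    have hL0 : L = 0 := by
      have := tendsto_nhds_unique hWq3 hzero3
      linarith
    have hlhop : Tendsto (fun x => hq x / x ^ ((n:ℝ) - γ)) l (𝓝 (c₀ / ((n:ℝ) - γ))) := by
      apply HasDerivAt.lhopital_zero_right_on_Ioo hb0 (fun x hx => hhd x (hbsub hx))
        (fun x hx => Real.hasDerivAt_rpow_const (p := (n:ℝ) - γ) (Or.inl hx.1.ne'))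
        (fun x hx => mul_ne_zero hql.ne' (Real.rpow_pos_of_pos hx.1 _).ne')
        (hL0 ▸ hL) (rpow_t0' hql) ?_
      have h1 : Tendsto (fun r => (((n:ℝ) * β - α) * (r ^ γ * f r)) / ((n:ℝ) - γ)) l
          (𝓝 (c₀ / ((n:ℝ) - γ))) := (hlim.const_mul _).div_const _
      refine Tendsto.congr' ?_ h1
      filter_upwards [hIooB] with r hr
      have hr0 : 0 < r := hr.1
      have hne : r ^ ((n:ℝ) - γ - 1) ≠ 0 := (Real.rpow_pos_of_pos hr0 _).ne'
      have hsplit : r ^ ((n:ℝ) - 1) = r ^ ((n:ℝ) - γ - 1) * r ^ γ := by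
        rw [← Real.rpow_add hr0]; ring_nf
      rw [hGhdef]
      beta_reduce
      rw [hsplit, div_eq_div_iff (by positivity) (by positivity)]
      ring
    have hK : Tendsto (fun r => deriv W r * r ^ (γ - 1)) l (𝓝 (c₀ / ((n:ℝ) - γ) - β * η)) := by
      have h1 := hlhop.sub (hlim.const_mul β)
      refine Tendsto.congr' ?_ h1
      filter_upwards [hIooB] with r hr
      have hr0 : 0 < r := hr.1
      have hne : r ^ ((n:ℝ) - γ) ≠ 0 := (Real.rpow_pos_of_pos hr0 _).ne'
      have e1 : r ^ ((n:ℝ) - 1) = r ^ ((n:ℝ) - γ) * r ^ (γ - 1) := by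
        rw [← Real.rpow_add hr0]; ring_nf
      have e2 : r ^ (n:ℝ) = r ^ ((n:ℝ) - γ) * r ^ γ := by
        rw [← Real.rpow_add hr0]; ring_nf
      rw [hhqdef]
      beta_reduce
      rw [e1, e2]
      field_simp
      ring
    set K : ℝ := c₀ / ((n:ℝ) - γ) - β * η with hKdef
    rcases lt_trichotomy γ 2 with h2 | h2 | h2
    · -- γ < 2 : contradiction
      have hq4ne : (2 - γ) ≠ 0 := by linarith
      have hΨ40 : Tendsto (fun s : ℝ => s ^ (2 - γ) / (-(2 - γ))) l (𝓝 0) := by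
        have h1 := (rpow_t0' (by linarith : (0:ℝ) < 2 - γ)).div_const (-(2 - γ))
        rwa [zero_div] at h1
      obtain ⟨M, hM⟩ := ml_bdd hb0 (fun t ht => hWd t (hbsub ht)) (hΨd _ hq4ne) (hPneg _) hΨ40
        (hWratioGen _ K (by simpa only [show 1 - (2 - γ) = γ - 1 by ring] using hK))
      have hup : Tendsto (fun r => r ^ (m * γ) * |M|) l (𝓝 0) := by
        have h1 := (rpow_t0' (by positivity : (0:ℝ) < m * γ)).mul_const |M|
        rwa [zero_mul] at h1
      have hsq : Tendsto (fun r => r ^ (m * γ) * W r) l (𝓝 0) := by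
        apply tendsto_of_tendsto_of_tendsto_of_le_of_le' tendsto_const_nhds hup
        · filter_upwards [hIooE] with r hr
          have hW0 : 0 < W r := by
            rw [hWdef]
            exact div_pos (Real.rpow_pos_of_pos (hpos r hr) m) hm0
          exact mul_nonneg (Real.rpow_nonneg hr.1.le _) hW0.le
        · filter_upwards [hIooE, hM] with r hr hMr
          exact mul_le_mul_of_nonneg_left (le_trans hMr (le_abs_self M))
            (Real.rpow_nonneg hr.1.le _)
      exact absurd (tendsto_nhds_unique hWlim hsq) hη'.ne'
    · -- γ = 2 : contradiction
      subst h2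
      have hK2 : Tendsto (fun r => deriv W r * r) l (𝓝 K) := by
        have h1 := hK
        simp only [show (2:ℝ) - 1 = 1 by norm_num, Real.rpow_one] at h1
        exact h1
      have hWlog : Tendsto (fun r => W r / -Real.log r) l (𝓝 (-K)) := by
        apply ml1 hb0 (fun t ht => hWd t (hbsub ht))
          (fun t ht => (Real.hasDerivAt_log ht.1.ne').neg)
          (fun t ht => neg_lt_zero.mpr (inv_pos.2 ht.1))
          (tendsto_neg_atTop_iff.mpr Real.tendsto_log_nhdsGT_zero)
        refine Tendsto.congr' ?_ hK2.neg
        filter_upwards [hIooB] with r hr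
        rw [div_neg, div_inv_eq_mul]
      have hm2 : (0:ℝ) < m * 2 := by linarith
      have hlneg : Tendsto (fun r => -(Real.log r * r ^ (m * 2))) l (𝓝 0) := by
        have h1 := (tendsto_log_mul_rpow_nhdsGT_zero hm2).neg
        rwa [neg_zero] at h1
      have hlpos : Tendsto (fun r => -(Real.log r * r ^ (m * 2))) l (𝓝[>] 0) := by
        rw [tendsto_nhdsWithin_iff]
        refine ⟨hlneg, ?_⟩
        filter_upwards [hIooB] with r hr
        have hlog : Real.log r < 0 := Real.log_neg hr.1 (lt_of_lt_of_le hr.2 hb1)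
        have := Real.rpow_pos_of_pos hr.1 (m * 2)
        have := mul_neg_of_neg_of_pos hlog this
        simpa using this
      have hinv : Tendsto (fun r => (-(Real.log r * r ^ (m * 2)))⁻¹) l atTop :=
        hlpos.inv_tendsto_nhdsGT_zero
      have hT : Tendsto (fun r => (r ^ (m * 2) * W r) * (-(Real.log r * r ^ (m * 2)))⁻¹) l atTop :=
        Tendsto.pos_mul_atTop hη' hWlim hinv
      have hid : (fun r => (r ^ (m * 2) * W r) * (-(Real.log r * r ^ (m * 2)))⁻¹) =ᶠ[l]
          (fun r => W r / -Real.log r) := by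
        filter_upwards [hIooB] with r hr
        have hr0 : 0 < r := hr.1
        have hs : r ^ (m * 2) ≠ 0 := (Real.rpow_pos_of_pos hr0 _).ne'
        have hlog : Real.log r < 0 := Real.log_neg hr0 (lt_of_lt_of_le hr.2 hb1)
        have hnl : Real.log r ≠ 0 := hlog.ne
        rw [← neg_mul, mul_inv]
        field_simp
        try ring
      exact absurd hWlog
        (not_tendsto_nhds_of_tendsto_atTop (Tendsto.congr' hid hT) _)
    · -- γ > 2
      have hq2ne : (2 - γ) ≠ 0 := by linarith
      have hWq2 : Tendsto (fun r => W r / (r ^ (2 - γ) / (-(2 - γ)))) l (𝓝 (-K)) := by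
        apply ml1 hb0 (fun t ht => hWd t (hbsub ht)) (hΨd _ hq2ne) (hPneg _)
          ((rpow_tatTop (by linarith)).atTop_div_const (by linarith))
        exact hWratioGen _ K (by simpa only [show 1 - (2 - γ) = γ - 1 by ring] using hK)
      rcases lt_trichotomy (γ - 2 - m * γ) 0 with hs | hs | hs
      · have hsneg : -(2 - γ) - m * γ < 0 := by linarith
        have h1 : Tendsto (fun r => (-(2 - γ)) * (r ^ (m * γ) * W r)) l
            (𝓝 ((-(2 - γ)) * (η ^ m / m))) := hWlim.const_mul _
        have h2' := Tendsto.pos_mul_atTop (by nlinarith : (0:ℝ) < (-(2 - γ)) * (η ^ m / m)) h1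
          (rpow_tatTop hsneg)
        have hT : Tendsto (fun r => (-(2 - γ)) * ((r ^ (m * γ) * W r) * r ^ (-(2 - γ) - m * γ)))
            l atTop := h2'.congr fun r => by ring
        have hT2 : Tendsto (fun r => W r / (r ^ (2 - γ) / (-(2 - γ)))) l atTop :=
          Tendsto.congr' (hWother _ hq2ne).symm hT
        exact absurd hWq2 (not_tendsto_nhds_of_tendsto_atTop hT2 _)
      · exact absurd (by rw [eq_div_iff h1m.ne']; linear_combination hs) hγ
      · have hzero : Tendsto (fun r => W r / (r ^ (2 - γ) / (-(2 - γ)))) l (𝓝 0) := by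
          have h1 := (hWlim.mul (rpow_t0' (by linarith : (0:ℝ) < -(2 - γ) - m * γ))).const_mul
            (-(2 - γ))
          rw [mul_zero, mul_zero] at h1
          exact Tendsto.congr' (hWother _ hq2ne).symm h1
        have hKeq : -K = 0 := tendsto_nhds_unique hWq2 hzero
        have hne : (n:ℝ) - γ ≠ 0 := by linarith
        have h5 : c₀ / ((n:ℝ) - γ) - β * η = 0 := by
          rw [hKdef] at hKeq; linarith
        have h6 : c₀ = β * η * ((n:ℝ) - γ) := by
          field_simp at h5
          linarith
        have h7 : α * η = (β * γ) * η := by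
          rw [hc₀def] at h6
          linear_combination -h6
        have hαβγ : α = β * γ := mul_right_cancel₀ hη.ne' h7
        have hγgt : 2 / (1 - m) < γ := by
          rw [div_lt_iff₀ h1m]; nlinarith
        exact hfinal hαβγ hγgt
  · -- CASE γ = n
    subst hγn
    have hn2 : (0:ℝ) < (n:ℝ) - 2 := by linarith
    have hn2' : ((n:ℝ) - 2) ≠ 0 := hn2.ne'
    have hhlog : Tendsto (fun r => hq r / -Real.log r) l (𝓝 (-c₀)) := by
      apply ml1 hb0 (fun t ht => hhd t (hbsub ht))
        (fun t ht => (Real.hasDerivAt_log ht.1.ne').neg)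
        (fun t ht => neg_lt_zero.mpr (inv_pos.2 ht.1))
        (tendsto_neg_atTop_iff.mpr Real.tendsto_log_nhdsGT_zero)
      have h1 : Tendsto (fun r => -(((n:ℝ) * β - α) * (r ^ (n:ℝ) * f r))) l (𝓝 (-c₀)) :=
        (hlim.const_mul _).neg
      refine Tendsto.congr' ?_ h1
      filter_upwards [hIooB] with r hr
      have hr0 : 0 < r := hr.1
      rw [hGhdef]
      beta_reduce
      rw [div_neg, div_inv_eq_mul]
      have e2 : r ^ (n:ℝ) = r ^ ((n:ℝ) - 1) * r := by
        rw [← Real.rpow_add_one hr0.ne']; congr 1; ring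
      rw [e2]; ring
    have hnloginv : Tendsto (fun r => (-Real.log r)⁻¹) l (𝓝 0) :=
      (tendsto_neg_atTop_iff.mpr Real.tendsto_log_nhdsGT_zero).inv_tendsto_atTop
    have hW'log : Tendsto (fun r => (deriv W r * r ^ ((n:ℝ) - 1)) / -Real.log r) l (𝓝 (-c₀)) := by
      have h2 : Tendsto (fun r => β * (r ^ (n:ℝ) * f r) * (-Real.log r)⁻¹) l (𝓝 0) := by
        have h3 := (hlim.const_mul β).mul hnloginv
        rwa [mul_zero] at h3
      have h4 := hhlog.sub h2
      rw [sub_zero] at h4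
      refine Tendsto.congr' ?_ h4
      filter_upwards [hIooB] with r hr
      have hlog : Real.log r < 0 := Real.log_neg hr.1 (lt_of_lt_of_le hr.2 hb1)
      have hnl : -Real.log r ≠ 0 := (neg_pos.2 hlog).ne'
      have hl0 : Real.log r ≠ 0 := hlog.ne
      rw [hhqdef]
      beta_reduce
      field_simp
      ring
    have hBtop : Tendsto (fun r : ℝ => -Real.log r / ((n:ℝ) - 2) - 1 / (((n:ℝ) - 2) ^ 2)) l
        atTop := by
      have h1' := tendsto_atTop_add_const_right l (-(1 / (((n:ℝ) - 2) ^ 2)))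
        ((tendsto_neg_atTop_iff.mpr Real.tendsto_log_nhdsGT_zero).atTop_div_const hn2)
      exact h1'.congr fun x => by ring
    have hΨnd : ∀ t ∈ Ioo (0:ℝ) b, HasDerivAt
        (fun r : ℝ => r ^ (2 - (n:ℝ)) * (-Real.log r / ((n:ℝ) - 2) - 1 / (((n:ℝ) - 2) ^ 2)))
        (-(t ^ (1 - (n:ℝ)) * (-Real.log t))) t := by
      intro t ht
      have ht0 : 0 < t := ht.1
      have d1 : HasDerivAt (fun s : ℝ => s ^ (2 - (n:ℝ))) ((2 - (n:ℝ)) * t ^ (2 - (n:ℝ) - 1)) t :=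
        Real.hasDerivAt_rpow_const (Or.inl ht0.ne')
      have d2 : HasDerivAt (fun r : ℝ => -Real.log r / ((n:ℝ) - 2) - 1 / (((n:ℝ) - 2) ^ 2))
          (-t⁻¹ / ((n:ℝ) - 2)) t :=
        ((Real.hasDerivAt_log ht0.ne').neg.div_const _).sub_const _
      have d3 := d1.mul d2
      refine d3.congr_deriv ?_
      have e1 : t ^ (2 - (n:ℝ) - 1) = t ^ (1 - (n:ℝ)) := by congr 1; ring
      have e2 : t ^ (2 - (n:ℝ)) = t ^ (1 - (n:ℝ)) * t := by
        rw [← Real.rpow_add_one ht0.ne']; congr 1; ring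
      rw [e1, e2]
      field_simp
      ring
    have hΨntop : Tendsto
        (fun r : ℝ => r ^ (2 - (n:ℝ)) * (-Real.log r / ((n:ℝ) - 2) - 1 / (((n:ℝ) - 2) ^ 2)))
        l atTop :=
      (rpow_tatTop (by linarith : 2 - (n:ℝ) < 0)).atTop_mul_atTop₀ hBtop
    have hWΨn : Tendsto (fun r => W r /
        (r ^ (2 - (n:ℝ)) * (-Real.log r / ((n:ℝ) - 2) - 1 / (((n:ℝ) - 2) ^ 2)))) l (𝓝 c₀) := by
      apply ml1 hb0 (fun t ht => hWd t (hbsub ht)) hΨnd ?_ hΨntop ?_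
      · intro t ht
        have hlog : Real.log t < 0 := Real.log_neg ht.1 (lt_of_lt_of_le ht.2 hb1)
        exact neg_lt_zero.mpr
          (mul_pos (Real.rpow_pos_of_pos ht.1 _) (neg_pos.2 hlog))
      · have h1 := hW'log.neg
        rw [neg_neg] at h1
        refine Tendsto.congr' ?_ h1
        filter_upwards [hIooB] with r hr
        have hr0 : 0 < r := hr.1
        have hlog : Real.log r < 0 := Real.log_neg hr0 (lt_of_lt_of_le hr.2 hb1)
        have hnl : -Real.log r ≠ 0 := (neg_pos.2 hlog).ne'
        have e1 : r ^ (1 - (n:ℝ)) = (r ^ ((n:ℝ) - 1))⁻¹ := by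
          rw [← Real.rpow_neg hr0.le]; congr 1; ring
        have h2' : r ^ ((n:ℝ) - 1) ≠ 0 := (Real.rpow_pos_of_pos hr0 _).ne'
        rw [e1, div_neg]
        rw [div_neg]
        field_simp
    have hzeroN : Tendsto (fun r => W r /
        (r ^ (2 - (n:ℝ)) * (-Real.log r / ((n:ℝ) - 2) - 1 / (((n:ℝ) - 2) ^ 2)))) l (𝓝 0) := by
      have hBinv : Tendsto
          (fun r : ℝ => (-Real.log r / ((n:ℝ) - 2) - 1 / (((n:ℝ) - 2) ^ 2))⁻¹) l (𝓝 0) :=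
        hBtop.inv_tendsto_atTop
      have hexp : (0:ℝ) < (n:ℝ) - 2 - m * (n:ℝ) := by linarith
      have h1 := hWlim.mul ((rpow_t0' hexp).mul hBinv)
      rw [mul_zero, mul_zero] at h1
      refine Tendsto.congr' ?_ h1
      filter_upwards [hIooB, hBtop.eventually_ge_atTop 1] with r hr hBr
      have hr0 : 0 < r := hr.1
      have hBne : (-Real.log r / ((n:ℝ) - 2) - 1 / (((n:ℝ) - 2) ^ 2)) ≠ 0 := by linarith
      have e1 : r ^ (2 - (n:ℝ)) = (r ^ ((n:ℝ) - 2))⁻¹ := by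
        rw [← Real.rpow_neg hr0.le]; congr 1; ring
      have e2 : r ^ ((n:ℝ) - 2) = r ^ (m * (n:ℝ)) * r ^ ((n:ℝ) - 2 - m * (n:ℝ)) := by
        rw [← Real.rpow_add hr0]; ring_nf
      have h2' : r ^ (m * (n:ℝ)) ≠ 0 := (Real.rpow_pos_of_pos hr0 _).ne'
      have h3' : r ^ ((n:ℝ) - 2 - m * (n:ℝ)) ≠ 0 := (Real.rpow_pos_of_pos hr0 _).ne'
      rw [e1, e2]
      field_simp
    have hc₀0 : c₀ = 0 := tendsto_nhds_unique hWΨn hzeroN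
    have hαβγ : α = β * (n:ℝ) := by
      rw [hc₀def] at hc₀0
      rcases mul_eq_zero.1 hc₀0 with h | h
      · linarith
      · exact absurd h hη.ne'
    exact hfinal hαβγ h2n
  · -- CASE γ > n
    have hqg : (n:ℝ) - γ < 0 := by linarith
    have hγnne : γ - (n:ℝ) ≠ 0 := by intro h; linarith [sub_eq_zero.1 h]
    have hhq5 : Tendsto (fun r => hq r / (r ^ ((n:ℝ) - γ) / (-((n:ℝ) - γ)))) l (𝓝 (-c₀)) :=
      ml1 hb0 (fun t ht => hhd t (hbsub ht)) (hΨd _ hqg.ne) (hPneg _)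
        ((rpow_tatTop hqg).atTop_div_const (by linarith)) hGhP
    have hhpow : Tendsto (fun r => hq r * r ^ (γ - (n:ℝ))) l (𝓝 (-c₀ / (γ - (n:ℝ)))) := by
      have h1 := hhq5.div_const (γ - (n:ℝ))
      refine Tendsto.congr' ?_ h1
      filter_upwards [hIooB] with r hr
      have hr0 : 0 < r := hr.1
      have e1 : r ^ (γ - (n:ℝ)) = (r ^ ((n:ℝ) - γ))⁻¹ := by
        rw [← Real.rpow_neg hr0.le]; congr 1; ring
      have h2' : r ^ ((n:ℝ) - γ) ≠ 0 := (Real.rpow_pos_of_pos hr0 _).ne'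
      rw [e1]
      field_simp
      ring
    have hK : Tendsto (fun r => deriv W r * r ^ (γ - 1)) l (𝓝 (-c₀ / (γ - (n:ℝ)) - β * η)) := by
      have h1 := hhpow.sub (hlim.const_mul β)
      refine Tendsto.congr' ?_ h1
      filter_upwards [hIooB] with r hr
      have hr0 : 0 < r := hr.1
      have e1 : r ^ ((n:ℝ) - 1) * r ^ (γ - (n:ℝ)) = r ^ (γ - 1) := by
        rw [← Real.rpow_add hr0]; congr 1; ring
      have e2 : r ^ (n:ℝ) * r ^ (γ - (n:ℝ)) = r ^ γ := by
        rw [← Real.rpow_add hr0]; congr 1; ring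
      rw [hhqdef]
      beta_reduce
      have e3 : (r ^ ((n:ℝ) - 1) * deriv W r + β * (r ^ (n:ℝ) * f r)) * r ^ (γ - (n:ℝ))
          - β * (r ^ γ * f r)
          = deriv W r * (r ^ ((n:ℝ) - 1) * r ^ (γ - (n:ℝ)))
            + β * f r * (r ^ (n:ℝ) * r ^ (γ - (n:ℝ))) - β * (r ^ γ * f r) := by ring
      rw [e3, e1, e2]
      ring
    have hγ2 : 2 < γ := by linarith
    have hq2ne : (2 - γ) ≠ 0 := by linarith
    have hWq2 : Tendsto (fun r => W r / (r ^ (2 - γ) / (-(2 - γ)))) l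
        (𝓝 (-(-c₀ / (γ - (n:ℝ)) - β * η))) := by
      apply ml1 hb0 (fun t ht => hWd t (hbsub ht)) (hΨd _ hq2ne) (hPneg _)
        ((rpow_tatTop (by linarith)).atTop_div_const (by linarith))
      exact hWratioGen _ _ (by simpa only [show 1 - (2 - γ) = γ - 1 by ring] using hK)
    have hexp : (0:ℝ) < -(2 - γ) - m * γ := by nlinarith [mul_pos (sub_pos.2 hγn) h1m]
    have hzero : Tendsto (fun r => W r / (r ^ (2 - γ) / (-(2 - γ)))) l (𝓝 0) := by
      have h1 := (hWlim.mul (rpow_t0' hexp)).const_mul (-(2 - γ))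
      rw [mul_zero, mul_zero] at h1
      exact Tendsto.congr' (hWother _ hq2ne).symm h1
    have hKeq : -(-c₀ / (γ - (n:ℝ)) - β * η) = 0 := tendsto_nhds_unique hWq2 hzero
    have hαβγ : α = β * γ := by
      have h5 : -c₀ / (γ - (n:ℝ)) - β * η = 0 := by linarith
      have h6 : -c₀ = β * η * (γ - (n:ℝ)) := by
        field_simp at h5
        linarith
      have h7 : α * η = (β * γ) * η := by
        rw [hc₀def] at h6
        linear_combination h6
      exact mul_right_cancel₀ hη.ne' h7
    exact hfinal hαβγ (by linarith)
end

section
/- Let n ≥ 3 be an integer, 0 < m < (n-2)/n, γ = 2/(1-m), α, β ∈ ℝ, η > 0 and ε > 0. If there exists a radially symmetric solution f of Δ(f^m/m) + αf + βx·∇f = 0, f > 0, in B_ε \ {0} ⊂ ℝ^n satisfying lim_{r→0⁺} r^γ f(r) = η, then (α − 2β/(1-m)) η^{1-m} = 2(n − 2 − nm)/(1-m)². -/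
open Set Filter

open MeasureTheory intervalIntegral Topology

lemma rpow_tendsto_zero {p : ℝ} (hp : 0 < p) :
    Tendsto (fun a : ℝ => a ^ p) (𝓝[>] (0:ℝ)) (𝓝 0) := by
  have h := (Real.continuousAt_rpow_const 0 p (Or.inr hp.le)).tendsto
  rw [Real.zero_rpow hp.ne'] at h
  exact h.mono_left nhdsWithin_le_nhds

lemma lemA {h h' : ℝ → ℝ} {c s C : ℝ} (hc : 0 < c) (hs : 1 < s)
    (hderiv : ∀ r ∈ Ioo (0:ℝ) c, HasDerivAt h (h' r) r)
    (hcont : ContinuousOn h' (Ioo (0:ℝ) c))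
    (hlim : Tendsto (fun r => r ^ s * h' r) (𝓝[>] (0:ℝ)) (𝓝 C)) :
    Tendsto (fun r => r ^ (s-1) * h r) (𝓝[>] (0:ℝ)) (𝓝 (C/(1-s))) := by
  have hs1 : (0:ℝ) < s - 1 := by linarith
  have hs0 : (1:ℝ) - s ≠ 0 := by linarith
  rw [Metric.tendsto_nhdsWithin_nhds] at hlim ⊢
  intro e he
  set δ : ℝ := e * (s - 1) / 2 with hδdef
  have hδ : 0 < δ := by positivity
  obtain ⟨d, hd, hdprop⟩ := hlim δ hδ
  set b : ℝ := min (d/2) (c/2) with hbdef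
  have hb0 : 0 < b := by positivity
  have hbc : b < c := by
    calc b ≤ c/2 := min_le_right _ _
    _ < c := by linarith
  have hbd : b < d := by
    calc b ≤ d/2 := min_le_left _ _
    _ < d := by linarith
  set M : ℝ := |h b| + |C| * b ^ (1-s) / (s-1) with hMdef
  have hM0 : 0 ≤ M := by positivity
  have t2 : Tendsto (fun a : ℝ => a ^ (s-1) * M) (𝓝[>] (0:ℝ)) (𝓝 0) := by
    simpa using (rpow_tendsto_zero hs1).mul_const M
  rw [Metric.tendsto_nhdsWithin_nhds] at t2
  obtain ⟨d2, hd2, h2⟩ := t2 (e/2) (by linarith)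
  refine ⟨min b d2, by positivity, ?_⟩
  intro a ha hax
  have ha0 : 0 < a := ha
  rw [Real.dist_eq, sub_zero, abs_of_pos ha0] at hax
  have hab : a < b := lt_of_lt_of_le hax (min_le_left _ _)
  have had2 : a < d2 := lt_of_lt_of_le hax (min_le_right _ _)
  have haleb : a ≤ b := hab.le
  -- FTC
  have hsub : Icc a b ⊆ Ioo (0:ℝ) c := fun x hx => ⟨lt_of_lt_of_le ha0 hx.1, lt_of_le_of_lt hx.2 hbc⟩
  have hint_h' : IntervalIntegrable h' volume a b :=
    (hcont.mono (by rwa [uIcc_of_le haleb])).intervalIntegrable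
  have key : ∫ r in a..b, h' r = h b - h a := by
    apply intervalIntegral.integral_eq_sub_of_hasDerivAt
    · intro x hx
      rw [uIcc_of_le haleb] at hx
      exact hderiv x (hsub hx)
    · exact hint_h'
  -- integrability of rpow
  have hnz : (0:ℝ) ∉ uIcc a b := by
    rw [uIcc_of_le haleb]; intro hx; exact (lt_irrefl 0 (lt_of_lt_of_le ha0 hx.1))
  have hint_rpow : IntervalIntegrable (fun r : ℝ => r ^ (-s)) volume a b := by
    apply ContinuousOn.intervalIntegrable
    intro x hx
    exact (Real.continuousAt_rpow_const x (-s) (Or.inl (fun h0 => hnz (h0 ▸ hx)))).continuousWithinAt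
  have hrpow_int : ∫ r in a..b, r ^ (-s) = (b ^ (1-s) - a ^ (1-s)) / (1-s) := by
    rw [integral_rpow (Or.inr ⟨by intro hh; exact absurd (neg_eq_iff_eq_neg.mp hh) (by norm_num; linarith), hnz⟩)]
    have : -s + 1 = 1 - s := by ring
    rw [this]
  set T : ℝ := ∫ r in a..b, (h' r - C * r ^ (-s)) with hTdef
  have hsplit : ∫ r in a..b, h' r = T + C * ((b ^ (1-s) - a ^ (1-s)) / (1-s)) := by
    rw [hTdef, intervalIntegral.integral_sub hint_h' (hint_rpow.const_mul C),
      intervalIntegral.integral_const_mul, hrpow_int]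
    ring
  -- bound on T
  have hTbound : |T| ≤ δ * a ^ (1-s) / (s-1) := by
    have step1 : ‖T‖ ≤ |∫ r in a..b, δ * r ^ (-s)| := by
      apply intervalIntegral.norm_integral_le_abs_of_norm_le _ (hint_rpow.const_mul δ)
      · refine (MeasureTheory.ae_restrict_mem measurableSet_uIoc).mono (fun t ht => ?_)
        rw [uIoc_of_le haleb] at ht
        have ht0 : 0 < t := lt_trans ha0 ht.1
        have htd : |t| < d := by
          rw [abs_of_pos ht0]; exact lt_of_le_of_lt ht.2 hbd
        have hdp := hdprop (show t ∈ Ioi (0:ℝ) from ht0) (by rwa [Real.dist_eq, sub_zero])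
        rw [Real.dist_eq] at hdp
        have hr1 : t ^ (-s) * t ^ s = 1 := by
          rw [← Real.rpow_add ht0]; norm_num
        have heq : h' t - C * t ^ (-s) = t ^ (-s) * (t ^ s * h' t - C) := by
          rw [mul_sub, ← mul_assoc, hr1, one_mul, mul_comm (t ^ (-s)) C]
        rw [Real.norm_eq_abs, heq, abs_mul, abs_of_pos (Real.rpow_pos_of_pos ht0 (-s)), mul_comm]
        exact mul_le_mul_of_nonneg_right hdp.le (Real.rpow_pos_of_pos ht0 (-s)).le
    have step2 : ∫ r in a..b, δ * r ^ (-s) = δ * ((b ^ (1-s) - a ^ (1-s)) / (1-s)) := by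
      rw [intervalIntegral.integral_const_mul, hrpow_int]
    rw [Real.norm_eq_abs, step2] at step1
    have hble : (0:ℝ) < b ^ (1-s) := Real.rpow_pos_of_pos hb0 _
    have halb : b ^ (1-s) ≤ a ^ (1-s) :=
      Real.rpow_le_rpow_of_nonpos ha0 haleb (by linarith)
    have hval : δ * ((b ^ (1-s) - a ^ (1-s)) / (1-s)) = δ * ((a ^ (1-s) - b ^ (1-s)) / (s-1)) := by
      have h1 : (b ^ (1-s) - a ^ (1-s)) / (1-s) = (a ^ (1-s) - b ^ (1-s)) / (s-1) := by
        rw [div_eq_div_iff hs0 (by linarith : s - 1 ≠ 0)]; ring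
      rw [h1]
    rw [hval] at step1
    have hnn : (0:ℝ) ≤ δ * ((a ^ (1-s) - b ^ (1-s)) / (s-1)) :=
      mul_nonneg hδ.le (div_nonneg (by linarith) hs1.le)
    calc |T| ≤ δ * ((a ^ (1-s) - b ^ (1-s)) / (s-1)) := step1.trans_eq (abs_of_nonneg hnn)
      _ ≤ δ * (a ^ (1-s) / (s-1)) := by gcongr; linarith
      _ = δ * a ^ (1-s) / (s-1) := by ring
  have ha1 : a ^ (s-1) * a ^ (1-s) = 1 := by
    rw [← Real.rpow_add ha0]; norm_num
  have hap : 0 < a ^ (s-1) := Real.rpow_pos_of_pos ha0 _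
  have key2 : a ^ (s-1) * h a - C/(1-s)
      = a ^ (s-1) * h b + (-(a ^ (s-1) * T)) + (-(C * a ^ (s-1) * b ^ (1-s) / (1-s))) := by
    have hha : h a = h b - (T + C * ((b ^ (1-s) - a ^ (1-s)) / (1-s))) := by
      rw [← hsplit, key]; ring
    rw [hha]
    field_simp
    linear_combination C * ha1
  rw [Real.dist_eq, key2]
  have habs : |a ^ (s-1) * h b + (-(a ^ (s-1) * T)) + (-(C * a ^ (s-1) * b ^ (1-s) / (1-s)))|
      ≤ a ^ (s-1) * |h b| + a ^ (s-1) * |T| + |C| * a ^ (s-1) * b ^ (1-s) / (s-1) := by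
    refine (abs_add_three _ _ _).trans ?_
    have e1 : |a ^ (s-1) * h b| = a ^ (s-1) * |h b| := by
      rw [abs_mul, abs_of_pos hap]
    have e2 : |(-(a ^ (s-1) * T))| = a ^ (s-1) * |T| := by
      rw [abs_neg, abs_mul, abs_of_pos hap]
    have e3 : |(-(C * a ^ (s-1) * b ^ (1-s) / (1-s)))| = |C| * a ^ (s-1) * b ^ (1-s) / (s-1) := by
      rw [abs_neg, abs_div, abs_mul, abs_mul, abs_of_pos hap,
        abs_of_pos (Real.rpow_pos_of_pos hb0 (1-s)), abs_of_neg (show 1 - s < 0 by linarith)]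
      rw [show -(1-s) = s - 1 by ring]
    rw [e1, e2, e3]
  have hTterm : a ^ (s-1) * |T| ≤ δ / (s-1) := by
    calc a ^ (s-1) * |T| ≤ a ^ (s-1) * (δ * a ^ (1-s) / (s-1)) :=
          mul_le_mul_of_nonneg_left hTbound hap.le
      _ = δ / (s-1) * (a ^ (s-1) * a ^ (1-s)) := by ring
      _ = δ / (s-1) := by rw [ha1, mul_one]
  have hMterm : a ^ (s-1) * M < e/2 := by
    have := h2 (show a ∈ Ioi (0:ℝ) from ha0) (by rwa [Real.dist_eq, sub_zero, abs_of_pos ha0])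
    rw [Real.dist_eq, sub_zero, abs_of_nonneg (by positivity)] at this
    exact this
  have hδe : δ / (s-1) = e/2 := by rw [hδdef]; field_simp
  calc |a ^ (s-1) * h b + (-(a ^ (s-1) * T)) + (-(C * a ^ (s-1) * b ^ (1-s) / (1-s)))|
      ≤ a ^ (s-1) * |h b| + a ^ (s-1) * |T| + |C| * a ^ (s-1) * b ^ (1-s) / (s-1) := habs
    _ = a ^ (s-1) * M + a ^ (s-1) * |T| := by rw [hMdef]; ring
    _ < e/2 + e/2 := by
        apply add_lt_add_of_lt_of_le hMterm (hTterm.trans_eq hδe)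
    _ = e := by ring

/-- **Theorem 1.2.** Let `n ≥ 3`, `0 < m < (n-2)/n`, `γ = 2/(1-m)`, `α, β ∈ ℝ`, `η > 0`,
`ε > 0`. If there exists a radially symmetric solution `f` of
`Δ(f^m/m) + αf + βx·∇f = 0`, `f > 0`, in `B_ε \ {0} ⊆ ℝⁿ` satisfying
`lim_{r→0⁺} r^γ f(r) = η`, then `(α − 2β/(1-m)) η^{1-m} = 2(n − 2 − nm)/(1-m)²`. -/
theorem stmt_1 (n : ℕ) (hn : 3 ≤ n) (m γ η ε α β : ℝ)
    (hm0 : 0 < m) (hm1 : m < ((n : ℝ) - 2) / n)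
    (hγ : γ = 2 / (1 - m)) (hη : 0 < η) (hε : 0 < ε)
    (f : ℝ → ℝ)
    (hpos : ∀ r ∈ Ioo (0 : ℝ) ε, 0 < f r)
    (hreg : ContDiffOn ℝ 2 f (Ioo (0 : ℝ) ε))
    (hode : ∀ r ∈ Ioo (0 : ℝ) ε,
      deriv (deriv (fun s => f s ^ m / m)) r
        + ((n : ℝ) - 1) / r * deriv (fun s => f s ^ m / m) r
        + α * f r + β * r * deriv f r = 0)
    (hlim : Tendsto (fun r => r ^ γ * f r) (nhdsWithin 0 (Ioi 0)) (nhds η)) :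
    (α - 2 * β / (1 - m)) * η ^ (1 - m)
      = 2 * ((n : ℝ) - 2 - n * m) / (1 - m) ^ 2 := by
  -- basic numeric facts
  have hn3 : (3:ℝ) ≤ (n:ℝ) := by exact_mod_cast hn
  have hnpos : (0:ℝ) < n := by linarith
  have hmn : m * n < (n:ℝ) - 2 := (lt_div_iff₀ hnpos).mp hm1
  have hmlt1 : m < 1 := by nlinarith
  have h1m : 0 < 1 - m := by linarith
  have hγpos : 0 < γ := by rw [hγ]; positivity
  have hγ2 : 2 < γ := by rw [hγ, lt_div_iff₀ h1m]; nlinarith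
  have hγn : γ < n := by rw [hγ, div_lt_iff₀ h1m]; nlinarith
  have hγm : γ * m = γ - 2 := by rw [hγ]; field_simp; ring
  -- the function g = f^m/m and its regularity
  set g : ℝ → ℝ := fun s => f s ^ m / m with hgdef
  have hg2 : ContDiffOn ℝ 2 g (Ioo (0:ℝ) ε) := fun r hr =>
    (((hreg.contDiffAt (isOpen_Ioo.mem_nhds hr)).rpow_const_of_ne
      (hpos r hr).ne').div_const m).contDiffWithinAt
  have hg1 : ContDiffOn ℝ 1 (deriv g) (Ioo (0:ℝ) ε) :=
    hg2.deriv_of_isOpen isOpen_Ioo (by norm_num)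
  have hgdcont : ContinuousOn (deriv g) (Ioo (0:ℝ) ε) := hg1.continuousOn
  have hfcont : ContinuousOn f (Ioo (0:ℝ) ε) := hreg.continuousOn
  have hf'1 : ContDiffOn ℝ 1 (deriv f) (Ioo (0:ℝ) ε) :=
    hreg.deriv_of_isOpen isOpen_Ioo (by norm_num)
  have hf'cont : ContinuousOn (deriv f) (Ioo (0:ℝ) ε) := hf'1.continuousOn
  have hgd : ∀ r ∈ Ioo (0:ℝ) ε, HasDerivAt g (deriv g r) r := fun r hr =>
    ((hg2.contDiffAt (isOpen_Ioo.mem_nhds hr)).differentiableAt (by norm_num)).hasDerivAt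
  have hgd2 : ∀ r ∈ Ioo (0:ℝ) ε, HasDerivAt (deriv g) (deriv (deriv g) r) r := fun r hr =>
    ((hg1.contDiffAt (isOpen_Ioo.mem_nhds hr)).differentiableAt (by norm_num)).hasDerivAt
  have hfd : ∀ r ∈ Ioo (0:ℝ) ε, HasDerivAt f (deriv f r) r := fun r hr =>
    ((hreg.contDiffAt (isOpen_Ioo.mem_nhds hr)).differentiableAt (by norm_num)).hasDerivAt
  -- q and its derivative
  set q : ℝ → ℝ := fun r => r ^ ((n:ℝ)-1) * deriv g r with hqdef
  have hq : ∀ r ∈ Ioo (0:ℝ) ε,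
      HasDerivAt q (-(r ^ ((n:ℝ)-1) * (α * f r + β * r * deriv f r))) r := by
    intro r hr
    have hr0 : 0 < r := hr.1
    have hd := (Real.hasDerivAt_rpow_const (p := (n:ℝ)-1) (Or.inl hr0.ne')).mul (hgd2 r hr)
    have heq : ((n:ℝ)-1) * r ^ ((n:ℝ)-1-1) * deriv g r + r ^ ((n:ℝ)-1) * deriv (deriv g) r
        = -(r ^ ((n:ℝ)-1) * (α * f r + β * r * deriv f r)) := by
      have hode' := hode r hr
      have hr2 : r ^ ((n:ℝ)-1-1) = r ^ ((n:ℝ)-1) / r := Real.rpow_sub_one hr0.ne' _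
      rw [hr2]
      have hrinv : r * r⁻¹ = 1 := mul_inv_cancel₀ hr0.ne'
      linear_combination r ^ ((n:ℝ)-1) * hode'
    exact heq ▸ hd
  -- P and its derivative
  set P : ℝ → ℝ := fun r => r ^ (n:ℝ) * f r with hPdef
  have hP : ∀ r ∈ Ioo (0:ℝ) ε,
      HasDerivAt P ((n:ℝ) * r ^ ((n:ℝ)-1) * f r + r ^ (n:ℝ) * deriv f r) r := by
    intro r hr
    have := (Real.hasDerivAt_rpow_const (p := (n:ℝ)) (Or.inl hr.1.ne')).mul (hfd r hr)
    exact this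
  -- u
  set u : ℝ → ℝ := fun r => r ^ ((n:ℝ)-1) * f r with hudef
  have hucont : ContinuousOn u (Ioo (0:ℝ) ε) := by
    apply ContinuousOn.mul _ hfcont
    intro x hx
    exact (Real.continuousAt_rpow_const x _ (Or.inl hx.1.ne')).continuousWithinAt
  -- the key identity E
  have hE : ∀ a ∈ Ioo (0:ℝ) ε, ∀ b ∈ Ioo (0:ℝ) ε, a ≤ b →
      q b - q a = ((n:ℝ)*β - α) * (∫ r in a..b, u r) - β * (P b - P a) := by
    intro a ha b hb hab
    have hsub : Icc a b ⊆ Ioo (0:ℝ) ε := fun x hx => ⟨lt_of_lt_of_le ha.1 hx.1, lt_of_le_of_lt hx.2 hb.2⟩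
    have hsub' : uIcc a b ⊆ Ioo (0:ℝ) ε := by rwa [uIcc_of_le hab]
    have huint : IntervalIntegrable u volume a b :=
      (hucont.mono hsub').intervalIntegrable
    have hP'int : IntervalIntegrable
        (fun r => (n:ℝ) * r ^ ((n:ℝ)-1) * f r + r ^ (n:ℝ) * deriv f r) volume a b := by
      apply ContinuousOn.intervalIntegrable
      apply ContinuousOn.add
      · exact (((continuousOn_const (c := (n:ℝ))).mul ((hucont.mono hsub').mono (fun x hx => hx))).congr
          (fun x hx => by simp only [Pi.mul_apply, hudef]; ring)).congr (fun x hx => rfl)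
      · exact ContinuousOn.mul
          (fun x hx => (Real.continuousAt_rpow_const x _ (Or.inl (hsub' hx).1.ne')).continuousWithinAt)
          (hf'cont.mono hsub')
    have hq'int : IntervalIntegrable
        (fun r => -(r ^ ((n:ℝ)-1) * (α * f r + β * r * deriv f r))) volume a b := by
      apply ContinuousOn.intervalIntegrable
      apply ContinuousOn.neg
      apply ContinuousOn.mul
      · exact fun x hx => (Real.continuousAt_rpow_const x _ (Or.inl (hsub' hx).1.ne')).continuousWithinAt
      · exact ((continuousOn_const.mul (hfcont.mono hsub')).add
          ((continuousOn_const.mul (continuousOn_id.mono (fun x hx => trivial))).mul (hf'cont.mono hsub')))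
    have hqFTC : ∫ r in a..b, -(r ^ ((n:ℝ)-1) * (α * f r + β * r * deriv f r)) = q b - q a :=
      intervalIntegral.integral_eq_sub_of_hasDerivAt (fun x hx => hq x (hsub' hx)) hq'int
    have hPFTC : ∫ r in a..b, ((n:ℝ) * r ^ ((n:ℝ)-1) * f r + r ^ (n:ℝ) * deriv f r) = P b - P a :=
      intervalIntegral.integral_eq_sub_of_hasDerivAt (fun x hx => hP x (hsub' hx)) hP'int
    have hptw : ∀ x ∈ uIcc a b,
        -(x ^ ((n:ℝ)-1) * (α * f x + β * x * deriv f x))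
          = ((n:ℝ)*β - α) * u x - β * ((n:ℝ) * x ^ ((n:ℝ)-1) * f x + x ^ (n:ℝ) * deriv f x) := by
      intro x hx
      have hx0 : 0 < x := (hsub' hx).1
      have hxn : x ^ ((n:ℝ)-1) * x = x ^ (n:ℝ) := by
        rw [← Real.rpow_add_one hx0.ne' ((n:ℝ)-1)]; norm_num
      simp only [hudef]
      linear_combination (-(β * deriv f x)) * hxn
    calc q b - q a = ∫ r in a..b, -(r ^ ((n:ℝ)-1) * (α * f r + β * r * deriv f r)) := hqFTC.symm
      _ = ∫ r in a..b, (((n:ℝ)*β - α) * u r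
            - β * ((n:ℝ) * r ^ ((n:ℝ)-1) * f r + r ^ (n:ℝ) * deriv f r)) :=
          intervalIntegral.integral_congr hptw
      _ = ((n:ℝ)*β - α) * (∫ r in a..b, u r) - β * (P b - P a) := by
          rw [intervalIntegral.integral_sub (huint.const_mul _) (hP'int.const_mul _),
            intervalIntegral.integral_const_mul, intervalIntegral.integral_const_mul, hPFTC]
  -- choose the base interval
  have hlimT := hlim
  obtain ⟨d0, hd0, hd0prop⟩ := Metric.tendsto_nhdsWithin_nhds.1 hlim η hη
  set c : ℝ := min (ε/2) (d0/2) with hcdef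
  have hc0 : 0 < c := by positivity
  have hcε : c < ε := by
    calc c ≤ ε/2 := min_le_left _ _
      _ < ε := by linarith
  have hcd0 : c < d0 := by
    calc c ≤ d0/2 := min_le_right _ _
      _ < d0 := by linarith
  have hIooε : Ioc (0:ℝ) c ⊆ Ioo (0:ℝ) ε := fun x hx => ⟨hx.1, lt_of_le_of_lt hx.2 hcε⟩
  have hbound : ∀ r ∈ Ioc (0:ℝ) c, r ^ γ * f r < 2 * η := by
    intro r hr
    have h1 := hd0prop (show r ∈ Ioi (0:ℝ) from hr.1)
      (by rw [Real.dist_eq, sub_zero, abs_of_pos hr.1]; exact lt_of_le_of_lt hr.2 hcd0)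
    rw [Real.dist_eq] at h1
    have h2 := abs_lt.mp h1
    linarith [h2.1, h2.2]
  have hn1ne : (n:ℝ) - 1 ≠ 0 := by linarith
  have hexp1 : (-1:ℝ) < (n:ℝ)-1-γ := by linarith
  have hub : ∀ r ∈ Ioc (0:ℝ) c, u r ≤ 2*η * r ^ ((n:ℝ)-1-γ) := by
    intro r hr
    have hr0 : 0 < r := hr.1
    have hexp : ((n:ℝ)-1-γ) + γ = (n:ℝ)-1 := by ring
    calc u r = r ^ (((n:ℝ)-1-γ) + γ) * f r := by rw [hexp]
      _ = r ^ ((n:ℝ)-1-γ) * (r ^ γ * f r) := by rw [Real.rpow_add hr0]; ring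
      _ ≤ r ^ ((n:ℝ)-1-γ) * (2*η) :=
          mul_le_mul_of_nonneg_left (hbound r hr).le (Real.rpow_pos_of_pos hr0 _).le
      _ = 2*η * r ^ ((n:ℝ)-1-γ) := by ring
  have huint0 : ∀ b ∈ Ioc (0:ℝ) c, IntervalIntegrable u volume 0 b := by
    intro b hb
    rw [intervalIntegrable_iff_integrableOn_Ioc_of_le hb.1.le]
    have hmeas : AEStronglyMeasurable u (volume.restrict (Ioc 0 b)) :=
      (hucont.mono (fun x hx => hIooε ⟨hx.1, hx.2.trans hb.2⟩)).aestronglyMeasurable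
        measurableSet_Ioc
    apply Integrable.mono' (g := fun r => 2*η * r ^ ((n:ℝ)-1-γ)) ?_ hmeas ?_
    · have h1 := (intervalIntegrable_rpow' (a:=0) (b:=b) hexp1).const_mul (2*η)
      rw [intervalIntegrable_iff_integrableOn_Ioc_of_le hb.1.le] at h1
      exact h1
    · refine (ae_restrict_mem measurableSet_Ioc).mono (fun r hr => ?_)
      have hr' : r ∈ Ioc (0:ℝ) c := ⟨hr.1, hr.2.trans hb.2⟩
      have hu0 : 0 ≤ u r :=
        mul_nonneg (Real.rpow_nonneg hr.1.le _) (hpos r (hIooε hr')).le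
      rw [Real.norm_eq_abs, abs_of_nonneg hu0]
      exact hub r hr'
  have huab : ∀ a b : ℝ, 0 < a → b < ε → a ≤ b → IntervalIntegrable u volume a b := by
    intro a b ha hb hab
    apply (hucont.mono ?_).intervalIntegrable
    rw [uIcc_of_le hab]
    exact fun x hx => ⟨lt_of_lt_of_le ha hx.1, lt_of_le_of_lt hx.2 hb⟩
  set I : ℝ → ℝ := fun b => ∫ r in (0:ℝ)..b, u r with hIdef
  have hInonneg : ∀ b ∈ Ioc (0:ℝ) c, 0 ≤ I b := by
    intro b hb
    apply intervalIntegral.integral_nonneg hb.1.le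
    intro x hx
    rcases eq_or_lt_of_le hx.1 with h0 | h0
    · have : u x = 0 := by
        simp only [hudef, ← h0]
        rw [Real.zero_rpow hn1ne, zero_mul]
      rw [this]
    · exact le_of_lt (mul_pos (Real.rpow_pos_of_pos h0 _)
        (hpos x (hIooε ⟨h0, hx.2.trans hb.2⟩)))
  have hIle : ∀ b ∈ Ioc (0:ℝ) c, I b ≤ 2*η/((n:ℝ)-γ) * b ^ ((n:ℝ)-γ) := by
    intro b hb
    have h2 : ∫ r in (0:ℝ)..b, 2*η * r ^ ((n:ℝ)-1-γ) = 2*η/((n:ℝ)-γ) * b ^ ((n:ℝ)-γ) := by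
      rw [intervalIntegral.integral_const_mul, integral_rpow (Or.inl hexp1),
        Real.zero_rpow (by intro hh; rw [show (n:ℝ)-1-γ+1 = (n:ℝ)-γ by ring] at hh; linarith),
        show (n:ℝ)-1-γ+1 = (n:ℝ)-γ by ring]
      field_simp
      rw [sub_zero]
    rw [← h2]
    apply intervalIntegral.integral_mono_on hb.1.le (huint0 b hb)
      ((intervalIntegrable_rpow' hexp1).const_mul _)
    intro x hx
    rcases eq_or_lt_of_le hx.1 with h0 | h0
    · have hux : u x = 0 := by
        simp only [hudef, ← h0]
        rw [Real.zero_rpow hn1ne, zero_mul]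
      rw [hux]
      positivity
    · exact hub x ⟨h0, hx.2.trans hb.2⟩
  have hI0 : Tendsto I (𝓝[>] (0:ℝ)) (𝓝 0) := by
    have hup : Tendsto (fun b : ℝ => 2*η/((n:ℝ)-γ) * b ^ ((n:ℝ)-γ)) (𝓝[>] (0:ℝ)) (𝓝 0) := by
      simpa using (rpow_tendsto_zero (by linarith : (0:ℝ) < (n:ℝ)-γ)).const_mul (2*η/((n:ℝ)-γ))
    apply tendsto_of_tendsto_of_tendsto_of_le_of_le' tendsto_const_nhds hup
    · filter_upwards [Ioc_mem_nhdsGT_of_mem ⟨le_refl (0:ℝ), hc0⟩] with b hb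
      exact hInonneg b hb
    · filter_upwards [Ioc_mem_nhdsGT_of_mem ⟨le_refl (0:ℝ), hc0⟩] with b hb
      exact hIle b hb
  have hPA : Tendsto P (𝓝[>] (0:ℝ)) (𝓝 0) := by
    have h1 : Tendsto (fun a : ℝ => a ^ ((n:ℝ)-γ) * (a ^ γ * f a)) (𝓝[>] (0:ℝ)) (𝓝 (0 * η)) :=
      (rpow_tendsto_zero (by linarith : (0:ℝ) < (n:ℝ)-γ)).mul hlimT
    rw [zero_mul] at h1
    apply h1.congr'
    filter_upwards [self_mem_nhdsWithin] with a (ha : a ∈ Ioi (0:ℝ))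
    simp only [hPdef]
    rw [← mul_assoc, ← Real.rpow_add ha, show (n:ℝ)-γ+γ = (n:ℝ) by ring]
  set c1 : ℝ := c/2 with hc1def
  have hc1ε : c1 ∈ Ioo (0:ℝ) ε := ⟨by positivity, by simp only [hc1def]; linarith⟩
  have hc1c : c1 ∈ Ioc (0:ℝ) c := ⟨by positivity, by simp only [hc1def]; linarith⟩
  have hqa : ∀ b ∈ Ioc (0:ℝ) c1, ∀ a ∈ Ioo (0:ℝ) b,
      q a = q b - ((n:ℝ)*β - α) * (I b - I a) + β * (P b - P a) := by
    intro b hb a ha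
    have hbε : b ∈ Ioo (0:ℝ) ε := ⟨hb.1, lt_of_le_of_lt hb.2 hc1ε.2⟩
    have haε : a ∈ Ioo (0:ℝ) ε := ⟨ha.1, lt_trans ha.2 hbε.2⟩
    have hIsplit : ∫ r in a..b, u r = I b - I a := by
      have h1 := intervalIntegral.integral_add_adjacent_intervals
        (huint0 a ⟨ha.1, le_trans ha.2.le (le_trans hb.2 hc1c.2)⟩)
        (huab a b ha.1 hbε.2 ha.2.le)
      simp only [hIdef] at h1 ⊢
      linarith [h1]
    have hext := hE a haε b hbε ha.2.le
    rw [hIsplit] at hext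
    linarith [hext]
  set L0 : ℝ := q c1 - ((n:ℝ)*β - α) * I c1 + β * P c1 with hL0def
  have hqlim : Tendsto q (𝓝[>] (0:ℝ)) (𝓝 L0) := by
    have ht : Tendsto (fun a => q c1 - ((n:ℝ)*β - α) * (I c1 - I a) + β * (P c1 - P a))
        (𝓝[>] (0:ℝ)) (𝓝 L0) := by
      rw [hL0def]
      have h1 := (((tendsto_const_nhds (x := I c1)).sub hI0).const_mul ((n:ℝ)*β - α))
      have h2 := (((tendsto_const_nhds (x := P c1)).sub hPA).const_mul β)
      have h3 := ((tendsto_const_nhds (x := q c1)).sub h1).add h2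
      simpa using h3
    apply ht.congr'
    filter_upwards [Ioo_mem_nhdsGT_of_mem ⟨le_refl (0:ℝ), hc1ε.1⟩] with a ha
    exact (hqa c1 ⟨hc1ε.1, le_refl c1⟩ a ha).symm
  have hqid : ∀ b ∈ Ioc (0:ℝ) c1, q b = L0 + ((n:ℝ)*β - α) * I b - β * P b := by
    intro b hb
    have h1 : Tendsto (fun a => q b - ((n:ℝ)*β - α) * (I b - I a) + β * (P b - P a))
        (𝓝[>] (0:ℝ)) (𝓝 (q b - ((n:ℝ)*β - α) * I b + β * P b)) := by
      have ha1 := (((tendsto_const_nhds (x := I b)).sub hI0).const_mul ((n:ℝ)*β - α))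
      have ha2 := (((tendsto_const_nhds (x := P b)).sub hPA).const_mul β)
      have ha3 := ((tendsto_const_nhds (x := q b)).sub ha1).add ha2
      simpa using ha3
    have h2 : Tendsto (fun a => q b - ((n:ℝ)*β - α) * (I b - I a) + β * (P b - P a))
        (𝓝[>] (0:ℝ)) (𝓝 L0) := by
      apply hqlim.congr'
      filter_upwards [Ioo_mem_nhdsGT_of_mem ⟨le_refl (0:ℝ), hb.1⟩] with a ha
      exact hqa b hb a ha
    have h3 := tendsto_nhds_unique h2 h1
    linarith
  -- Step 3 : L0 = 0
  have hgdIoo : ∀ r ∈ Ioo (0:ℝ) c1, HasDerivAt g (deriv g r) r := fun r hr =>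
    hgd r ⟨hr.1, lt_trans hr.2 hc1ε.2⟩
  have hgdcont1 : ContinuousOn (deriv g) (Ioo (0:ℝ) c1) :=
    hgdcont.mono (fun x hx => ⟨hx.1, lt_trans hx.2 hc1ε.2⟩)
  have hresn := lemA hc1ε.1 (by linarith : (1:ℝ) < (n:ℝ)-1) hgdIoo hgdcont1 (hqdef ▸ hqlim)
  have hηm : Tendsto (fun r => (r ^ γ * f r) ^ m) (𝓝[>] (0:ℝ)) (𝓝 (η ^ m)) :=
    ((Real.continuousAt_rpow_const η m (Or.inl hη.ne')).tendsto).comp hlimT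
  have hptwg : ∀ r ∈ Ioo (0:ℝ) ε, (r ^ γ * f r) ^ m = r ^ (γ-2) * f r ^ m := by
    intro r hr
    rw [Real.mul_rpow (Real.rpow_nonneg hr.1.le γ) (hpos r hr).le,
      ← Real.rpow_mul hr.1.le, hγm]
  have hg0 : Tendsto (fun r => r ^ ((n:ℝ)-1-1) * g r) (𝓝[>] (0:ℝ)) (𝓝 0) := by
    have h1 : Tendsto (fun r : ℝ => r ^ ((n:ℝ)-γ) * ((r ^ γ * f r) ^ m) / m)
        (𝓝[>] (0:ℝ)) (𝓝 (0 * η ^ m / m)) :=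
      ((rpow_tendsto_zero (by linarith : (0:ℝ) < (n:ℝ)-γ)).mul hηm).div_const m
    rw [zero_mul, zero_div] at h1
    apply h1.congr'
    filter_upwards [Ioo_mem_nhdsGT_of_mem ⟨le_refl (0:ℝ), hε⟩] with r hr
    have hr0 : 0 < r := hr.1
    rw [hptwg r hr, ← mul_assoc, ← Real.rpow_add hr0,
      show (n:ℝ)-γ+(γ-2) = (n:ℝ)-1-1 by ring]
    simp only [hgdef]
    ring
  have hL0 : L0 = 0 := by
    have huniq := tendsto_nhds_unique hresn hg0
    have hne : 1 - ((n:ℝ)-1) ≠ 0 := by linarith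
    rcases div_eq_zero_iff.mp huniq with h | h
    · exact h
    · exact absurd h hne
  -- Step 4 : the L'Hopital limit
  have hJ : Tendsto (fun b => I b / b ^ ((n:ℝ)-γ)) (𝓝[>] (0:ℝ)) (𝓝 (η/((n:ℝ)-γ))) := by
    apply HasDerivAt.lhopital_zero_right_on_Ioo hc1ε.1
      (f' := u) (g' := fun x => ((n:ℝ)-γ) * x ^ ((n:ℝ)-γ-1))
    · intro x hx
      have hxε : x ∈ Ioo (0:ℝ) ε := ⟨hx.1, lt_trans hx.2 hc1ε.2⟩
      exact intervalIntegral.integral_hasDerivAt_right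
        (huint0 x ⟨hx.1, le_trans hx.2.le hc1c.2⟩)
        (hucont.stronglyMeasurableAtFilter isOpen_Ioo x hxε)
        (hucont.continuousAt (isOpen_Ioo.mem_nhds hxε))
    · intro x hx
      exact Real.hasDerivAt_rpow_const (Or.inl hx.1.ne')
    · intro x hx
      exact mul_ne_zero (by linarith) (Real.rpow_pos_of_pos hx.1 _).ne'
    · exact hI0
    · exact rpow_tendsto_zero (by linarith : (0:ℝ) < (n:ℝ)-γ)
    · have h1 : Tendsto (fun x : ℝ => (x ^ γ * f x) / ((n:ℝ)-γ)) (𝓝[>] (0:ℝ))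
          (𝓝 (η/((n:ℝ)-γ))) := hlimT.div_const _
      apply h1.congr'
      filter_upwards [self_mem_nhdsWithin] with x (hx : x ∈ Ioi (0:ℝ))
      have hx0 : (0:ℝ) < x := hx
      have hxe : x ^ ((n:ℝ)-1) = x ^ γ * x ^ ((n:ℝ)-γ-1) := by
        rw [← Real.rpow_add hx0, show γ + ((n:ℝ)-γ-1) = (n:ℝ)-1 by ring]
      have hne : x ^ ((n:ℝ)-γ-1) ≠ 0 := (Real.rpow_pos_of_pos hx0 _).ne'
      have hd1 : ((n:ℝ)-γ) ≠ 0 := by linarith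
      have hd2 : ((n:ℝ)-γ) * x ^ ((n:ℝ)-γ-1) ≠ 0 := mul_ne_zero hd1 hne
      try simp only [hudef]
      rw [hxe, div_eq_div_iff hd1 hd2]
      ring
  have hK : Tendsto (fun b => b ^ (γ-1) * deriv g b) (𝓝[>] (0:ℝ))
      (𝓝 (((n:ℝ)*β - α) * (η/((n:ℝ)-γ)) - β * η)) := by
    have h1 : Tendsto (fun b => ((n:ℝ)*β - α) * (I b / b ^ ((n:ℝ)-γ)) - β * (b ^ γ * f b))
        (𝓝[>] (0:ℝ)) (𝓝 (((n:ℝ)*β - α) * (η/((n:ℝ)-γ)) - β * η)) :=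
      (hJ.const_mul _).sub (hlimT.const_mul β)
    apply h1.congr'
    filter_upwards [Ioc_mem_nhdsGT_of_mem ⟨le_refl (0:ℝ), hc1ε.1⟩] with b hb
    have hb0 : 0 < b := hb.1
    have hq1 := hqid b hb
    rw [hL0, zero_add] at hq1
    have hbn : b ^ (γ-(n:ℝ)) * b ^ ((n:ℝ)-1) = b ^ (γ-1) := by
      rw [← Real.rpow_add hb0, show γ-(n:ℝ)+((n:ℝ)-1) = γ-1 by ring]
    have hbinv : b ^ (γ-(n:ℝ)) = (b ^ ((n:ℝ)-γ))⁻¹ := by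
      rw [show γ-(n:ℝ) = -((n:ℝ)-γ) by ring, Real.rpow_neg hb0.le]
    have hbγ : b ^ (γ-(n:ℝ)) * b ^ (n:ℝ) = b ^ γ := by
      rw [← Real.rpow_add hb0, show γ-(n:ℝ)+(n:ℝ) = γ by ring]
    calc ((n:ℝ)*β - α) * (I b / b ^ ((n:ℝ)-γ)) - β * (b ^ γ * f b)
        = ((n:ℝ)*β - α) * (I b * b ^ (γ-(n:ℝ))) - β * ((b ^ (γ-(n:ℝ)) * b ^ (n:ℝ)) * f b) := by
          rw [hbγ, div_eq_mul_inv, ← hbinv]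
      _ = b ^ (γ-(n:ℝ)) * (((n:ℝ)*β - α) * I b - β * (b ^ (n:ℝ) * f b)) := by ring
      _ = b ^ (γ-(n:ℝ)) * q b := by rw [hq1]
      _ = b ^ (γ-1) * deriv g b := by
          simp only [hqdef]
          rw [← mul_assoc, hbn]
  -- Step 5
  have hresγ := lemA hc1ε.1 (by linarith : (1:ℝ) < γ-1) hgdIoo hgdcont1 hK
  have hgm : Tendsto (fun r => r ^ (γ-1-1) * g r) (𝓝[>] (0:ℝ)) (𝓝 (η ^ m / m)) := by
    have h1 : Tendsto (fun r : ℝ => ((r ^ γ * f r) ^ m) / m) (𝓝[>] (0:ℝ)) (𝓝 (η ^ m / m)) :=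
      hηm.div_const m
    apply h1.congr'
    filter_upwards [Ioo_mem_nhdsGT_of_mem ⟨le_refl (0:ℝ), hε⟩] with r hr
    rw [hptwg r hr, show γ-2 = γ-1-1 by ring]
    simp only [hgdef]
    ring
  have hfin := tendsto_nhds_unique hgm hresγ
  -- Step 6 : algebra
  have hA : 0 < η ^ m := Real.rpow_pos_of_pos hη m
  have hηsplit : η ^ (1-m) * η ^ m = η := by
    rw [← Real.rpow_add hη, show 1-m+m = (1:ℝ) by ring, Real.rpow_one]
  have hneγn : (n:ℝ) - γ ≠ 0 := by linarith
  have hne2γ : 1 - (γ-1) ≠ 0 := by intro hh; linarith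
  have hpow : η ^ (1-m) = η / η ^ m := by
    rw [eq_div_iff hA.ne']
    exact hηsplit
  have hne2γ' : (2:ℝ) - γ ≠ 0 := by linarith
  have hfin2 : η ^ m * (2-γ) * ((n:ℝ)-γ) = m * (((n:ℝ)*β-α)*η - β*η*((n:ℝ)-γ)) := by
    rw [div_eq_div_iff hm0.ne' hne2γ] at hfin
    have h5 := congrArg (fun z => z * ((n:ℝ)-γ)) hfin
    rw [show (((n:ℝ)*β-α)*(η/((n:ℝ)-γ)) - β*η) * m * ((n:ℝ)-γ)
      = (((n:ℝ)*β-α)*(η/((n:ℝ)-γ)*((n:ℝ)-γ)) - β*η*((n:ℝ)-γ)) * m by ring,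
      div_mul_cancel₀ η hneγn] at h5
    linear_combination h5
  have hkey : (α - β*γ) * η = γ*((n:ℝ)-γ)*(η ^ m) := by
    have h3 : m * (γ*((n:ℝ)-γ)*(η ^ m)) = m * ((α - β*γ)*η) := by
      linear_combination (-1 : ℝ) * hfin2 + (((n:ℝ)-γ)*(η ^ m)) * hγm
    exact (mul_left_cancel₀ hm0.ne' h3).symm
  have hβγ : 2*β/(1-m) = β*γ := by rw [hγ]; field_simp
  have hRHS : 2*((n:ℝ)-2-(n:ℝ)*m)/(1-m)^2 = γ*((n:ℝ)-γ) := by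
    rw [hγ]; field_simp; ring
  rw [hβγ, hRHS, hpow]
  field_simp
  linear_combination hkey
end

section
/- Let n ≥ 3 be an integer, 0 < m < (n-2)/n, γ = 2/(1-m) and η > 0. If for some α, β ∈ ℝ there exists a radially symmetric solution f of Δ(f^m/m) + αf + βx·∇f = 0, f > 0, in ℝ^n \ {0} satisfying lim_{r→0⁺} r^γ f(r) = η, then (α − 2β/(1-m)) η^{1-m} = 2(n − 2 − nm)/(1-m)². -/
open Set Filter MeasureTheory intervalIntegral

set_option maxHeartbeats 1600000

lemma my_cont_rpow (p : ℝ) : ContinuousOn (fun x : ℝ => x ^ p) (Ioi 0) :=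
  fun x hx => (Real.continuousAt_rpow_const x p (Or.inl (ne_of_gt hx))).continuousWithinAt

lemma my_intble {u : ℝ → ℝ} (hu : ContinuousOn u (Ioi 0)) {a b : ℝ} (ha : 0 < a)
    (hab : a ≤ b) : IntervalIntegrable u volume a b := by
  apply ContinuousOn.intervalIntegrable (hu.mono ?_)
  rw [uIcc_of_le hab]; exact fun x hx => lt_of_lt_of_le ha hx.1

lemma my_ftc {F F' : ℝ → ℝ} (hF : ∀ x ∈ Ioi (0:ℝ), HasDerivAt F (F' x) x)
    (hc : ContinuousOn F' (Ioi (0:ℝ))) {a b : ℝ} (ha : 0 < a) (hab : a ≤ b) :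
    ∫ x in a..b, F' x = F b - F a := by
  have hsub : Set.uIcc a b ⊆ Ioi (0:ℝ) := by
    rw [uIcc_of_le hab]; exact fun x hx => lt_of_lt_of_le ha hx.1
  exact intervalIntegral.integral_eq_sub_of_hasDerivAt (fun x hx => hF x (hsub hx))
    ((hc.mono hsub).intervalIntegrable)

lemma my_int_le {u : ℝ → ℝ} {p c a b : ℝ} (hu : ContinuousOn u (Ioi 0)) (hp : p ≠ -1)
    (ha : 0 < a) (hab : a ≤ b) (hb : ∀ s, a ≤ s → s ≤ b → u s ≤ c * s ^ p) :
    (∫ x in a..b, u x) ≤ c * ((b ^ (p+1) - a ^ (p+1))/(p+1)) := by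
  have h1 : IntervalIntegrable u volume a b := my_intble hu ha hab
  have hc : ContinuousOn (fun x : ℝ => c * x ^ p) (Ioi 0) :=
    continuousOn_const.mul (my_cont_rpow p)
  have h2 : IntervalIntegrable (fun x => c * x ^ p) volume a b := my_intble hc ha hab
  have h0 : (0:ℝ) ∉ Set.uIcc a b := by
    rw [uIcc_of_le hab]; intro h; exact absurd h.1 (by linarith)
  calc (∫ x in a..b, u x) ≤ ∫ x in a..b, c * x ^ p :=
        intervalIntegral.integral_mono_on hab h1 h2 (fun x hx => hb x hx.1 hx.2)
    _ = c * ((b ^ (p+1) - a ^ (p+1))/(p+1)) := by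
        rw [intervalIntegral.integral_const_mul, integral_rpow (Or.inr ⟨hp, h0⟩)]

lemma my_le_int {u : ℝ → ℝ} {p c a b : ℝ} (hu : ContinuousOn u (Ioi 0)) (hp : p ≠ -1)
    (ha : 0 < a) (hab : a ≤ b) (hb : ∀ s, a ≤ s → s ≤ b → c * s ^ p ≤ u s) :
    c * ((b ^ (p+1) - a ^ (p+1))/(p+1)) ≤ ∫ x in a..b, u x := by
  have h1 : IntervalIntegrable u volume a b := my_intble hu ha hab
  have hc : ContinuousOn (fun x : ℝ => c * x ^ p) (Ioi 0) :=
    continuousOn_const.mul (my_cont_rpow p)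
  have h2 : IntervalIntegrable (fun x => c * x ^ p) volume a b := my_intble hc ha hab
  have h0 : (0:ℝ) ∉ Set.uIcc a b := by
    rw [uIcc_of_le hab]; intro h; exact absurd h.1 (by linarith)
  calc c * ((b ^ (p+1) - a ^ (p+1))/(p+1)) = ∫ x in a..b, c * x ^ p := by
        rw [intervalIntegral.integral_const_mul, integral_rpow (Or.inr ⟨hp, h0⟩)]
    _ ≤ ∫ x in a..b, u x :=
        intervalIntegral.integral_mono_on hab h2 h1 (fun x hx => hb x hx.1 hx.2)


lemma my_int_le_div {u : ℝ → ℝ} {c a b : ℝ} (hu : ContinuousOn u (Ioi 0))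
    (ha : 0 < a) (hab : a ≤ b) (hb : ∀ s, a ≤ s → s ≤ b → u s ≤ c * (1/s)) :
    (∫ x in a..b, u x) ≤ c * Real.log (b/a) := by
  have h1 : IntervalIntegrable u volume a b := my_intble hu ha hab
  have hc : ContinuousOn (fun x : ℝ => c * (1/x)) (Ioi 0) :=
    continuousOn_const.mul (continuousOn_const.div continuousOn_id (fun x hx => ne_of_gt hx))
  have h2 : IntervalIntegrable (fun x => c * (1/x)) volume a b := my_intble hc ha hab
  have h0 : (0:ℝ) ∉ Set.uIcc a b := by
    rw [uIcc_of_le hab]; intro h; exact absurd h.1 (by linarith)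
  calc (∫ x in a..b, u x) ≤ ∫ x in a..b, c * (1/x) :=
        intervalIntegral.integral_mono_on hab h1 h2 (fun x hx => hb x hx.1 hx.2)
    _ = c * Real.log (b/a) := by
        rw [intervalIntegral.integral_const_mul, integral_one_div h0]

lemma my_le_int_div {u : ℝ → ℝ} {c a b : ℝ} (hu : ContinuousOn u (Ioi 0))
    (ha : 0 < a) (hab : a ≤ b) (hb : ∀ s, a ≤ s → s ≤ b → c * (1/s) ≤ u s) :
    c * Real.log (b/a) ≤ ∫ x in a..b, u x := by
  have h1 : IntervalIntegrable u volume a b := my_intble hu ha hab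
  have hc : ContinuousOn (fun x : ℝ => c * (1/x)) (Ioi 0) :=
    continuousOn_const.mul (continuousOn_const.div continuousOn_id (fun x hx => ne_of_gt hx))
  have h2 : IntervalIntegrable (fun x => c * (1/x)) volume a b := my_intble hc ha hab
  have h0 : (0:ℝ) ∉ Set.uIcc a b := by
    rw [uIcc_of_le hab]; intro h; exact absurd h.1 (by linarith)
  calc c * Real.log (b/a) = ∫ x in a..b, c * (1/x) := by
        rw [intervalIntegral.integral_const_mul, integral_one_div h0]
    _ ≤ ∫ x in a..b, u x :=
        intervalIntegral.integral_mono_on hab h2 h1 (fun x hx => hb x hx.1 hx.2)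

/-- **Theorem 1.4.** Let `n ≥ 3`, `0 < m < (n-2)/n`, `γ = 2/(1-m)`, `η > 0`. If for some
`α, β ∈ ℝ` there exists a radially symmetric solution `f` of `Δ(f^m/m) + αf + βx·∇f = 0`,
`f > 0`, in `ℝⁿ \ {0}` satisfying `lim_{r→0⁺} r^γ f(r) = η`, then
`(α − 2β/(1-m)) η^{1-m} = 2(n − 2 − nm)/(1-m)²`. -/
theorem stmt_3 (n : ℕ) (hn : 3 ≤ n) (m γ η α β : ℝ)
    (hm0 : 0 < m) (hm1 : m < ((n : ℝ) - 2) / n)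
    (hγ : γ = 2 / (1 - m)) (hη : 0 < η)
    (f : ℝ → ℝ)
    (hpos : ∀ r ∈ Ioi (0 : ℝ), 0 < f r)
    (hreg : ContDiffOn ℝ 2 f (Ioi (0 : ℝ)))
    (hode : ∀ r ∈ Ioi (0 : ℝ),
      deriv (deriv (fun s => f s ^ m / m)) r
        + ((n : ℝ) - 1) / r * deriv (fun s => f s ^ m / m) r
        + α * f r + β * r * deriv f r = 0)
    (hlim : Tendsto (fun r => r ^ γ * f r) (nhdsWithin 0 (Ioi 0)) (nhds η)) :
    (α - 2 * β / (1 - m)) * η ^ (1 - m)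
      = 2 * ((n : ℝ) - 2 - n * m) / (1 - m) ^ 2 := by
  have hnR : (3:ℝ) ≤ (n:ℝ) := by exact_mod_cast hn
  have hn0 : (0:ℝ) < n := by linarith
  have hm1' : m < 1 := lt_of_lt_of_le hm1 (by rw [div_le_one hn0]; linarith)
  have h1m : 0 < 1 - m := by linarith
  have hγ2 : 2 < γ := by
    rw [hγ, lt_div_iff₀ h1m]; nlinarith
  have hγn : γ < n := by
    rw [hγ, div_lt_iff₀ h1m]
    have h := (lt_div_iff₀ hn0).1 hm1
    nlinarith
  have hγ0 : 0 < γ := by linarith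
  set v : ℝ → ℝ := fun s => f s ^ m / m with hvdef
  set w : ℝ → ℝ := fun r => r ^ γ * f r with hwdef
  -- differentiability facts
  have hfd : ∀ r ∈ Ioi (0:ℝ), HasDerivAt f (deriv f r) r := by
    intro r hr
    exact ((hreg.differentiableOn (by norm_num)).differentiableAt
      (Ioi_mem_nhds hr)).hasDerivAt
  have hfc : ContinuousOn f (Ioi 0) := hreg.continuousOn
  have hfc' : ContinuousOn (deriv f) (Ioi 0) :=
    hreg.continuousOn_deriv_of_isOpen isOpen_Ioi (by norm_num)
  have hvdf : ∀ r ∈ Ioi (0:ℝ), HasDerivAt v (f r ^ (m-1) * deriv f r) r := by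
    intro r hr
    have h1 : HasDerivAt (fun x : ℝ => x ^ m) (m * f r ^ (m-1)) (f r) :=
      Real.hasDerivAt_rpow_const (Or.inl (ne_of_gt (hpos r hr)))
    have h2 := (h1.comp r (hfd r hr)).div_const m
    refine h2.congr_deriv ?_
    field_simp
  have hdv : ∀ r ∈ Ioi (0:ℝ), deriv v r = f r ^ (m-1) * deriv f r :=
    fun r hr => (hvdf r hr).deriv
  have hvc' : ContinuousOn (deriv v) (Ioi 0) := by
    apply ContinuousOn.congr ((hfc.rpow_const
      (fun x hx => Or.inl (ne_of_gt (hpos x hx)))).mul hfc')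
    exact fun x hx => hdv x hx
  have hv2 : ContDiffOn ℝ 2 v (Ioi 0) :=
    (hreg.rpow_const_of_ne (fun x hx => ne_of_gt (hpos x hx))).div_const m
  have hvd2 : ∀ r ∈ Ioi (0:ℝ), HasDerivAt (deriv v) (deriv (deriv v) r) r := by
    intro r hr
    have := (hv2.deriv_of_isOpen isOpen_Ioi (m := 1) (by norm_num)).differentiableOn one_ne_zero
    exact (this.differentiableAt (Ioi_mem_nhds hr)).hasDerivAt
  set G : ℝ → ℝ := fun r => r ^ ((n:ℝ)-1) * deriv v r with hGdef
  set ψ : ℝ → ℝ := fun r => r ^ (n:ℝ) * f r with hψdef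
  have hGd : ∀ r ∈ Ioi (0:ℝ), HasDerivAt G
      (-((α-(n:ℝ)*β) * (r ^ ((n:ℝ)-1) * f r))
        - β*((n:ℝ)*(r^((n:ℝ)-1)*f r) + r^(n:ℝ)*deriv f r)) r := by
    intro r hr
    have hr0 : (0:ℝ) < r := hr
    have key : deriv (deriv v) r
        = -(((n:ℝ)-1)/r * deriv v r) - α * f r - β * (r * deriv f r) := by
      have := hode r hr
      linarith
    have hp : HasDerivAt (fun x : ℝ => x ^ ((n:ℝ)-1)) (((n:ℝ)-1) * r ^ ((n:ℝ)-1-1)) r :=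
      Real.hasDerivAt_rpow_const (Or.inl (ne_of_gt hr0))
    have h2 := hp.mul (hvd2 r hr)
    refine h2.congr_deriv ?_
    rw [key]
    have e1 : r ^ ((n:ℝ)-1-1) = r ^ ((n:ℝ)-1) / r := by
      rw [Real.rpow_sub hr0, Real.rpow_one]
    have e2 : r ^ ((n:ℝ)) = r ^ ((n:ℝ)-1) * r := by
      rw [← Real.rpow_add_one (ne_of_gt hr0)]; ring_nf
    rw [e1, e2]
    field_simp
    ring
  have hψd : ∀ r ∈ Ioi (0:ℝ), HasDerivAt ψ
      ((n:ℝ)*(r^((n:ℝ)-1)*f r) + r^(n:ℝ)*deriv f r) r := by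
    intro r hr
    have hr0 : (0:ℝ) < r := hr
    have hp : HasDerivAt (fun x : ℝ => x ^ ((n:ℝ))) ((n:ℝ) * r ^ ((n:ℝ)-1)) r :=
      Real.hasDerivAt_rpow_const (Or.inl (ne_of_gt hr0))
    have h2 := hp.mul (hfd r hr)
    refine h2.congr_deriv ?_
    ring
  have hwd : ∀ r ∈ Ioi (0:ℝ), HasDerivAt w (γ * r ^ (γ-1) * f r + r ^ γ * deriv f r) r := by
    intro r hr
    have hr0 : (0:ℝ) < r := hr
    have hp : HasDerivAt (fun x : ℝ => x ^ γ) (γ * r ^ (γ-1)) r :=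
      Real.hasDerivAt_rpow_const (Or.inl (ne_of_gt hr0))
    exact hp.mul (hfd r hr)
  -- asymptotics of f
  have hasym : ∀ ε : ℝ, 0 < ε → ∃ δ : ℝ, 0 < δ ∧ ∀ s, 0 < s → s < δ →
      |s ^ γ * f s - η| < ε := by
    intro ε hε
    rcases Metric.tendsto_nhdsWithin_nhds.1 hlim ε hε with ⟨δ, hδ, hdd⟩
    refine ⟨δ, hδ, fun s hs hsd => ?_⟩
    have := hdd (x := s) hs (by simpa [Real.dist_eq, abs_of_pos hs] using hsd)
    simpa [Real.dist_eq] using this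
  have hpne : (n:ℝ)-1-γ ≠ -1 := by intro h; linarith
  have hfb : ∀ ε δ' : ℝ, (∀ s, 0 < s → s < δ' → |s ^ γ * f s - η| < ε) →
      ∀ s, 0 < s → s < δ' →
      (η-ε) * s^((n:ℝ)-1-γ) ≤ s^((n:ℝ)-1)*f s ∧ s^((n:ℝ)-1)*f s ≤ (η+ε) * s^((n:ℝ)-1-γ) := by
    intro ε δ' hδf s hs hsδ
    have hsp : 0 < s^((n:ℝ)-1-γ) := Real.rpow_pos_of_pos hs _
    have heq : s^((n:ℝ)-1)*f s = s^((n:ℝ)-1-γ) * (s^γ * f s) := by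
      rw [← mul_assoc, ← Real.rpow_add hs, show (n:ℝ)-1-γ+γ = (n:ℝ)-1 by ring]
    have h1 := abs_lt.1 (hδf s hs hsδ)
    constructor
    · rw [heq]; nlinarith [h1.1]
    · rw [heq]; nlinarith [h1.2]
  have hh_cont : ContinuousOn (fun s : ℝ => s^((n:ℝ)-1) * f s) (Ioi 0) :=
    (my_cont_rpow _).mul hfc
  -- key integral identity
  have key1 : ∀ a b : ℝ, 0 < a → a ≤ b → G b - G a
      = -((α-(n:ℝ)*β) * ∫ s in a..b, s^((n:ℝ)-1)*f s) - β * (ψ b - ψ a) := by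
    have hh_cont : ContinuousOn (fun s : ℝ => s^((n:ℝ)-1) * f s) (Ioi 0) :=
      (my_cont_rpow _).mul hfc
    have hψd_cont : ContinuousOn
        (fun s : ℝ => (n:ℝ)*(s^((n:ℝ)-1)*f s) + s^(n:ℝ)*deriv f s) (Ioi 0) :=
      (continuousOn_const.mul hh_cont).add ((my_cont_rpow _).mul hfc')
    have hG'_cont : ContinuousOn (fun s : ℝ => -((α-(n:ℝ)*β) * (s ^ ((n:ℝ)-1) * f s))
        - β*((n:ℝ)*(s^((n:ℝ)-1)*f s) + s^(n:ℝ)*deriv f s)) (Ioi 0) :=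
      ((continuousOn_const.mul hh_cont).neg).sub (continuousOn_const.mul hψd_cont)
    intro a b ha hab
    have e1 := my_ftc hGd hG'_cont ha hab
    have e2 := my_ftc hψd hψd_cont ha hab
    have i1 : IntervalIntegrable (fun s : ℝ => s^((n:ℝ)-1) * f s) volume a b :=
      my_intble hh_cont ha hab
    have i2 : IntervalIntegrable
        (fun s : ℝ => (n:ℝ)*(s^((n:ℝ)-1)*f s) + s^(n:ℝ)*deriv f s) volume a b :=
      my_intble hψd_cont ha hab
    calc G b - G a
        = ∫ s in a..b, (-((α-(n:ℝ)*β) * (s ^ ((n:ℝ)-1) * f s))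
            - β*((n:ℝ)*(s^((n:ℝ)-1)*f s) + s^(n:ℝ)*deriv f s)) := e1.symm
      _ = ∫ s in a..b, ((-(α-(n:ℝ)*β)) * (s^((n:ℝ)-1)*f s)
            + (-β) * ((n:ℝ)*(s^((n:ℝ)-1)*f s) + s^(n:ℝ)*deriv f s)) :=
          intervalIntegral.integral_congr (fun s _ => by ring)
      _ = (-(α-(n:ℝ)*β)) * (∫ s in a..b, s^((n:ℝ)-1)*f s)
            + (-β) * ∫ s in a..b, ((n:ℝ)*(s^((n:ℝ)-1)*f s) + s^(n:ℝ)*deriv f s) := by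
          rw [intervalIntegral.integral_add (i1.const_mul _) (i2.const_mul _),
            intervalIntegral.integral_const_mul, intervalIntegral.integral_const_mul]
      _ = -((α-(n:ℝ)*β) * ∫ s in a..b, s^((n:ℝ)-1)*f s) - β * (ψ b - ψ a) := by
          rw [e2]; ring
  -- limits of auxiliary quantities
  have hγm : γ * m = γ - 2 := by rw [hγ]; field_simp; ring
  have hrpow0 : Tendsto (fun r : ℝ => r^((n:ℝ)-γ)) (nhdsWithin 0 (Ioi 0)) (nhds 0) := by
    have hc := (Real.continuousAt_rpow_const 0 ((n:ℝ)-γ) (Or.inr (by linarith))).tendsto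
    rw [Real.zero_rpow (by linarith : (n:ℝ)-γ ≠ 0)] at hc
    exact hc.mono_left nhdsWithin_le_nhds
  have hψ0 : Tendsto ψ (nhdsWithin 0 (Ioi 0)) (nhds 0) := by
    have h2 := hrpow0.mul hlim
    rw [zero_mul] at h2
    apply h2.congr'
    filter_upwards [self_mem_nhdsWithin] with r hr
    have hr0 : (0:ℝ) < r := hr
    simp only [hwdef, hψdef]
    rw [← mul_assoc, ← Real.rpow_add hr0]
    ring_nf
  have hr2v : Tendsto (fun r => r^((n:ℝ)-2) * v r) (nhdsWithin 0 (Ioi 0)) (nhds 0) := by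
    have h2 : Tendsto (fun r => (w r) ^ m) (nhdsWithin 0 (Ioi 0)) (nhds (η ^ m)) :=
      hlim.rpow_const (Or.inl (ne_of_gt hη))
    have h3 := (hrpow0.mul h2).div_const m
    rw [zero_mul, zero_div] at h3
    apply h3.congr'
    filter_upwards [self_mem_nhdsWithin] with r hr
    have hr0 : (0:ℝ) < r := hr
    have hf0 : 0 ≤ f r := le_of_lt (hpos r hr)
    simp only [hwdef, hvdef]
    rw [Real.mul_rpow (le_of_lt (Real.rpow_pos_of_pos hr0 γ)) hf0,
      ← Real.rpow_mul (le_of_lt hr0), hγm, ← mul_assoc,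
      ← Real.rpow_add hr0, show (n:ℝ)-γ+(γ-2) = (n:ℝ)-2 by ring]
    ring
  -- existence of limit of G
  set A : ℝ → ℝ := fun r => ∫ s in r..(1:ℝ), s^((n:ℝ)-1)*f s with hAdef
  have hGlim : ∃ C : ℝ, Tendsto G (nhdsWithin 0 (Ioi 0)) (nhds C) ∧
      Tendsto A (nhdsWithin 0 (Ioi 0)) (nhds (sSup (A '' Ioo 0 1))) ∧
      (∀ a b : ℝ, 0 < a → a ≤ b → b ≤ 1 →
        A a = (∫ s in a..b, s^((n:ℝ)-1)*f s) + A b) := by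
    have hhpos : ∀ s, 0 < s → 0 ≤ s^((n:ℝ)-1) * f s := fun s hs =>
      le_of_lt (mul_pos (Real.rpow_pos_of_pos hs _) (hpos s hs))
    have hsplitA : ∀ a b : ℝ, 0 < a → a ≤ b → b ≤ 1 →
        A a = (∫ s in a..b, s^((n:ℝ)-1)*f s) + A b := fun a b ha hab hb1 =>
      (intervalIntegral.integral_add_adjacent_intervals (my_intble hh_cont ha hab)
        (my_intble hh_cont (lt_of_lt_of_le ha hab) hb1)).symm
    have hintnn : ∀ a b : ℝ, 0 < a → a ≤ b → 0 ≤ ∫ s in a..b, s^((n:ℝ)-1)*f s := by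
      intro a b ha hab
      apply intervalIntegral.integral_nonneg hab
      intro u hu; exact hhpos u (lt_of_lt_of_le ha hu.1)
    have hanti : AntitoneOn A (Ioo (0:ℝ) 1) := by
      intro a ha b hb hab
      rw [hsplitA a b ha.1 hab (le_of_lt hb.2)]
      have := hintnn a b ha.1 hab
      linarith
    obtain ⟨δ, hδ, hδf⟩ := hasym 1 one_pos
    set δ₀ : ℝ := min (δ/2) (1/2) with hδ₀def
    have hδ₀pos : 0 < δ₀ := lt_min (by linarith) (by norm_num)
    have hδ₀δ : δ₀ < δ := lt_of_le_of_lt (min_le_left _ _) (by linarith)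
    have hδ₀1 : δ₀ ≤ 1 := le_trans (min_le_right _ _) (by norm_num)
    have hq : (0:ℝ) < (n:ℝ)-γ := by linarith
    have hbd : BddAbove (A '' Ioo 0 1) := by
      refine ⟨A δ₀ + (η+1) * (δ₀^((n:ℝ)-γ))/((n:ℝ)-γ), ?_⟩
      rintro x ⟨r, hr, rfl⟩
      have hnn : 0 ≤ (η+1) * (δ₀^((n:ℝ)-γ))/((n:ℝ)-γ) := by positivity
      by_cases hc : δ₀ ≤ r
      · have h1 := hsplitA δ₀ r hδ₀pos hc (le_of_lt hr.2)
        have h2 := hintnn δ₀ r hδ₀pos hc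
        linarith
      · push_neg at hc
        rw [hsplitA r δ₀ hr.1 (le_of_lt hc) hδ₀1]
        have hb := my_int_le (p := (n:ℝ)-1-γ) (c := η+1) hh_cont hpne hr.1 (le_of_lt hc)
          (fun s hs1 hs2 => (hfb 1 δ hδf s (lt_of_lt_of_le hr.1 hs1)
            (lt_of_le_of_lt hs2 hδ₀δ)).2)
        rw [show (n:ℝ)-1-γ+1 = (n:ℝ)-γ by ring] at hb
        have hrq : 0 ≤ r^((n:ℝ)-γ) := Real.rpow_nonneg (le_of_lt hr.1) _
        have h3 : (η+1) * ((δ₀^((n:ℝ)-γ) - r^((n:ℝ)-γ))/((n:ℝ)-γ))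
            ≤ (η+1) * (δ₀^((n:ℝ)-γ))/((n:ℝ)-γ) := by
          rw [mul_div_assoc]
          gcongr
          linarith
        linarith
    have hAlim' : Tendsto A (nhdsWithin 0 (Ioi 0)) (nhds (sSup (A '' Ioo 0 1))) := by
      have h := (hanti.tendsto_nhdsWithin_Ioo_right ⟨1/2, by norm_num⟩ hbd)
      apply h.congr'
      filter_upwards [self_mem_nhdsWithin] with r hr
      rfl
    refine ⟨G 1 + β * ψ 1 + (α-(n:ℝ)*β) * sSup (A '' Ioo 0 1) - β * 0, ?_, hAlim', hsplitA⟩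
    have hcomb := ((tendsto_const_nhds (x := G 1 + β * ψ 1)).add
      (hAlim'.const_mul (α-(n:ℝ)*β))).sub (hψ0.const_mul β)
    apply hcomb.congr'
    filter_upwards [Ioo_mem_nhdsGT_of_mem (by constructor <;> norm_num : (0:ℝ) ∈ Ico 0 1)]
      with r hr
    have hk := key1 r 1 hr.1 (le_of_lt hr.2)
    show G 1 + β * ψ 1 + (α-(n:ℝ)*β) * A r - β * ψ r = G r
    linarith
  obtain ⟨C, hC, hAlim, hsplitA⟩ := hGlim
  -- C = 0
  have hrpow0' : ∀ q : ℝ, 0 < q → Tendsto (fun r : ℝ => r^q) (nhdsWithin 0 (Ioi 0)) (nhds 0) := by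
    intro q hq
    have hc := (Real.continuousAt_rpow_const 0 q (Or.inr (le_of_lt hq))).tendsto
    rw [Real.zero_rpow (ne_of_gt hq)] at hc
    exact hc.mono_left nhdsWithin_le_nhds
  have hvd' : ∀ r ∈ Ioi (0:ℝ), HasDerivAt v (deriv v r) r := fun r hr =>
    (hdv r hr) ▸ hvdf r hr
  have hvpos : ∀ s, 0 < s → 0 < v s := fun s hs =>
    div_pos (Real.rpow_pos_of_pos (hpos s hs) m) hm0
  have hGvderiv : ∀ s, 0 < s → deriv v s = s^(1-(n:ℝ)) * G s := by
    intro s hs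
    simp only [hGdef]
    rw [← mul_assoc, ← Real.rpow_add hs, show 1-(n:ℝ)+((n:ℝ)-1) = 0 by ring,
      Real.rpow_zero, one_mul]
  have hp1n : (1:ℝ)-(n:ℝ) ≠ -1 := by intro hcon; linarith
  have hC0 : C = 0 := by
    by_contra hC0
    rcases lt_or_gt_of_ne hC0 with hneg | hposC
    · -- C < 0 : v would grow like r^{2-n}, contradicting r^{n-2} v r → 0
      have hev : ∀ᶠ s in nhdsWithin (0:ℝ) (Ioi 0), G s < C/2 :=
        hC.eventually (eventually_lt_nhds (by linarith : C < C/2))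
      obtain ⟨u, hu, hsub⟩ := mem_nhdsGT_iff_exists_Ioo_subset.1 hev
      have hu0 : (0:ℝ) < u := hu
      set b : ℝ := u/2 with hbdef
      have hb0 : (0:ℝ) < b := by positivity
      have hG2 : ∀ s, 0 < s → s ≤ b → G s < C/2 := fun s h1 h2 =>
        hsub ⟨h1, lt_of_le_of_lt h2 (by simpa [hbdef] using half_lt_self hu0)⟩
      have hineq : ∀ r, 0 < r → r ≤ b →
          r^((n:ℝ)-2) * v b + C/2 * ((r^((n:ℝ)-2) * b^(2-(n:ℝ)) - 1)/((n:ℝ)-2))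
            ≤ r^((n:ℝ)-2) * v r := by
        intro r hr hrb
        have hInt := my_int_le (p := 1-(n:ℝ)) (c := C/2) hvc' hp1n hr hrb
          (fun s hs1 hs2 => by
            have hs0 : 0 < s := lt_of_lt_of_le hr hs1
            have hsp : 0 < s^(1-(n:ℝ)) := Real.rpow_pos_of_pos hs0 _
            rw [hGvderiv s hs0]
            nlinarith [hG2 s hs0 (le_trans hs2 (le_refl b))])
        rw [my_ftc hvd' hvc' hr hrb, show 1-(n:ℝ)+1 = 2-(n:ℝ) by ring] at hInt
        have hP : 0 < r^((n:ℝ)-2) := Real.rpow_pos_of_pos hr _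
        have hPr : r^((n:ℝ)-2) * r^(2-(n:ℝ)) = 1 := by
          rw [← Real.rpow_add hr, show (n:ℝ)-2+(2-(n:ℝ)) = 0 by ring, Real.rpow_zero]
        have hne1 : ((n:ℝ)-2) ≠ 0 := by linarith
        have hne2 : ((2:ℝ)-(n:ℝ)) ≠ 0 := by linarith
        have hInt2 : v b - v r ≤ -(C/2 * (b^(2-(n:ℝ)) * (((n:ℝ)-2)⁻¹)))
            + C/2 * (r^(2-(n:ℝ)) * (((n:ℝ)-2)⁻¹)) := by
          refine le_trans hInt (le_of_eq ?_)
          field_simp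
          ring
        have hmul := mul_le_mul_of_nonneg_left hInt2 (le_of_lt hP)
        have hPr' : C/2 * (((n:ℝ)-2)⁻¹ * (r^((n:ℝ)-2) * r^(2-(n:ℝ))))
            = C/2 * ((n:ℝ)-2)⁻¹ := by rw [hPr]; ring
        have hexp : r^((n:ℝ)-2) * (-(C/2 * (b^(2-(n:ℝ)) * (((n:ℝ)-2)⁻¹)))
            + C/2 * (r^(2-(n:ℝ)) * (((n:ℝ)-2)⁻¹)))
            = -(C/2 * (b^(2-(n:ℝ)) * (((n:ℝ)-2)⁻¹)) * r^((n:ℝ)-2))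
              + C/2 * (((n:ℝ)-2)⁻¹ * (r^((n:ℝ)-2) * r^(2-(n:ℝ)))) := by ring
        rw [hexp, hPr'] at hmul
        rw [div_eq_mul_inv _ ((n:ℝ)-2)]
        set t : ℝ := ((n:ℝ)-2)⁻¹ with htdef
        set bq : ℝ := b ^ (2-(n:ℝ)) with hbqdef
        linarith [hmul]
      have hg : Tendsto (fun r : ℝ => r^((n:ℝ)-2) * v b
          + C/2 * ((r^((n:ℝ)-2) * b^(2-(n:ℝ)) - 1)/((n:ℝ)-2))) (nhdsWithin 0 (Ioi 0))
          (nhds (0 * v b + C/2 * ((0 * b^(2-(n:ℝ)) - 1)/((n:ℝ)-2)))) := by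
        apply Tendsto.add
        · exact (hrpow0' _ (by linarith)).mul_const _
        · exact Tendsto.const_mul _
            ((((hrpow0' _ (by linarith)).mul_const _).sub_const 1).div_const _)
      have hle := le_of_tendsto_of_tendsto hg hr2v ?_
      · have heq : 0 * v b + C/2 * ((0 * b^(2-(n:ℝ)) - 1)/((n:ℝ)-2))
            = -(C/2) * (((n:ℝ)-2)⁻¹) := by
          rw [zero_mul, zero_mul]; ring
        rw [heq] at hle
        have hpp : 0 < -(C/2) * (((n:ℝ)-2)⁻¹) :=
          mul_pos (by linarith) (inv_pos.2 (by linarith))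
        linarith
      · filter_upwards [Ioo_mem_nhdsGT_of_mem (left_mem_Ico.2 hb0)] with r hr
        exact hineq r hr.1 (le_of_lt hr.2)
    · -- C > 0 : v would become negative
      have hev : ∀ᶠ s in nhdsWithin (0:ℝ) (Ioi 0), C/2 < G s :=
        hC.eventually (eventually_gt_nhds (by linarith : C/2 < C))
      obtain ⟨u, hu, hsub⟩ := mem_nhdsGT_iff_exists_Ioo_subset.1 hev
      have hu0 : (0:ℝ) < u := hu
      set b : ℝ := u/2 with hbdef
      have hb0 : (0:ℝ) < b := by positivity
      have hG2 : ∀ s, 0 < s → s ≤ b → C/2 < G s := fun s h1 h2 =>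
        hsub ⟨h1, lt_of_le_of_lt h2 (by simpa [hbdef] using half_lt_self hu0)⟩
      have heq2 : ∀ X Y : ℝ, C/2 * ((X - Y)/(2-(n:ℝ)))
          = C/2 * (Y * (((n:ℝ)-2)⁻¹)) - C/2 * (X * (((n:ℝ)-2)⁻¹)) := by
        intro X Y
        have hne1 : ((n:ℝ)-2) ≠ 0 := by linarith
        have hne2 : ((2:ℝ)-(n:ℝ)) ≠ 0 := by linarith
        field_simp
        ring
      have hineq : ∀ r, 0 < r → r ≤ b →
          C/2 * (r^(2-(n:ℝ)) * (((n:ℝ)-2)⁻¹))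
            ≤ v b + C/2 * (b^(2-(n:ℝ)) * (((n:ℝ)-2)⁻¹)) := by
        intro r hr hrb
        have hInt := my_le_int (p := 1-(n:ℝ)) (c := C/2) hvc' hp1n hr hrb
          (fun s hs1 hs2 => by
            have hs0 : 0 < s := lt_of_lt_of_le hr hs1
            have hsp : 0 < s^(1-(n:ℝ)) := Real.rpow_pos_of_pos hs0 _
            rw [hGvderiv s hs0]
            nlinarith [hG2 s hs0 hs2])
        rw [my_ftc hvd' hvc' hr hrb, show 1-(n:ℝ)+1 = 2-(n:ℝ) by ring] at hInt
        have hvr := hvpos r hr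
        set t : ℝ := ((n:ℝ)-2)⁻¹ with htdef
        set bq : ℝ := b ^ (2-(n:ℝ)) with hbqdef
        set rq : ℝ := r ^ (2-(n:ℝ)) with hrqdef
        linarith [hInt, heq2 bq rq, hvr]
      have h0 : Tendsto (fun r : ℝ => r^((n:ℝ)-2)) (nhdsWithin 0 (Ioi 0))
          (nhdsWithin 0 (Ioi 0)) := by
        rw [tendsto_nhdsWithin_iff]
        exact ⟨hrpow0' _ (by linarith), by
          filter_upwards [self_mem_nhdsWithin] with r hr
          exact Real.rpow_pos_of_pos hr _⟩
      have htop0 : Tendsto (fun r : ℝ => r^(2-(n:ℝ))) (nhdsWithin 0 (Ioi 0)) atTop := by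
        apply h0.inv_tendsto_nhdsGT_zero.congr'
        filter_upwards [self_mem_nhdsWithin] with r hr
        show (r^((n:ℝ)-2))⁻¹ = r^(2-(n:ℝ))
        rw [← Real.rpow_neg (le_of_lt hr), show -((n:ℝ)-2) = 2-(n:ℝ) by ring]
      have hc2 : 0 < C/2 * (((n:ℝ)-2)⁻¹) :=
        mul_pos (by linarith) (inv_pos.2 (by linarith))
      have htop : Tendsto (fun r : ℝ => C/2 * (r^(2-(n:ℝ)) * (((n:ℝ)-2)⁻¹)))
          (nhdsWithin 0 (Ioi 0)) atTop :=
        (htop0.const_mul_atTop hc2).congr (fun r => by ring)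
      obtain ⟨r, hr1, hr2⟩ := ((htop.eventually_gt_atTop
          (v b + C/2 * (b^(2-(n:ℝ)) * (((n:ℝ)-2)⁻¹)))).and
        (Ioo_mem_nhdsGT_of_mem (left_mem_Ico.2 hb0))).exists
      exact absurd (hineq r hr2.1 (le_of_lt hr2.2)) (not_le.2 hr1)
  rw [hC0] at hC
  -- limit of T
  set T : ℝ → ℝ := fun r => r ^ (γ-(n:ℝ)) * G r with hTdef
  set L : ℝ := -((α-(n:ℝ)*β)*η/((n:ℝ)-γ)) - β*η with hLdef
  set IA : ℝ := sSup (A '' Ioo 0 1) with hIAdef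
  have hq : (0:ℝ) < (n:ℝ) - γ := by linarith
  -- pointwise identity G r + β ψ r = -(α-nβ)(IA - A r) on (0,1)
  have hres : ∀ r, 0 < r → r < 1 → G r + β * ψ r = -((α-(n:ℝ)*β)) * (IA - A r) := by
    intro r hr hr1
    have t1 : Tendsto (fun ρ => G r - G ρ) (nhdsWithin 0 (Ioi 0)) (nhds (G r - 0)) :=
      tendsto_const_nhds.sub hC
    have t2 : Tendsto (fun ρ => -((α-(n:ℝ)*β))*(A ρ - A r) - β*(ψ r - ψ ρ))
        (nhdsWithin 0 (Ioi 0))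
        (nhds (-((α-(n:ℝ)*β))*(IA - A r) - β*(ψ r - 0))) :=
      (((hAlim.sub_const (A r)).const_mul _)).sub ((tendsto_const_nhds.sub hψ0).const_mul β)
    have t1' : Tendsto (fun ρ => -((α-(n:ℝ)*β))*(A ρ - A r) - β*(ψ r - ψ ρ))
        (nhdsWithin 0 (Ioi 0)) (nhds (G r - 0)) := by
      apply t1.congr'
      filter_upwards [Ioo_mem_nhdsGT_of_mem (left_mem_Ico.2 hr)] with ρ hρ
      have hk := key1 ρ r hρ.1 (le_of_lt hρ.2)
      have hsp := hsplitA ρ r hρ.1 (le_of_lt hρ.2) (le_of_lt hr1)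
      have : (∫ s in ρ..r, s^((n:ℝ)-1)*f s) = A ρ - A r := by linarith
      rw [this] at hk
      linarith
    have := tendsto_nhds_unique t1' t2
    linarith
  -- sandwich for IA - A r
  have hS : ∀ ε : ℝ, 0 < ε → ∀ δ : ℝ, 0 < δ →
      (∀ s, 0 < s → s < δ → |s ^ γ * f s - η| < ε) →
      ∀ r, 0 < r → r < δ → r < 1 →
      (η-ε)*((r^((n:ℝ)-γ) - 0)/((n:ℝ)-γ)) ≤ IA - A r ∧
        IA - A r ≤ (η+ε)*((r^((n:ℝ)-γ) - 0)/((n:ℝ)-γ)) := by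
    intro ε hε δ hδ hδf r hr hrδ hr1
    have tA : Tendsto (fun ρ => A ρ - A r) (nhdsWithin 0 (Ioi 0)) (nhds (IA - A r)) :=
      hAlim.sub_const (A r)
    have tlb : Tendsto (fun ρ : ℝ => (η-ε)*((r^((n:ℝ)-γ) - ρ^((n:ℝ)-γ))/((n:ℝ)-γ)))
        (nhdsWithin 0 (Ioi 0))
        (nhds ((η-ε)*((r^((n:ℝ)-γ) - 0)/((n:ℝ)-γ)))) :=
      (((tendsto_const_nhds.sub (hrpow0' _ hq)).div_const _).const_mul _)
    have tub : Tendsto (fun ρ : ℝ => (η+ε)*((r^((n:ℝ)-γ) - ρ^((n:ℝ)-γ))/((n:ℝ)-γ)))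
        (nhdsWithin 0 (Ioi 0))
        (nhds ((η+ε)*((r^((n:ℝ)-γ) - 0)/((n:ℝ)-γ)))) :=
      (((tendsto_const_nhds.sub (hrpow0' _ hq)).div_const _).const_mul _)
    constructor
    · refine le_of_tendsto_of_tendsto tlb tA ?_
      filter_upwards [Ioo_mem_nhdsGT_of_mem (left_mem_Ico.2 hr)] with ρ hρ
      have hsp := hsplitA ρ r hρ.1 (le_of_lt hρ.2) (le_of_lt hr1)
      have hb := my_le_int (p := (n:ℝ)-1-γ) (c := η-ε) hh_cont hpne hρ.1 (le_of_lt hρ.2)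
        (fun s hs1 hs2 => (hfb ε δ hδf s (lt_of_lt_of_le hρ.1 hs1)
          (lt_of_le_of_lt hs2 hrδ)).1)
      rw [show (n:ℝ)-1-γ+1 = (n:ℝ)-γ by ring] at hb
      have he : (∫ s in ρ..r, s^((n:ℝ)-1)*f s) = A ρ - A r := by linarith
      rw [he] at hb
      exact hb
    · refine le_of_tendsto_of_tendsto tA tub ?_
      filter_upwards [Ioo_mem_nhdsGT_of_mem (left_mem_Ico.2 hr)] with ρ hρ
      have hsp := hsplitA ρ r hρ.1 (le_of_lt hρ.2) (le_of_lt hr1)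
      have hb := my_int_le (p := (n:ℝ)-1-γ) (c := η+ε) hh_cont hpne hρ.1 (le_of_lt hρ.2)
        (fun s hs1 hs2 => (hfb ε δ hδf s (lt_of_lt_of_le hρ.1 hs1)
          (lt_of_le_of_lt hs2 hrδ)).2)
      rw [show (n:ℝ)-1-γ+1 = (n:ℝ)-γ by ring] at hb
      have he : (∫ s in ρ..r, s^((n:ℝ)-1)*f s) = A ρ - A r := by linarith
      rw [he] at hb
      exact hb
  have hT : Tendsto T (nhdsWithin 0 (Ioi 0)) (nhds L) := by
    have hRS : Tendsto (fun r => r^(γ-(n:ℝ)) * (IA - A r)) (nhdsWithin 0 (Ioi 0))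
        (nhds (η/((n:ℝ)-γ))) := by
      rw [Metric.tendsto_nhdsWithin_nhds]
      intro ε₀ hε₀
      set ε : ℝ := (((n:ℝ)-γ) * ε₀) / 2 with hεdef
      have hεpos : 0 < ε := div_pos (mul_pos hq hε₀) two_pos
      obtain ⟨δ, hδpos, hδf⟩ := hasym ε hεpos
      refine ⟨min δ 1, lt_min hδpos one_pos, ?_⟩
      intro r hrmem hrdist
      have hr0 : (0:ℝ) < r := hrmem
      have hrd : r < min δ 1 := by rwa [Real.dist_eq, sub_zero, abs_of_pos hr0] at hrdist
      obtain ⟨hs1, hs2⟩ := hS ε hεpos δ hδpos hδf r hr0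
        (lt_of_lt_of_le hrd (min_le_left _ _)) (lt_of_lt_of_le hrd (min_le_right _ _))
      have hR0 : (0:ℝ) < r^(γ-(n:ℝ)) := Real.rpow_pos_of_pos hr0 _
      have hRrr : r^(γ-(n:ℝ)) * r^((n:ℝ)-γ) = 1 := by
        rw [← Real.rpow_add hr0, show γ-(n:ℝ)+((n:ℝ)-γ) = 0 by ring, Real.rpow_zero]
      have h1 := mul_le_mul_of_nonneg_left hs1 (le_of_lt hR0)
      have h2 := mul_le_mul_of_nonneg_left hs2 (le_of_lt hR0)
      rw [Real.dist_eq]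
      set R : ℝ := r^(γ-(n:ℝ)) with hRdef
      set rr : ℝ := r^((n:ℝ)-γ) with hrrdef
      have e1 : R*((η-ε)*((rr - 0)/((n:ℝ)-γ))) = (η-ε)*(R*rr)/((n:ℝ)-γ) := by ring
      have e2 : R*((η+ε)*((rr - 0)/((n:ℝ)-γ))) = (η+ε)*(R*rr)/((n:ℝ)-γ) := by ring
      rw [e1, hRrr] at h1
      rw [e2, hRrr] at h2
      have hεq : ε/((n:ℝ)-γ) < ε₀ := by
        rw [hεdef, div_div, div_lt_iff₀ (by positivity : (0:ℝ) < 2*((n:ℝ)-γ))]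
        nlinarith [mul_pos hq hε₀]
      rw [abs_lt]
      constructor
      · have e3 : (η-ε)*1/((n:ℝ)-γ) = η/((n:ℝ)-γ) - ε/((n:ℝ)-γ) := by ring
        rw [e3] at h1
        linarith
      · have e4 : (η+ε)*1/((n:ℝ)-γ) = η/((n:ℝ)-γ) + ε/((n:ℝ)-γ) := by ring
        rw [e4] at h2
        linarith
    have hψrel : ∀ r, 0 < r → r^(γ-(n:ℝ)) * ψ r = r ^ γ * f r := by
      intro r hr0
      simp only [hψdef]
      rw [← mul_assoc, ← Real.rpow_add hr0, show γ-(n:ℝ)+(n:ℝ) = γ by ring]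
    have hTβ : Tendsto (fun r => T r + β * w r) (nhdsWithin 0 (Ioi 0))
        (nhds (-((α-(n:ℝ)*β)) * (η/((n:ℝ)-γ)))) := by
      apply (hRS.const_mul (-((α-(n:ℝ)*β)))).congr'
      filter_upwards [Ioo_mem_nhdsGT_of_mem (by constructor <;> norm_num : (0:ℝ) ∈ Ico 0 1)]
        with r hr
      have hr0 : (0:ℝ) < r := hr.1
      have h := hres r hr.1 hr.2
      simp only [hTdef, hwdef]
      rw [← hψrel r hr0]
      set R : ℝ := r^(γ-(n:ℝ)) with hRdef
      linear_combination (-R) * h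
    have h2 := hTβ.sub (hlim.const_mul β)
    have h3 : Tendsto T (nhdsWithin 0 (Ioi 0))
        (nhds (-((α-(n:ℝ)*β)) * (η/((n:ℝ)-γ)) - β*η)) :=
      h2.congr (fun r => by ring)
    rwa [show -((α-(n:ℝ)*β)) * (η/((n:ℝ)-γ)) - β*η = L by rw [hLdef]; ring] at h3
  -- limit of r * w'
  set K : ℝ := γ*η + η^(1-m) * L with hKdef
  have hrw : Tendsto (fun r => r * deriv w r) (nhdsWithin 0 (Ioi 0)) (nhds K) := by
    have hwid : ∀ r ∈ Ioi (0:ℝ), r * deriv w r = γ * w r + (w r)^(1-m) * T r := by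
      intro r hr
      have hr0 : (0:ℝ) < r := hr
      have hfr := hpos r hr
      have hdw : deriv w r = γ * r^(γ-1) * f r + r^γ * deriv f r := (hwd r hr).deriv
      have e1 : (w r)^(1-m) = r^((2:ℝ)) * (f r)^(1-m) := by
        simp only [hwdef]
        rw [Real.mul_rpow (Real.rpow_nonneg (le_of_lt hr0) _) (le_of_lt hfr),
          ← Real.rpow_mul (le_of_lt hr0),
          show γ*(1-m) = (2:ℝ) by rw [hγ]; field_simp]
      have e2 : T r = r^(γ-1) * ((f r)^(m-1) * deriv f r) := by
        simp only [hTdef, hGdef]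
        rw [hdv r hr, ← mul_assoc, ← Real.rpow_add hr0,
          show γ-(n:ℝ)+((n:ℝ)-1) = γ-1 by ring]
      have e3 : (f r)^(1-m) * (f r)^(m-1) = 1 := by
        rw [← Real.rpow_add hfr]
        norm_num
      have e4 : r * r^(γ-1) = r^γ := by
        have h := Real.rpow_add hr0 1 (γ-1)
        rw [Real.rpow_one, show (1:ℝ)+(γ-1) = γ by ring] at h
        exact h.symm
      have e5 : r^((2:ℝ)) * r^(γ-1) = r^(γ+1) := by
        rw [← Real.rpow_add hr0, show (2:ℝ)+(γ-1) = γ+1 by ring]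
      have e6 : r * r^γ = r^(γ+1) := by
        have h := Real.rpow_add hr0 1 γ
        rw [Real.rpow_one, show (1:ℝ)+γ = γ+1 by ring] at h
        exact h.symm
      rw [hdw, e1, e2,
        show r^((2:ℝ))*(f r)^(1-m) * (r^(γ-1)*((f r)^(m-1)*deriv f r))
          = (r^((2:ℝ))*r^(γ-1)) * ((f r)^(1-m)*(f r)^(m-1)) * deriv f r by ring,
        e5, e3, mul_one]
      simp only [hwdef]
      linear_combination (γ * f r) * e4 + deriv f r * e6
    have hw1m : Tendsto (fun r => (w r)^(1-m)) (nhdsWithin 0 (Ioi 0)) (nhds (η^(1-m))) :=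
      hlim.rpow_const (Or.inl (ne_of_gt hη))
    have hcomb := (hlim.const_mul γ).add (hw1m.mul hT)
    rw [hKdef]
    apply hcomb.congr'
    filter_upwards [self_mem_nhdsWithin] with r hr
    exact (hwid r hr).symm
  have hwc' : ContinuousOn (deriv w) (Ioi 0) := by
    apply ContinuousOn.congr (((continuousOn_const.mul (my_cont_rpow (γ-1))).mul hfc).add
      ((my_cont_rpow γ).mul hfc'))
    exact fun r hr => (hwd r hr).deriv
  have hwd' : ∀ r ∈ Ioi (0:ℝ), HasDerivAt w (deriv w r) r := fun r hr =>
    ((hwd r hr).deriv) ▸ hwd r hr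
  have hbdd : ∀ᶠ r in nhdsWithin (0:ℝ) (Ioi 0), |w r - η| < 1 := by
    have := Metric.tendsto_nhds.1 hlim 1 one_pos
    simpa [Real.dist_eq] using this
  have hK0 : K = 0 := by
    by_contra hK0
    rcases lt_or_gt_of_ne hK0 with hneg | hposK
    · -- K < 0 : w blows up like -(K/2) log(1/r)
      have hev : ∀ᶠ s in nhdsWithin (0:ℝ) (Ioi 0), s * deriv w s < K/2 :=
        hrw.eventually (eventually_lt_nhds (by linarith : K < K/2))
      obtain ⟨u, hu, hsub⟩ := mem_nhdsGT_iff_exists_Ioo_subset.1 hev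
      have hu0 : (0:ℝ) < u := hu
      set b : ℝ := u/2 with hbdef
      have hb0 : (0:ℝ) < b := by positivity
      have hG2 : ∀ s, 0 < s → s ≤ b → s * deriv w s < K/2 := fun s h1 h2 =>
        hsub ⟨h1, lt_of_le_of_lt h2 (by simpa [hbdef] using half_lt_self hu0)⟩
      have hineq : ∀ r, 0 < r → r ≤ b → w b + (-(K/2)) * Real.log (b/r) ≤ w r := by
        intro r hr hrb
        have hInt := my_int_le_div (c := K/2) hwc' hr hrb
          (fun s hs1 hs2 => by
            have hs0 : 0 < s := lt_of_lt_of_le hr hs1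
            have hh := hG2 s hs0 hs2
            rw [show K/2*(1/s) = (K/2)/s by ring, le_div_iff₀ hs0]
            nlinarith)
        rw [my_ftc hwd' hwc' hr hrb] at hInt
        linarith
      have hlog : Tendsto (fun r : ℝ => Real.log (b/r)) (nhdsWithin 0 (Ioi 0)) atTop := by
        have h1 : Tendsto (fun r : ℝ => -Real.log r) (nhdsWithin 0 (Ioi 0)) atTop :=
          tendsto_neg_atBot_atTop.comp Real.tendsto_log_nhdsGT_zero
        have h2 := tendsto_atTop_add_const_left _ (Real.log b) h1
        apply h2.congr'
        filter_upwards [self_mem_nhdsWithin] with r hr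
        rw [Real.log_div (ne_of_gt hb0) (ne_of_gt hr)]
        ring
      have htop2 : Tendsto (fun r : ℝ => w b + (-(K/2)) * Real.log (b/r))
          (nhdsWithin 0 (Ioi 0)) atTop :=
        tendsto_atTop_add_const_left _ (w b)
          (hlog.const_mul_atTop (by linarith : (0:ℝ) < -(K/2)))
      obtain ⟨r, h1, h2, h3⟩ := ((htop2.eventually_gt_atTop (η+1)).and
        (hbdd.and (Ioo_mem_nhdsGT_of_mem (left_mem_Ico.2 hb0)))).exists
      have hi := hineq r h3.1 (le_of_lt h3.2)
      have habs := abs_lt.1 h2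
      linarith
    · -- K > 0 : w goes to -∞ like -(K/2) log(1/r)
      have hev : ∀ᶠ s in nhdsWithin (0:ℝ) (Ioi 0), K/2 < s * deriv w s :=
        hrw.eventually (eventually_gt_nhds (by linarith : K/2 < K))
      obtain ⟨u, hu, hsub⟩ := mem_nhdsGT_iff_exists_Ioo_subset.1 hev
      have hu0 : (0:ℝ) < u := hu
      set b : ℝ := u/2 with hbdef
      have hb0 : (0:ℝ) < b := by positivity
      have hG2 : ∀ s, 0 < s → s ≤ b → K/2 < s * deriv w s := fun s h1 h2 =>
        hsub ⟨h1, lt_of_le_of_lt h2 (by simpa [hbdef] using half_lt_self hu0)⟩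
      have hineq : ∀ r, 0 < r → r ≤ b → w r ≤ w b + (-(K/2)) * Real.log (b/r) := by
        intro r hr hrb
        have hInt := my_le_int_div (c := K/2) hwc' hr hrb
          (fun s hs1 hs2 => by
            have hs0 : 0 < s := lt_of_lt_of_le hr hs1
            have hh := hG2 s hs0 hs2
            rw [show K/2*(1/s) = (K/2)/s by ring, div_le_iff₀ hs0]
            nlinarith)
        rw [my_ftc hwd' hwc' hr hrb] at hInt
        linarith
      have hlog : Tendsto (fun r : ℝ => Real.log (b/r)) (nhdsWithin 0 (Ioi 0)) atTop := by
        have h1 : Tendsto (fun r : ℝ => -Real.log r) (nhdsWithin 0 (Ioi 0)) atTop :=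
          tendsto_neg_atBot_atTop.comp Real.tendsto_log_nhdsGT_zero
        have h2 := tendsto_atTop_add_const_left _ (Real.log b) h1
        apply h2.congr'
        filter_upwards [self_mem_nhdsWithin] with r hr
        rw [Real.log_div (ne_of_gt hb0) (ne_of_gt hr)]
        ring
      have hbot2 : Tendsto (fun r : ℝ => w b + (-(K/2)) * Real.log (b/r))
          (nhdsWithin 0 (Ioi 0)) atBot := by
        have h3 : Tendsto (fun r : ℝ => -((K/2) * Real.log (b/r)))
            (nhdsWithin 0 (Ioi 0)) atBot :=
          tendsto_neg_atTop_atBot.comp (hlog.const_mul_atTop (by linarith : (0:ℝ) < K/2))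
        have h4 := tendsto_atBot_add_const_left _ (w b) h3
        exact h4.congr (fun r => by ring)
      obtain ⟨r, h1, h2, h3⟩ := ((hbot2.eventually_lt_atBot (η-1)).and
        (hbdd.and (Ioo_mem_nhdsGT_of_mem (left_mem_Ico.2 hb0)))).exists
      have hi := hineq r h3.1 (le_of_lt h3.2)
      have habs := abs_lt.1 h2
      linarith
  -- final algebra
  have hX : (0:ℝ) < η ^ (1-m) := Real.rpow_pos_of_pos hη _
  have hfin : (α - γ*β) * η^(1-m) = γ*((n:ℝ)-γ) := by
    have hnγ : (n:ℝ) - γ ≠ 0 := by linarith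
    have hη' : η ≠ 0 := ne_of_gt hη
    rw [hKdef, hLdef] at hK0
    field_simp at hK0
    nlinarith [hK0, hX]
  have h2 : α - 2*β/(1-m) = α - γ*β := by rw [hγ]; ring
  rw [h2, hfin, hγ]
  field_simp
  ring
end

section
/- Let n ≥ 3 be an integer, 0 < m < (n-2)/n, γ > 0 with γ ≠ 2/(1-m) and η > 0. Suppose α ∈ ℝ and β ≠ 0 satisfy either α = (2β − 1)/(1-m) or α = (2β + 1)/(1-m), and suppose γ ≠ α/β. Then there does not exist any radially symmetric solution f of Δ(f^m/m) + αf + βx·∇f = 0, f > 0, in ℝ^n \ {0} satisfying lim_{r→0⁺} r^γ f(r) = η. -/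
open Set Filter

open Real

set_option maxHeartbeats 1000000


lemma tendsto_rpow_pos_zero0 {e : ℝ} (he : 0 < e) :
    Tendsto (fun r : ℝ => r ^ e) (nhdsWithin (0:ℝ) (Ioi 0)) (nhds 0) := by
  have h1 : Tendsto (fun r : ℝ => Real.exp (Real.log r * e)) (nhdsWithin (0:ℝ) (Ioi 0)) (nhds 0) :=
    Real.tendsto_exp_atBot.comp (Real.tendsto_log_nhdsGT_zero.atBot_mul_const he)
  refine h1.congr' ?_
  filter_upwards [self_mem_nhdsWithin] with r hr
  rw [Real.rpow_def_of_pos hr]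

lemma tendsto_rpow_pos_zero0' {e : ℝ} (he : 0 < e) :
    Tendsto (fun r : ℝ => r ^ e) (nhdsWithin (0:ℝ) (Ioi 0)) (nhdsWithin 0 (Ioi 0)) := by
  rw [tendsto_nhdsWithin_iff]
  refine ⟨tendsto_rpow_pos_zero0 he, ?_⟩
  filter_upwards [self_mem_nhdsWithin] with r hr
  exact Real.rpow_pos_of_pos hr e

lemma tendsto_rpow_neg_atTop0 {e : ℝ} (he : 0 < e) :
    Tendsto (fun r : ℝ => r ^ (-e)) (nhdsWithin (0:ℝ) (Ioi 0)) atTop := by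
  have h1 := (tendsto_rpow_pos_zero0' he).inv_tendsto_nhdsGT_zero
  refine h1.congr' ?_
  filter_upwards [self_mem_nhdsWithin] with r hr
  simp [Real.rpow_neg (le_of_lt hr)]

lemma shift_limit {c d : ℝ} (hcd : c < d) (Z : ℝ → ℝ) (z : ℝ)
    (hz : Tendsto (fun r => r ^ c * Z r) (nhdsWithin (0:ℝ) (Ioi 0)) (nhds z)) :
    Tendsto (fun r => r ^ d * Z r) (nhdsWithin (0:ℝ) (Ioi 0)) (nhds 0) := by
  have h := (tendsto_rpow_pos_zero0 (by linarith : 0 < d - c)).mul hz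
  rw [zero_mul] at h
  refine h.congr' ?_
  filter_upwards [self_mem_nhdsWithin] with r hr
  rw [← mul_assoc, ← Real.rpow_add hr, show d - c + c = d by ring]

lemma shift_limit_top {c d : ℝ} (hcd : d < c) (Z : ℝ → ℝ) {z : ℝ} (hzpos : 0 < z)
    (hz : Tendsto (fun r => r ^ c * Z r) (nhdsWithin (0:ℝ) (Ioi 0)) (nhds z)) :
    Tendsto (fun r => r ^ d * Z r) (nhdsWithin (0:ℝ) (Ioi 0)) atTop := by
  have h2 := tendsto_rpow_neg_atTop0 (show 0 < c - d by linarith)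
  have h := hz.pos_mul_atTop hzpos h2
  refine h.congr' ?_
  filter_upwards [self_mem_nhdsWithin] with r hr
  rw [show -(c-d) = d - c by ring, mul_comm, ← mul_assoc, ← Real.rpow_add hr,
    show d - c + c = d by ring]

lemma mono_limit_zero (P u e : ℝ → ℝ)
    (hPu : ∀ᶠ r in nhdsWithin (0:ℝ) (Ioi 0), P r = u r + e r)
    (he : Tendsto e (nhdsWithin (0:ℝ) (Ioi 0)) (nhds 0))
    (hmono : MonotoneOn P (Ioo 0 1))
    (hCneg : ∀ c, 0 < c → ¬ (∀ᶠ r in nhdsWithin (0:ℝ) (Ioi 0), u r ≤ -c))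
    (hCpos : ∀ c, 0 < c → ¬ (∀ᶠ r in nhdsWithin (0:ℝ) (Ioi 0), c ≤ u r)) :
    Tendsto P (nhdsWithin (0:ℝ) (Ioi 0)) (nhds 0) := by
  by_cases hbdd : BddBelow (P '' Ioo 0 1)
  · have hne : (Ioo (0:ℝ) 1).Nonempty := ⟨1/2, by norm_num⟩
    have hlim := MonotoneOn.tendsto_nhdsWithin_Ioo_right hne hmono hbdd
    set L := sInf (P '' Ioo 0 1) with hL
    have hu : Tendsto u (nhdsWithin (0:ℝ) (Ioi 0)) (nhds L) := by
      have h2 := hlim.sub he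
      rw [sub_zero] at h2
      refine h2.congr' ?_
      filter_upwards [hPu] with r h; rw [h]; ring
    rcases lt_trichotomy L 0 with h|h|h
    · exfalso
      refine hCneg (-L/2) (by linarith) ?_
      filter_upwards [hu.eventually_lt_const (show L < -(-L/2) by linarith)] with r hr
      linarith
    · rwa [h] at hlim
    · exfalso
      refine hCpos (L/2) (by linarith) ?_
      filter_upwards [hu.eventually_const_lt (show L/2 < L by linarith)] with r hr
      linarith
  · exfalso
    rw [not_bddBelow_iff] at hbdd
    obtain ⟨_, ⟨y, hy, rfl⟩, hPy⟩ := hbdd (-2)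
    refine hCneg 1 one_pos ?_
    have he1 : ∀ᶠ r in nhdsWithin (0:ℝ) (Ioi 0), |e r| < 1 := by
      have := Metric.tendsto_nhds.1 he 1 one_pos
      simpa [Real.dist_eq] using this
    filter_upwards [hPu, he1, Ioo_mem_nhdsGT_of_mem ⟨le_refl (0:ℝ), hy.1⟩] with r h1 h2 h3
    have hPr : P r ≤ P y := hmono ⟨h3.1, lt_trans h3.2 hy.2⟩ hy h3.2.le
    have : u r = P r - e r := by rw [h1]; ring
    rw [this]
    have := abs_lt.1 h2
    linarith

lemma anti_limit_zero (P u e : ℝ → ℝ)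
    (hPu : ∀ᶠ r in nhdsWithin (0:ℝ) (Ioi 0), P r = u r + e r)
    (he : Tendsto e (nhdsWithin (0:ℝ) (Ioi 0)) (nhds 0))
    (hmono : AntitoneOn P (Ioo 0 1))
    (hCneg : ∀ c, 0 < c → ¬ (∀ᶠ r in nhdsWithin (0:ℝ) (Ioi 0), u r ≤ -c))
    (hCpos : ∀ c, 0 < c → ¬ (∀ᶠ r in nhdsWithin (0:ℝ) (Ioi 0), c ≤ u r)) :
    Tendsto P (nhdsWithin (0:ℝ) (Ioi 0)) (nhds 0) := by
  have h := mono_limit_zero (fun r => -P r) (fun r => -u r) (fun r => -e r)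
    (by filter_upwards [hPu] with r h; rw [h]; ring) (by simpa using he.neg) hmono.neg
    (fun c hc hev => hCpos c hc (by filter_upwards [hev] with r hr; linarith))
    (fun c hc hev => hCneg c hc (by filter_upwards [hev] with r hr; linarith))
  have := h.neg
  simpa using this


lemma key_estimate (x s₀ : ℝ) (hx : 0 < x) (hxs : x ≤ s₀) (F H F' H' : ℝ → ℝ) (c ε1 : ℝ)
    (hF : ∀ t ∈ Icc x s₀, HasDerivAt F (F' t) t)
    (hH : ∀ t ∈ Icc x s₀, HasDerivAt H (H' t) t)
    (hF'c : ContinuousOn F' (Icc x s₀))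
    (hH'c : ContinuousOn H' (Icc x s₀))
    (hbd : ∀ t ∈ Icc x s₀, |F' t - c * H' t| ≤ ε1 * (-H' t)) :
    |(F x - c * H x) - (F s₀ - c * H s₀)| ≤ ε1 * (H x - H s₀) := by
  have huIcc : uIcc x s₀ = Icc x s₀ := uIcc_of_le hxs
  have hFi : IntervalIntegrable F' MeasureTheory.volume x s₀ := by
    apply ContinuousOn.intervalIntegrable; rwa [huIcc]
  have hHi : IntervalIntegrable H' MeasureTheory.volume x s₀ := by
    apply ContinuousOn.intervalIntegrable; rwa [huIcc]
  have hFTC : ∫ t in x..s₀, F' t = F s₀ - F x := by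
    apply intervalIntegral.integral_eq_sub_of_hasDerivAt
    · intro t ht; exact hF t (huIcc ▸ ht)
    · exact hFi
  have hHTC : ∫ t in x..s₀, H' t = H s₀ - H x := by
    apply intervalIntegral.integral_eq_sub_of_hasDerivAt
    · intro t ht; exact hH t (huIcc ▸ ht)
    · exact hHi
  have hGi : IntervalIntegrable (fun t => F' t - c * H' t) MeasureTheory.volume x s₀ :=
    hFi.sub (hHi.const_mul c)
  have h1 : (F x - c * H x) - (F s₀ - c * H s₀) = -(∫ t in x..s₀, (F' t - c * H' t)) := by
    rw [intervalIntegral.integral_sub hFi (hHi.const_mul c), intervalIntegral.integral_const_mul,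
      hFTC, hHTC]; ring
  rw [h1, abs_neg]
  calc |∫ t in x..s₀, (F' t - c * H' t)| ≤ ∫ t in x..s₀, |F' t - c * H' t| :=
        intervalIntegral.abs_integral_le_integral_abs hxs
    _ ≤ ∫ t in x..s₀, ε1 * (-H' t) := by
        apply intervalIntegral.integral_mono_on hxs hGi.abs ((hHi.neg.const_mul ε1))
        exact hbd
    _ = ε1 * (H x - H s₀) := by
        rw [intervalIntegral.integral_const_mul, intervalIntegral.integral_neg, hHTC]; ring

lemma lhopital_top (r0 : ℝ) (hr0 : 0 < r0) (F H F' H' : ℝ → ℝ) (c : ℝ)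
    (hF : ∀ x ∈ Ioo (0:ℝ) r0, HasDerivAt F (F' x) x)
    (hH : ∀ x ∈ Ioo (0:ℝ) r0, HasDerivAt H (H' x) x)
    (hF'c : ContinuousOn F' (Ioo 0 r0))
    (hH'c : ContinuousOn H' (Ioo 0 r0))
    (hH'neg : ∀ x ∈ Ioo (0:ℝ) r0, H' x < 0)
    (hHtop : Tendsto H (nhdsWithin (0:ℝ) (Ioi 0)) atTop)
    (hratio : Tendsto (fun x => F' x / H' x) (nhdsWithin (0:ℝ) (Ioi 0)) (nhds c)) :
    Tendsto (fun x => F x / H x) (nhdsWithin (0:ℝ) (Ioi 0)) (nhds c) := by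
  rw [Metric.tendsto_nhds]
  intro ε hε
  set ε1 := ε / 3 with hε1def
  have hε1 : 0 < ε1 := by positivity
  have hev : ∀ᶠ x in nhdsWithin (0:ℝ) (Ioi 0), |F' x / H' x - c| < ε1 := by
    have := Metric.tendsto_nhds.1 hratio ε1 hε1
    simpa [Real.dist_eq] using this
  obtain ⟨u, hu, huS⟩ := mem_nhdsGT_iff_exists_Ioo_subset.1 hev
  set δ := min u r0 with hδdef
  have hδ0 : 0 < δ := lt_min hu hr0
  set s₀ := δ / 2 with hs₀def
  have hs₀mem : s₀ ∈ Ioo (0:ℝ) r0 := ⟨by positivity, lt_of_lt_of_le (by linarith [min_le_right u r0]) le_rfl⟩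
  -- pointwise bound on Ioo 0 δ
  have hptbd : ∀ t ∈ Ioo (0:ℝ) δ, |F' t - c * H' t| ≤ ε1 * (-H' t) := by
    intro t ht
    have htr0 : t ∈ Ioo (0:ℝ) r0 := ⟨ht.1, lt_of_lt_of_le ht.2 (min_le_right u r0)⟩
    have hH't := hH'neg t htr0
    have hrat : |F' t / H' t - c| < ε1 := huS ⟨ht.1, lt_of_lt_of_le ht.2 (min_le_left u r0)⟩
    have hne : H' t ≠ 0 := ne_of_lt hH't
    have : |F' t - c * H' t| = |F' t / H' t - c| * |H' t| := by
      rw [← abs_mul]; congr 1; field_simp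
    rw [this, abs_of_neg hH't]
    nlinarith [abs_nonneg (F' t / H' t - c)]
  -- key estimate
  have hkey : ∀ x ∈ Ioo (0:ℝ) s₀, |(F x - c * H x) - (F s₀ - c * H s₀)| ≤ ε1 * (H x - H s₀) := by
    intro x hx
    have hsub : Icc x s₀ ⊆ Ioo (0:ℝ) δ := fun t ht => ⟨lt_of_lt_of_le hx.1 ht.1,
      lt_of_le_of_lt ht.2 (by rw [hs₀def]; linarith)⟩
    have hsub' : Icc x s₀ ⊆ Ioo (0:ℝ) r0 := fun t ht =>
      ⟨(hsub ht).1, lt_of_lt_of_le (hsub ht).2 (min_le_right u r0)⟩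
    exact key_estimate x s₀ hx.1 hx.2.le F H F' H' c ε1
      (fun t ht => hF t (hsub' ht)) (fun t ht => hH t (hsub' ht))
      (hF'c.mono hsub') (hH'c.mono hsub') (fun t ht => hptbd t (hsub ht))
  set A := |F s₀ - c * H s₀| + ε1 * |H s₀| with hAdef
  have hA0 : 0 ≤ A := by positivity
  have hevH : ∀ᶠ x in nhdsWithin (0:ℝ) (Ioi 0), max 1 (A / ε1) ≤ H x := hHtop.eventually_ge_atTop _
  have hevI : ∀ᶠ x in nhdsWithin (0:ℝ) (Ioi 0), x ∈ Ioo (0:ℝ) s₀ :=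
    Ioo_mem_nhdsGT_of_mem ⟨le_refl 0, hs₀mem.1⟩
  filter_upwards [hevH, hevI] with x hHx hxI
  have hHx1 : (1:ℝ) ≤ H x := le_trans (le_max_left _ _) hHx
  have hHxA : A / ε1 ≤ H x := le_trans (le_max_right _ _) hHx
  have hHxpos : 0 < H x := lt_of_lt_of_le one_pos hHx1
  rw [Real.dist_eq]
  have h2 : |F x - c * H x| ≤ ε1 * (H x - H s₀) + |F s₀ - c * H s₀| := by
    have := hkey x hxI
    have h3 := abs_sub_abs_le_abs_sub (F x - c * H x) (F s₀ - c * H s₀)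
    linarith
  have h4 : |F x / H x - c| = |F x - c * H x| / H x := by
    rw [show F x / H x - c = (F x - c * H x) / H x by field_simp, abs_div, abs_of_pos hHxpos]
  rw [h4]
  rw [div_lt_iff₀ hHxpos]
  have h5 : ε1 * (H x - H s₀) + |F s₀ - c * H s₀| ≤ ε1 * H x + A := by
    have : -H s₀ ≤ |H s₀| := neg_le_abs _
    nlinarith
  have h6 : A ≤ ε1 * H x := by
    rw [div_le_iff₀ hε1] at hHxA; linarith [mul_comm ε1 (H x)]
  have : ε1 * H x + ε1 * H x < ε * H x := by
    have : ε1 * 3 = ε := by rw [hε1def]; ring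
    nlinarith
  linarith

lemma lhopital_zero' (r0 : ℝ) (hr0 : 0 < r0) (F H F' H' : ℝ → ℝ) (c : ℝ)
    (hF : ∀ x ∈ Ioo (0:ℝ) r0, HasDerivAt F (F' x) x)
    (hH : ∀ x ∈ Ioo (0:ℝ) r0, HasDerivAt H (H' x) x)
    (hF'c : ContinuousOn F' (Ioo 0 r0))
    (hH'c : ContinuousOn H' (Ioo 0 r0))
    (hH'pos : ∀ x ∈ Ioo (0:ℝ) r0, 0 < H' x)
    (hHpos : ∀ x ∈ Ioo (0:ℝ) r0, 0 < H x)
    (hF0 : Tendsto F (nhdsWithin (0:ℝ) (Ioi 0)) (nhds 0))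
    (hH0 : Tendsto H (nhdsWithin (0:ℝ) (Ioi 0)) (nhds 0))
    (hratio : Tendsto (fun x => F' x / H' x) (nhdsWithin (0:ℝ) (Ioi 0)) (nhds c)) :
    Tendsto (fun x => F x / H x) (nhdsWithin (0:ℝ) (Ioi 0)) (nhds c) := by
  rw [Metric.tendsto_nhds]
  intro ε hε
  set ε1 := ε / 2 with hε1def
  have hε1 : 0 < ε1 := by positivity
  have hev : ∀ᶠ x in nhdsWithin (0:ℝ) (Ioi 0), |F' x / H' x - c| < ε1 := by
    have := Metric.tendsto_nhds.1 hratio ε1 hε1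
    simpa [Real.dist_eq] using this
  obtain ⟨u, hu, huS⟩ := mem_nhdsGT_iff_exists_Ioo_subset.1 hev
  set δ := min u r0 with hδdef
  have hδ0 : 0 < δ := lt_min hu hr0
  have hptbd : ∀ t ∈ Ioo (0:ℝ) δ, |F' t - c * H' t| ≤ ε1 * H' t := by
    intro t ht
    have htr0 : t ∈ Ioo (0:ℝ) r0 := ⟨ht.1, lt_of_lt_of_le ht.2 (min_le_right u r0)⟩
    have hH't := hH'pos t htr0
    have hrat : |F' t / H' t - c| < ε1 := huS ⟨ht.1, lt_of_lt_of_le ht.2 (min_le_left u r0)⟩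
    have : |F' t - c * H' t| = |F' t / H' t - c| * |H' t| := by
      rw [← abs_mul]; congr 1; field_simp
    rw [this, abs_of_pos hH't]
    nlinarith [abs_nonneg (F' t / H' t - c)]
  have hkey : ∀ x ∈ Ioo (0:ℝ) δ, |F x - c * H x| ≤ ε1 * H x := by
    intro x hx
    -- estimate on [s, x] and let s → 0
    have hstep : ∀ s ∈ Ioo (0:ℝ) x, |(F s - c * H s) - (F x - c * H x)| ≤ ε1 * (H x - H s) := by
      intro s hs
      have hsub : Icc s x ⊆ Ioo (0:ℝ) δ := fun t ht => ⟨lt_of_lt_of_le hs.1 ht.1,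
        lt_of_le_of_lt ht.2 hx.2⟩
      have hsub' : Icc s x ⊆ Ioo (0:ℝ) r0 := fun t ht =>
        ⟨(hsub ht).1, lt_of_lt_of_le (hsub ht).2 (min_le_right u r0)⟩
      have := key_estimate s x hs.1 hs.2.le F (fun y => - H y) F' (fun y => - H' y) (-c) ε1
        (fun t ht => hF t (hsub' ht)) (fun t ht => (hH t (hsub' ht)).neg)
        (hF'c.mono hsub') (hH'c.neg.mono hsub')
        (fun t ht => by
          have := hptbd t (hsub ht)
          simpa [neg_neg, mul_comm] using this)
      simp only [neg_neg, mul_neg, neg_mul] at this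
      calc |(F s - c * H s) - (F x - c * H x)| ≤ ε1 * (-H s - -H x) := this
        _ = ε1 * (H x - H s) := by ring
    -- take limit s → 0+
    have hlim1 : Tendsto (fun s => |(F s - c * H s) - (F x - c * H x)|)
        (nhdsWithin (0:ℝ) (Ioi 0)) (nhds |(0 - c * 0) - (F x - c * H x)|) := by
      exact ((hF0.sub (hH0.const_mul c)).sub_const _).abs
    have hlim2 : Tendsto (fun s => ε1 * (H x - H s)) (nhdsWithin (0:ℝ) (Ioi 0))
        (nhds (ε1 * (H x - 0))) := ((tendsto_const_nhds.sub hH0).const_mul ε1)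
    have hle := le_of_tendsto_of_tendsto hlim1 hlim2 ?_
    · calc |F x - c * H x| = |(0 - c * 0) - (F x - c * H x)| := by rw [abs_sub_comm]; ring_nf
        _ ≤ ε1 * (H x - 0) := hle
        _ = ε1 * H x := by ring
    · filter_upwards [Ioo_mem_nhdsGT_of_mem ⟨le_refl 0, hx.1⟩] with s hs
      exact hstep s hs
  have hevI : ∀ᶠ x in nhdsWithin (0:ℝ) (Ioi 0), x ∈ Ioo (0:ℝ) δ :=
    Ioo_mem_nhdsGT_of_mem ⟨le_refl 0, hδ0⟩
  filter_upwards [hevI] with x hxI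
  have hxr0 : x ∈ Ioo (0:ℝ) r0 := ⟨hxI.1, lt_of_lt_of_le hxI.2 (min_le_right u r0)⟩
  have hHxpos := hHpos x hxr0
  rw [Real.dist_eq, show F x / H x - c = (F x - c * H x) / H x by field_simp,
    abs_div, abs_of_pos hHxpos, div_lt_iff₀ hHxpos]
  have := hkey x hxI
  nlinarith

/-- **Corollary 1.5.** Let `n ≥ 3`, `0 < m < (n-2)/n`, `γ > 0` with `γ ≠ 2/(1-m)`, `η > 0`.
Suppose `α ∈ ℝ` and `β ≠ 0` satisfy either `α = (2β−1)/(1-m)` or `α = (2β+1)/(1-m)`, and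
`γ ≠ α/β`. Then there is no radially symmetric solution `f` of
`Δ(f^m/m) + αf + βx·∇f = 0`, `f > 0`, in `ℝⁿ \ {0}` with `lim_{r→0⁺} r^γ f(r) = η`. -/
theorem stmt_4 (n : ℕ) (hn : 3 ≤ n) (m γ η α β : ℝ)
    (hm0 : 0 < m) (hm1 : m < ((n : ℝ) - 2) / n)
    (hγ0 : 0 < γ) (hγ : γ ≠ 2 / (1 - m)) (hη : 0 < η)
    (hβ : β ≠ 0)
    (hab : α = (2 * β - 1) / (1 - m) ∨ α = (2 * β + 1) / (1 - m))
    (hγα : γ ≠ α / β) :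
    ¬ ∃ f : ℝ → ℝ,
      (∀ r ∈ Ioi (0 : ℝ), 0 < f r) ∧
      ContDiffOn ℝ 2 f (Ioi (0 : ℝ)) ∧
      (∀ r ∈ Ioi (0 : ℝ),
        deriv (deriv (fun s => f s ^ m / m)) r
          + ((n : ℝ) - 1) / r * deriv (fun s => f s ^ m / m) r
          + α * f r + β * r * deriv f r = 0) ∧
      Tendsto (fun r => r ^ γ * f r) (nhdsWithin 0 (Ioi 0)) (nhds η) := by
  rintro ⟨f, hfpos, hfC2, hODE, hlim⟩
  -- numeric facts
  have hn3 : (3:ℝ) ≤ (n:ℝ) := by exact_mod_cast hn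
  have hnpos : (0:ℝ) < n := by linarith
  have hm1' : m < 1 := lt_of_lt_of_le hm1 (by rw [div_le_one hnpos]; linarith)
  have h1m : (0:ℝ) < 1 - m := by linarith
  have hmn : m * (n:ℝ) < (n:ℝ) - 2 := by
    have := (lt_div_iff₀ hnpos).1 hm1; linarith
  have h2n : 2 / (1-m) < (n:ℝ) := by rw [div_lt_iff₀ h1m]; nlinarith
  set q := α / β with hq
  have hα : α = β * q := by rw [hq]; field_simp
  have hγq : γ ≠ q := hγα
  have hγ2 : γ * (1-m) ≠ 2 := by
    intro h; apply hγ; field_simp; linarith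
  -- functions and smoothness
  set g : ℝ → ℝ := fun s => f s ^ m / m with hgdef
  have hgpos : ∀ r ∈ Ioi (0:ℝ), 0 < g r := fun r hr => by
    exact div_pos (Real.rpow_pos_of_pos (hfpos r hr) m) hm0
  have hfcont : ContinuousOn f (Ioi 0) := hfC2.continuousOn
  have houter : ContDiffOn ℝ 2 (fun y : ℝ => y ^ m / m) (Ioi 0) := by
    intro y hy
    exact ((Real.contDiffAt_rpow_const_of_ne (ne_of_gt hy)).div_const m).contDiffWithinAt
  have hgC2 : ContDiffOn ℝ 2 g (Ioi 0) := houter.comp hfC2 (fun r hr => hfpos r hr)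
  have hgcont : ContinuousOn g (Ioi 0) := hgC2.continuousOn
  have hg'C1 : ContDiffOn ℝ 1 (deriv g) (Ioi 0) :=
    hgC2.deriv_of_isOpen isOpen_Ioi (by norm_num)
  have hg'cont : ContinuousOn (deriv g) (Ioi 0) := hg'C1.continuousOn
  have hfd : ∀ r ∈ Ioi (0:ℝ), HasDerivAt f (deriv f r) r := fun r hr =>
    ((hfC2.differentiableOn (by norm_num)).differentiableAt (isOpen_Ioi.mem_nhds hr)).hasDerivAt
  have hgd : ∀ r ∈ Ioi (0:ℝ), HasDerivAt g (deriv g r) r := fun r hr =>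
    ((hgC2.differentiableOn (by norm_num)).differentiableAt (isOpen_Ioi.mem_nhds hr)).hasDerivAt
  have hgd2 : ∀ r ∈ Ioi (0:ℝ), HasDerivAt (deriv g)
      (-(((n:ℝ)-1)/r * deriv g r + α * f r + β * r * deriv f r)) r := by
    intro r hr
    have h1 : HasDerivAt (deriv g) (deriv (deriv g) r) r :=
      ((hg'C1.differentiableOn one_ne_zero).differentiableAt (isOpen_Ioi.mem_nhds hr)).hasDerivAt
    have h2 := hODE r hr
    have : deriv (deriv g) r = -(((n:ℝ)-1)/r * deriv g r + α * f r + β * r * deriv f r) := by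
      rw [hgdef]; linarith
    rwa [this] at h1
  -- the key differential identity for Qσ
  have hQ : ∀ σ : ℝ, ∀ r ∈ Ioi (0:ℝ),
      HasDerivAt (fun s => s^(σ-1) * deriv g s - (σ - n) * (s^(σ-2) * g s) + β * (s^σ * f s))
      (β*(σ - q) * (r^(σ-1) * f r) - (σ - n)*(σ-2) * (r^(σ-3) * g r)) r := by
    intro σ r hr
    have hr0 : (0:ℝ) < r := hr
    have hrne : r ≠ 0 := ne_of_gt hr0
    have hp1 : HasDerivAt (fun s : ℝ => s^(σ-1)) ((σ-1) * r^(σ-2)) r := by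
      have := Real.hasDerivAt_rpow_const (p := σ-1) (Or.inl hrne)
      rwa [show σ-1-1 = σ-2 by ring] at this
    have hp2 : HasDerivAt (fun s : ℝ => s^(σ-2)) ((σ-2) * r^(σ-3)) r := by
      have := Real.hasDerivAt_rpow_const (p := σ-2) (Or.inl hrne)
      rwa [show σ-2-1 = σ-3 by ring] at this
    have hp3 : HasDerivAt (fun s : ℝ => s^σ) (σ * r^(σ-1)) r := by
      exact Real.hasDerivAt_rpow_const (p := σ) (Or.inl hrne)
    have hT := ((hp1.mul (hgd2 r hr)).sub
        (((hp2.mul (hgd r hr)).const_mul (σ - (n:ℝ))))).add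
        (((hp3.mul (hfd r hr)).const_mul β))
    have heq : (σ-1) * r^(σ-2) * deriv g r
          + r^(σ-1) * -(((n:ℝ)-1)/r * deriv g r + α * f r + β * r * deriv f r)
          - (σ - (n:ℝ)) * ((σ-2) * r^(σ-3) * g r + r^(σ-2) * deriv g r)
          + β * (σ * r^(σ-1) * f r + r^σ * deriv f r)
        = β*(σ - q) * (r^(σ-1) * f r) - (σ - n)*(σ-2) * (r^(σ-3) * g r) := by
      have e1 : r ^ (σ-1) = r^(σ-2) * r := by
        rw [← Real.rpow_add_one hrne (σ-2), show σ-2+1 = σ-1 by ring]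
      have e2 : r ^ (σ-2) = r^(σ-3) * r := by
        rw [← Real.rpow_add_one hrne (σ-3), show σ-3+1 = σ-2 by ring]
      have e3 : r ^ σ = r^(σ-1) * r := by
        rw [← Real.rpow_add_one hrne (σ-1), show σ-1+1 = σ by ring]
      rw [hα, e3, e1, e2]
      field_simp
      ring
    have : (fun s => s^(σ-1) * deriv g s - (σ - (n:ℝ)) * (s^(σ-2) * g s) + β * (s^σ * f s))
        = (fun s => s^(σ-1) * deriv g s - (σ - (n:ℝ)) * (s^(σ-2) * g s) + β * (s^σ * f s)) := rfl
    refine hT.congr_deriv ?_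
    exact heq
  -- basic limits
  have hmem : ∀ᶠ r in nhdsWithin (0:ℝ) (Ioi 0), r ∈ Ioi (0:ℝ) := self_mem_nhdsWithin
  have hgm : Tendsto (fun r => r^(γ*m) * g r) (nhdsWithin (0:ℝ) (Ioi 0)) (nhds (η^m/m)) := by
    have h1 : Tendsto (fun r => (r^γ * f r)^m / m) (nhdsWithin (0:ℝ) (Ioi 0)) (nhds (η^m/m)) :=
      (hlim.rpow_const (Or.inl (ne_of_gt hη))).div_const m
    refine h1.congr' ?_
    filter_upwards [hmem] with r hr
    have hr0 : (0:ℝ) < r := hr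
    simp only [hgdef]
    rw [Real.mul_rpow (Real.rpow_nonneg hr0.le γ) (hfpos r hr).le,
      ← Real.rpow_mul hr0.le, mul_div_assoc]
  have hgmpos : 0 < η^m/m := div_pos (Real.rpow_pos_of_pos hη m) hm0
  have hrpowc : ∀ c : ℝ, ContinuousOn (fun s : ℝ => s ^ c) (Ioi (0:ℝ)) := fun c s hs =>
    (Real.continuousAt_rpow_const s c (Or.inl (ne_of_gt hs))).continuousWithinAt
  have hQ'cont : ∀ σ : ℝ, ContinuousOn
      (fun r => β*(σ - q) * (r^(σ-1) * f r) - (σ - (n:ℝ))*(σ-2) * (r^(σ-3) * g r)) (Ioi 0) :=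
    fun σ => (continuousOn_const.mul ((hrpowc _).mul hfcont)).sub
      (continuousOn_const.mul ((hrpowc _).mul hgcont))
  have hneglog : Tendsto (fun x : ℝ => -Real.log x) (nhdsWithin (0:ℝ) (Ioi 0)) atTop :=
    tendsto_neg_atTop_iff.2 Real.tendsto_log_nhdsGT_zero
  have hneginv : Tendsto (fun x : ℝ => (-Real.log x)⁻¹) (nhdsWithin (0:ℝ) (Ioi 0)) (nhds 0) :=
    hneglog.inv_tendsto_atTop
  rcases lt_or_gt_of_ne hγ2 with hII | hI
  · -- Regime II : γ(1-m) < 2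
    have hγlt : γ < 2/(1-m) := by rw [lt_div_iff₀ h1m]; linarith
    have hγn : γ < (n:ℝ) := lt_trans hγlt h2n
    have hγmn2 : γ*m < (n:ℝ) - 2 := by nlinarith
    have hγm2 : γ - 2 < γ*m := by nlinarith
    have hn2 : (0:ℝ) < (n:ℝ) - 2 := by linarith
    have hnγ0 : (0:ℝ) < (n:ℝ) - γ := by linarith
    set P := fun s : ℝ => s^((n:ℝ)-1) * deriv g s - ((n:ℝ) - (n:ℝ)) * (s^((n:ℝ)-2) * g s)
      + β * (s^(n:ℝ) * f s) with hPdef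
    set P' := fun r : ℝ => β*((n:ℝ) - q) * (r^((n:ℝ)-1) * f r)
      - ((n:ℝ) - (n:ℝ))*((n:ℝ)-2) * (r^((n:ℝ)-3) * g r) with hP'def
    have hPd : ∀ x ∈ Ioi (0:ℝ), HasDerivAt P (P' x) x := fun x hx => hQ (n:ℝ) x hx
    set u := fun r : ℝ => r^((n:ℝ)-1) * deriv g r with hudef
    set ee := fun r : ℝ => β * (r^(n:ℝ) * f r) with heedef
    have hee : Tendsto ee (nhdsWithin (0:ℝ) (Ioi 0)) (nhds 0) := by
      have h2 := (shift_limit hγn f η hlim).const_mul β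
      rw [mul_zero] at h2; exact h2
    have hCneg : ∀ c, 0 < c → ¬ (∀ᶠ r in nhdsWithin (0:ℝ) (Ioi 0), u r ≤ -c) := by
      intro c hc hev
      obtain ⟨w, hw, hwS⟩ := mem_nhdsGT_iff_exists_Ioo_subset.1 hev
      have hw0 : (0:ℝ) < w := hw
      set V := fun s : ℝ => g s - (c/((n:ℝ)-2)) * s^(2-(n:ℝ)) with hVdef
      have hVd : ∀ x ∈ Ioo (0:ℝ) w, HasDerivAt V (deriv g x + c * x^(1-(n:ℝ))) x := by
        intro x hx
        have hxne : x ≠ 0 := ne_of_gt hx.1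
        have hp := (Real.hasDerivAt_rpow_const (x := x) (p := 2-(n:ℝ))
          (Or.inl hxne)).const_mul (c/((n:ℝ)-2))
        have hT := (hgd x hx.1).sub hp
        refine hT.congr_deriv ?_
        rw [show 2-(n:ℝ)-1 = 1-(n:ℝ) by ring]
        have e : c / ((n:ℝ)-2) * ((2-(n:ℝ)) * x^(1-(n:ℝ))) = -(c * x^(1-(n:ℝ))) := by
          field_simp
          ring
        rw [e]; ring
      have hVanti : AntitoneOn V (Ioo 0 w) := by
        apply antitoneOn_of_deriv_nonpos (convex_Ioo _ _)
        · exact (hgcont.mono Ioo_subset_Ioi_self).sub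
            (continuousOn_const.mul ((hrpowc _).mono Ioo_subset_Ioi_self))
        · intro x hx
          rw [interior_Ioo] at hx
          exact (hVd x hx).differentiableAt.differentiableWithinAt
        · intro x hx
          rw [interior_Ioo] at hx
          rw [(hVd x hx).deriv]
          have hu : u x ≤ -c := hwS hx
          simp only [hudef] at hu
          have hxp : (0:ℝ) < x^((n:ℝ)-1) := Real.rpow_pos_of_pos hx.1 _
          have e : x^(1-(n:ℝ)) = (x^((n:ℝ)-1))⁻¹ := by
            rw [show 1-(n:ℝ) = -((n:ℝ)-1) by ring, Real.rpow_neg hx.1.le]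
          have h2 : deriv g x ≤ -c / x^((n:ℝ)-1) := by
            rw [le_div_iff₀ hxp]
            linarith [hu, mul_comm (x^((n:ℝ)-1)) (deriv g x)]
          rw [div_eq_mul_inv] at h2
          rw [e]
          linarith
      set s₀ := w/2 with hs₀def
      have hs₀ : s₀ ∈ Ioo (0:ℝ) w := ⟨by positivity, by rw [hs₀def]; linarith⟩
      have hlb : ∀ x ∈ Ioo (0:ℝ) s₀,
          x^(γ*m) * V s₀ + (c/((n:ℝ)-2)) * x^(γ*m + (2-(n:ℝ))) ≤ x^(γ*m) * g x := by
        intro x hx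
        have hx0 : (0:ℝ) < x := hx.1
        have hxw : x ∈ Ioo (0:ℝ) w := ⟨hx.1, lt_trans hx.2 hs₀.2⟩
        have hVs := hVanti hxw hs₀ (le_of_lt hx.2)
        have hg_ge : V s₀ + (c/((n:ℝ)-2)) * x^(2-(n:ℝ)) ≤ g x := by
          simp only [hVdef] at hVs; linarith
        have hxp : (0:ℝ) < x^(γ*m) := Real.rpow_pos_of_pos hx0 _
        have h3 := mul_le_mul_of_nonneg_left hg_ge hxp.le
        have e1 : x^(γ*m) * x^(2-(n:ℝ)) = x^(γ*m + (2-(n:ℝ))) := (Real.rpow_add hx0 _ _).symm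
        calc x^(γ*m) * V s₀ + (c/((n:ℝ)-2)) * x^(γ*m + (2-(n:ℝ)))
            = x^(γ*m) * (V s₀ + (c/((n:ℝ)-2)) * x^(2-(n:ℝ))) := by rw [← e1]; ring
          _ ≤ x^(γ*m) * g x := h3
      have htop : Tendsto (fun x => x^(γ*m) * V s₀ + (c/((n:ℝ)-2)) * x^(γ*m + (2-(n:ℝ))))
          (nhdsWithin (0:ℝ) (Ioi 0)) atTop := by
        have h1 : Tendsto (fun x : ℝ => x^(γ*m) * V s₀) (nhdsWithin (0:ℝ) (Ioi 0))
            (nhds (0 * V s₀)) := (tendsto_rpow_pos_zero0 (mul_pos hγ0 hm0)).mul_const _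
        have h2 : Tendsto (fun x : ℝ => (c/((n:ℝ)-2)) * x^(γ*m + (2-(n:ℝ))))
            (nhdsWithin (0:ℝ) (Ioi 0)) atTop := by
          have h3 := tendsto_rpow_neg_atTop0 (show 0 < (n:ℝ)-2-γ*m by linarith)
          rw [show -((n:ℝ)-2-γ*m) = γ*m + (2-(n:ℝ)) by ring] at h3
          exact Tendsto.const_mul_atTop (div_pos hc hn2) h3
        exact h1.add_atTop h2
      have hgatop : Tendsto (fun x => x^(γ*m) * g x) (nhdsWithin (0:ℝ) (Ioi 0)) atTop := by
        apply tendsto_atTop_mono' _ ?_ htop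
        filter_upwards [Ioo_mem_nhdsGT_of_mem ⟨le_refl (0:ℝ), hs₀.1⟩] with x hx
        exact hlb x hx
      exact not_tendsto_nhds_of_tendsto_atTop hgatop _ hgm
    have hCpos : ∀ c, 0 < c → ¬ (∀ᶠ r in nhdsWithin (0:ℝ) (Ioi 0), c ≤ u r) := by
      intro c hc hev
      obtain ⟨w, hw, hwS⟩ := mem_nhdsGT_iff_exists_Ioo_subset.1 hev
      have hw0 : (0:ℝ) < w := hw
      set W := fun s : ℝ => g s + (c/((n:ℝ)-2)) * s^(2-(n:ℝ)) with hWdef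
      have hWd : ∀ x ∈ Ioo (0:ℝ) w, HasDerivAt W (deriv g x - c * x^(1-(n:ℝ))) x := by
        intro x hx
        have hxne : x ≠ 0 := ne_of_gt hx.1
        have hp := (Real.hasDerivAt_rpow_const (x := x) (p := 2-(n:ℝ))
          (Or.inl hxne)).const_mul (c/((n:ℝ)-2))
        have hT := (hgd x hx.1).add hp
        refine hT.congr_deriv ?_
        rw [show 2-(n:ℝ)-1 = 1-(n:ℝ) by ring]
        have e : c / ((n:ℝ)-2) * ((2-(n:ℝ)) * x^(1-(n:ℝ))) = -(c * x^(1-(n:ℝ))) := by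
          field_simp
          ring
        rw [e]; ring
      have hWmono : MonotoneOn W (Ioo 0 w) := by
        apply monotoneOn_of_deriv_nonneg (convex_Ioo _ _)
        · exact (hgcont.mono Ioo_subset_Ioi_self).add
            (continuousOn_const.mul ((hrpowc _).mono Ioo_subset_Ioi_self))
        · intro x hx
          rw [interior_Ioo] at hx
          exact (hWd x hx).differentiableAt.differentiableWithinAt
        · intro x hx
          rw [interior_Ioo] at hx
          rw [(hWd x hx).deriv]
          have hu : c ≤ u x := hwS hx
          simp only [hudef] at hu
          have hxp : (0:ℝ) < x^((n:ℝ)-1) := Real.rpow_pos_of_pos hx.1 _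
          have e : x^(1-(n:ℝ)) = (x^((n:ℝ)-1))⁻¹ := by
            rw [show 1-(n:ℝ) = -((n:ℝ)-1) by ring, Real.rpow_neg hx.1.le]
          have h2 : c / x^((n:ℝ)-1) ≤ deriv g x := by
            rw [div_le_iff₀ hxp]
            linarith [hu, mul_comm (x^((n:ℝ)-1)) (deriv g x)]
          rw [div_eq_mul_inv] at h2
          rw [e]
          linarith
      set s₀ := w/2 with hs₀def
      have hs₀ : s₀ ∈ Ioo (0:ℝ) w := ⟨by positivity, by rw [hs₀def]; linarith⟩
      have h2 : Tendsto (fun x : ℝ => (c/((n:ℝ)-2)) * x^(2-(n:ℝ)))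
          (nhdsWithin (0:ℝ) (Ioi 0)) atTop := by
        have h3 := tendsto_rpow_neg_atTop0 (show 0 < (n:ℝ)-2 by linarith)
        rw [show -((n:ℝ)-2) = 2-(n:ℝ) by ring] at h3
        exact Tendsto.const_mul_atTop (div_pos hc hn2) h3
      have h3 := (h2.eventually_gt_atTop (W s₀)).and
        (Ioo_mem_nhdsGT_of_mem ⟨le_refl (0:ℝ), hs₀.1⟩)
      obtain ⟨x, hx1, hx2⟩ := h3.exists
      have hxw : x ∈ Ioo (0:ℝ) w := ⟨hx2.1, lt_trans hx2.2 hs₀.2⟩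
      have h4 := hWmono hxw hs₀ (le_of_lt hx2.2)
      have hgx := hgpos x hx2.1
      simp only [hWdef] at h4
      linarith
    have hP0 : Tendsto P (nhdsWithin (0:ℝ) (Ioi 0)) (nhds 0) := by
      have hPu : ∀ᶠ r in nhdsWithin (0:ℝ) (Ioi 0), P r = u r + ee r := by
        filter_upwards [hmem] with r hr
        simp only [hPdef, hudef, heedef]; ring
      have hPcont : ContinuousOn P (Ioo (0:ℝ) 1) := by
        have h5 : ContinuousOn P (Ioi (0:ℝ)) := by
          rw [hPdef]
          exact (((hrpowc _).mul hg'cont).sub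
            (continuousOn_const.mul ((hrpowc _).mul hgcont))).add
            (continuousOn_const.mul ((hrpowc _).mul hfcont))
        exact h5.mono Ioo_subset_Ioi_self
      rcases le_or_gt 0 (β*((n:ℝ) - q)) with hsgn | hsgn
      · refine mono_limit_zero P u ee hPu hee ?_ hCneg hCpos
        apply monotoneOn_of_deriv_nonneg (convex_Ioo _ _) hPcont
        · intro x hx; rw [interior_Ioo] at hx
          exact (hPd x hx.1).differentiableAt.differentiableWithinAt
        · intro x hx; rw [interior_Ioo] at hx
          rw [(hPd x hx.1).deriv]
          have h1 : 0 < x^((n:ℝ)-1) * f x :=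
            mul_pos (Real.rpow_pos_of_pos hx.1 _) (hfpos x hx.1)
          simp only [hP'def]
          rw [sub_self]
          nlinarith [mul_nonneg hsgn h1.le]
      · refine anti_limit_zero P u ee hPu hee ?_ hCneg hCpos
        apply antitoneOn_of_deriv_nonpos (convex_Ioo _ _) hPcont
        · intro x hx; rw [interior_Ioo] at hx
          exact (hPd x hx.1).differentiableAt.differentiableWithinAt
        · intro x hx; rw [interior_Ioo] at hx
          rw [(hPd x hx.1).deriv]
          have h1 : 0 < x^((n:ℝ)-1) * f x :=
            mul_pos (Real.rpow_pos_of_pos hx.1 _) (hfpos x hx.1)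
          simp only [hP'def]
          rw [sub_self]
          nlinarith [mul_nonpos_of_nonpos_of_nonneg hsgn.le h1.le]
    have hnγ : (n:ℝ) - γ ≠ 0 := ne_of_gt hnγ0
    have hc₁ : Tendsto (fun x => P x / x^((n:ℝ)-γ)) (nhdsWithin (0:ℝ) (Ioi 0))
        (nhds (β*((n:ℝ)-q)/((n:ℝ)-γ) * η)) := by
      apply lhopital_zero' 1 one_pos P (fun s => s^((n:ℝ)-γ)) P'
          (fun s => ((n:ℝ)-γ)*s^((n:ℝ)-γ-1)) _
        (fun x hx => hPd x hx.1)
        (fun x hx => Real.hasDerivAt_rpow_const (x := x) (p := (n:ℝ)-γ) (Or.inl (ne_of_gt hx.1)))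
        ((hQ'cont (n:ℝ)).mono Ioo_subset_Ioi_self)
        (continuousOn_const.mul ((hrpowc _).mono Ioo_subset_Ioi_self))
        (fun x hx => mul_pos hnγ0 (Real.rpow_pos_of_pos hx.1 _))
        (fun x hx => Real.rpow_pos_of_pos hx.1 _)
        hP0
        (tendsto_rpow_pos_zero0 hnγ0)
      have h2 := hlim.const_mul (β*((n:ℝ)-q)/((n:ℝ)-γ))
      refine h2.congr' ?_
      filter_upwards [hmem] with r hr
      have hr0 : (0:ℝ) < r := hr
      have hpne : r^((n:ℝ)-γ-1) ≠ 0 := ne_of_gt (Real.rpow_pos_of_pos hr0 _)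
      have e1 : r^((n:ℝ)-1) = r^((n:ℝ)-γ-1) * r^γ := by
        rw [← Real.rpow_add hr0, show (n:ℝ)-γ-1+γ = (n:ℝ)-1 by ring]
      simp only [hP'def]
      rw [sub_self, e1]
      field_simp
      ring
    set C := β*((n:ℝ)-q)/((n:ℝ)-γ) * η - β*η with hCdef
    have hC : Tendsto (fun r => r^(γ-1) * deriv g r) (nhdsWithin (0:ℝ) (Ioi 0)) (nhds C) := by
      have h2 := hc₁.sub (hlim.const_mul β)
      refine h2.congr' ?_
      filter_upwards [hmem] with r hr
      have hr0 : (0:ℝ) < r := hr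
      have hne : r^((n:ℝ)-γ) ≠ 0 := ne_of_gt (Real.rpow_pos_of_pos hr0 _)
      have e1 : r^((n:ℝ)-1) = r^((n:ℝ)-γ) * r^(γ-1) := by
        rw [← Real.rpow_add hr0, show (n:ℝ)-γ+(γ-1) = (n:ℝ)-1 by ring]
      have e2 : r^((n:ℝ)) = r^((n:ℝ)-γ) * r^γ := by
        rw [← Real.rpow_add hr0, show (n:ℝ)-γ+γ = (n:ℝ) by ring]
      simp only [hPdef]
      rw [sub_self, e1, e2]
      field_simp
      ring
    have finish2 : ∀ K₂ : ℝ, Tendsto (fun x => x * deriv g x)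
        (nhdsWithin (0:ℝ) (Ioi 0)) (nhds K₂) → False := by
      intro K₂ hK2
      have hgl : Tendsto (fun x => g x / (-Real.log x)) (nhdsWithin (0:ℝ) (Ioi 0))
          (nhds (-K₂)) := by
        apply lhopital_top 1 one_pos g (fun s => -Real.log s) (deriv g) (fun s => -s⁻¹) (-K₂)
          (fun x hx => hgd x hx.1)
          (fun x hx => (Real.hasDerivAt_log (ne_of_gt hx.1)).neg)
          (hg'cont.mono Ioo_subset_Ioi_self)
          (ContinuousOn.neg (fun s hs => (continuousAt_inv₀ (ne_of_gt hs.1)).continuousWithinAt))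
          (fun x hx => neg_neg_iff_pos.mpr (inv_pos.2 hx.1))
          hneglog
        refine hK2.neg.congr' ?_
        filter_upwards [hmem] with r hr
        have hrne : r ≠ 0 := ne_of_gt (show (0:ℝ) < r from hr)
        field_simp
      have hzero : Tendsto (fun x => x^(γ*m) * g x) (nhdsWithin (0:ℝ) (Ioi 0)) (nhds 0) := by
        have h2 := hgl.mul (tendsto_log_mul_rpow_nhdsGT_zero (mul_pos hγ0 hm0)).neg
        rw [neg_zero, mul_zero] at h2
        refine h2.congr' ?_
        filter_upwards [Ioo_mem_nhdsGT_of_mem ⟨le_refl (0:ℝ), one_pos⟩] with r hr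
        have hlneg : Real.log r < 0 := Real.log_neg hr.1 hr.2
        have h₁ : -Real.log r ≠ 0 := ne_of_gt (neg_pos.2 hlneg)
        rw [div_eq_mul_inv]
        have e4 : g r * (-Real.log r)⁻¹ * -(Real.log r * r^(γ*m))
            = g r * r^(γ*m) * ((-Real.log r)⁻¹ * (-Real.log r)) := by ring
        rw [e4, inv_mul_cancel₀ h₁, mul_one]
        ring
      exact absurd (tendsto_nhds_unique hgm hzero) (ne_of_gt hgmpos)
    rcases lt_trichotomy γ 2 with hlt2 | heq2 | hgt2
    · refine finish2 0 ?_
      have h2 := hC.mul (tendsto_rpow_pos_zero0 (by linarith : 0 < 2-γ))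
      rw [mul_zero] at h2
      refine h2.congr' ?_
      filter_upwards [hmem] with r hr
      have hr0 : (0:ℝ) < r := hr
      have e1 : r^(γ-1) * r^(2-γ) = r := by
        rw [← Real.rpow_add hr0, show γ-1+(2-γ) = 1 by ring, Real.rpow_one]
      calc r^(γ-1) * deriv g r * r^(2-γ) = (r^(γ-1) * r^(2-γ)) * deriv g r := by ring
        _ = r * deriv g r := by rw [e1]
    · refine finish2 C ?_
      refine hC.congr' ?_
      filter_upwards [hmem] with r hr
      rw [show γ-1 = 1 by rw [heq2]; norm_num, Real.rpow_one]
    · have hfin : Tendsto (fun x => g x / x^(-(γ-2))) (nhdsWithin (0:ℝ) (Ioi 0))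
          (nhds (C * -(γ-2)⁻¹)) := by
        apply lhopital_top 1 one_pos g (fun s => s^(-(γ-2))) (deriv g)
            (fun s => -(γ-2)*s^(-(γ-2)-1)) _
          (fun x hx => hgd x hx.1)
          (fun x hx => by
            have h5 := Real.hasDerivAt_rpow_const (x := x) (p := -(γ-2)) (Or.inl (ne_of_gt hx.1))
            exact h5)
          (hg'cont.mono Ioo_subset_Ioi_self)
          (continuousOn_const.mul ((hrpowc _).mono Ioo_subset_Ioi_self))
          (fun x hx => mul_neg_of_neg_of_pos (by linarith)
            (Real.rpow_pos_of_pos hx.1 (-(γ-2)-1)))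
          (tendsto_rpow_neg_atTop0 (by linarith : (0:ℝ) < γ-2))
        have h2 := hC.mul_const (-(γ-2)⁻¹)
        refine h2.congr' ?_
        filter_upwards [hmem] with r hr
        have hr0 : (0:ℝ) < r := hr
        have h₃ : (0:ℝ) < r^(γ-1) := Real.rpow_pos_of_pos hr0 _
        have e1 : r^(-(γ-2)-1) = (r^(γ-1))⁻¹ := by
          rw [show -(γ-2)-1 = -(γ-1) by ring, Real.rpow_neg hr0.le]
        rw [e1, div_eq_mul_inv, mul_inv, inv_inv, inv_neg]
        ring
      have hatop : Tendsto (fun x => g x / x^(-(γ-2))) (nhdsWithin (0:ℝ) (Ioi 0)) atTop := by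
        have h2 := shift_limit_top hγm2 g hgmpos hgm
        refine h2.congr' ?_
        filter_upwards [hmem] with r hr
        have hr0 : (0:ℝ) < r := hr
        rw [Real.rpow_neg hr0.le, div_eq_mul_inv, inv_inv]
        ring
      exact not_tendsto_nhds_of_tendsto_atTop hatop _ hfin
  · -- Regime I : γ(1-m) > 2
    have hγm0 : 0 < γ * m := mul_pos hγ0 hm0
    have ha : 0 < γ - 2 := by nlinarith
    have hgm2 : γ*m < γ - 2 := by nlinarith
    set K := β*(γ - q)*η with hKdef
    have hK : K ≠ 0 := mul_ne_zero (mul_ne_zero hβ (sub_ne_zero.2 hγq)) (ne_of_gt hη)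
    have hterm : Tendsto (fun r => r^(γ-2) * g r) (nhdsWithin (0:ℝ) (Ioi 0)) (nhds 0) :=
      shift_limit hgm2 g (η^m/m) hgm
    have h1 : Tendsto (fun r => β*(γ - q) * (r^γ * f r) - (γ - (n:ℝ))*(γ-2) * (r^(γ-2) * g r))
        (nhdsWithin (0:ℝ) (Ioi 0)) (nhds K) := by
      have h2 := (hlim.const_mul (β*(γ-q))).sub (hterm.const_mul ((γ - (n:ℝ))*(γ-2)))
      rw [mul_zero, sub_zero] at h2
      exact h2
    set Q := fun s : ℝ => s^(γ-1) * deriv g s - (γ - (n:ℝ)) * (s^(γ-2) * g s) + β * (s^γ * f s)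
      with hQdef
    set Q' := fun r : ℝ => β*(γ - q) * (r^(γ-1) * f r) - (γ - (n:ℝ))*(γ-2) * (r^(γ-3) * g r)
      with hQ'def
    have hQd : ∀ x ∈ Ioo (0:ℝ) 1, HasDerivAt Q (Q' x) x := fun x hx => hQ γ x hx.1
    have hrQ' : Tendsto (fun x => x * Q' x) (nhdsWithin (0:ℝ) (Ioi 0)) (nhds K) := by
      refine h1.congr' ?_
      filter_upwards [hmem] with r hr
      have hr0 : (0:ℝ) < r := hr
      have hrne : r ≠ 0 := ne_of_gt hr0
      have e1 : r^γ = r^(γ-1) * r := by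
        rw [← Real.rpow_add_one hrne (γ-1), show γ-1+1 = γ by ring]
      have e2 : r^(γ-2) = r^(γ-3) * r := by
        rw [← Real.rpow_add_one hrne (γ-3), show γ-3+1 = γ-2 by ring]
      simp only [hQ'def]
      rw [e1, e2]; ring
    have hQlog : Tendsto (fun x => Q x / (-Real.log x)) (nhdsWithin (0:ℝ) (Ioi 0)) (nhds (-K)) := by
      apply lhopital_top 1 one_pos Q (fun s => -Real.log s) Q' (fun s => -s⁻¹) (-K) hQd
        (fun x hx => (Real.hasDerivAt_log (ne_of_gt hx.1)).neg)
        ((hQ'cont γ).mono Ioo_subset_Ioi_self)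
        (ContinuousOn.neg (fun s hs => (continuousAt_inv₀ (ne_of_gt hs.1)).continuousWithinAt))
        (fun x hx => neg_neg_iff_pos.mpr (inv_pos.2 hx.1))
        hneglog
      refine hrQ'.neg.congr' ?_
      filter_upwards [hmem] with r hr
      have hrne : r ≠ 0 := ne_of_gt (show (0:ℝ) < r from hr)
      field_simp
    have hR : Tendsto (fun x => (x^(γ-1) * deriv g x) * (-Real.log x)⁻¹)
        (nhdsWithin (0:ℝ) (Ioi 0)) (nhds (-K)) := by
      have h2 : Tendsto (fun x => ((γ - (n:ℝ)) * (x^(γ-2) * g x) - β * (x^γ * f x)) * (-Real.log x)⁻¹)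
          (nhdsWithin (0:ℝ) (Ioi 0)) (nhds (((γ - (n:ℝ)) * 0 - β * η) * 0)) :=
        ((hterm.const_mul _).sub (hlim.const_mul β)).mul hneginv
      rw [mul_zero] at h2
      have h3 := hQlog.add h2
      rw [add_zero] at h3
      refine h3.congr' ?_
      filter_upwards [hmem] with r hr
      simp only [hQdef]
      rw [div_eq_mul_inv]; ring
    -- second L'Hopital with H3 = x^(-a) * (-log x)
    set a := γ - 2 with hadef
    set H3 := fun s : ℝ => s^(-a) * (-Real.log s) with hH3def
    set H3' := fun s : ℝ => s^(-a-1) * (a * Real.log s - 1) with hH3'def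
    have hH3d : ∀ x ∈ Ioo (0:ℝ) 1, HasDerivAt H3 (H3' x) x := by
      intro x hx
      have hxne : x ≠ 0 := ne_of_gt hx.1
      have hp := Real.hasDerivAt_rpow_const (x := x) (p := -a) (Or.inl hxne)
      have hl := (Real.hasDerivAt_log hxne).neg
      have hT := hp.mul hl
      refine hT.congr_deriv ?_
      have e1 : x^(-a) = x^(-a-1) * x := by
        rw [← Real.rpow_add_one hxne (-a-1), show -a-1+1 = -a by ring]
      simp only [hH3'def, Pi.neg_apply]
      rw [e1]
      field_simp
      ring
    have hH3'neg : ∀ x ∈ Ioo (0:ℝ) 1, H3' x < 0 := by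
      intro x hx
      have h1 : (0:ℝ) < x^(-a-1) := Real.rpow_pos_of_pos hx.1 _
      have h2 : Real.log x < 0 := Real.log_neg hx.1 hx.2
      have h3 : a * Real.log x - 1 < 0 := by nlinarith
      exact mul_neg_of_pos_of_neg h1 h3
    have hH3top : Tendsto H3 (nhdsWithin (0:ℝ) (Ioi 0)) atTop :=
      (tendsto_rpow_neg_atTop0 ha).atTop_mul_atTop₀ hneglog
    have hH3'c : ContinuousOn H3' (Ioo (0:ℝ) 1) := by
      apply ContinuousOn.mul ((hrpowc _).mono Ioo_subset_Ioi_self)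
      exact (continuousOn_const.mul (Real.continuousOn_log.mono
        (fun s hs => ne_of_gt (α := ℝ) hs.1))).sub continuousOn_const
    have hs2 : Tendsto (fun x => (-Real.log x)/(a * Real.log x - 1))
        (nhdsWithin (0:ℝ) (Ioi 0)) (nhds (-(1/a))) := by
      have h0 : Tendsto (fun t : ℝ => 1/(-a - t⁻¹)) atTop (nhds (1/(-a - 0))) :=
        tendsto_const_nhds.div (tendsto_const_nhds.sub tendsto_inv_atTop_zero)
          (by simpa using ne_of_lt (neg_neg_iff_pos.2 ha))
      have h1 := h0.comp hneglog
      have he : (1:ℝ)/(-a - 0) = -(1/a) := by rw [sub_zero, div_neg]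
      rw [he] at h1
      refine h1.congr' ?_
      filter_upwards [Ioo_mem_nhdsGT_of_mem ⟨le_refl (0:ℝ), one_pos⟩] with r hr
      have hlneg : Real.log r < 0 := Real.log_neg hr.1 hr.2
      have hd : a * Real.log r - 1 < 0 := by nlinarith
      show 1/(-a - (-Real.log r)⁻¹) = (-Real.log r)/(a * Real.log r - 1)
      have h₁ : -Real.log r ≠ 0 := ne_of_gt (neg_pos.2 hlneg)
      have h₂ : a * Real.log r - 1 ≠ 0 := ne_of_lt hd
      have h₃ : -a - (-Real.log r)⁻¹ = (a * Real.log r - 1) / (-Real.log r) := by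
        rw [eq_div_iff h₁, sub_mul, inv_mul_cancel₀ h₁]; ring
      rw [h₃, one_div_div]
    have hratio3 : Tendsto (fun x => deriv g x / H3' x) (nhdsWithin (0:ℝ) (Ioi 0))
        (nhds ((-K) * -(1/a))) := by
      have hT := hR.mul hs2
      refine hT.congr' ?_
      filter_upwards [Ioo_mem_nhdsGT_of_mem ⟨le_refl (0:ℝ), one_pos⟩] with r hr
      have hlneg : Real.log r < 0 := Real.log_neg hr.1 hr.2
      have hd : a * Real.log r - 1 < 0 := by nlinarith
      have h₁ : -Real.log r ≠ 0 := ne_of_gt (neg_pos.2 hlneg)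
      have h₂ : a * Real.log r - 1 ≠ 0 := ne_of_lt hd
      have h₃ : (0:ℝ) < r ^ (γ-1) := Real.rpow_pos_of_pos hr.1 _
      have e1 : r^(-a-1) = (r^(γ-1))⁻¹ := by
        rw [show -a-1 = -(γ-1) by rw [hadef]; ring, Real.rpow_neg hr.1.le]
      simp only [hH3'def]
      rw [e1, div_eq_mul_inv, div_eq_mul_inv, mul_inv, inv_inv]
      have e4 : r ^ (γ-1) * deriv g r * (-Real.log r)⁻¹ * (-Real.log r * (a * Real.log r - 1)⁻¹)
          = r ^ (γ-1) * deriv g r * (a * Real.log r - 1)⁻¹ * ((-Real.log r)⁻¹ * (-Real.log r)) := by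
        ring
      rw [e4, inv_mul_cancel₀ h₁, mul_one]
      ring
    have hgH3 : Tendsto (fun x => g x / H3 x) (nhdsWithin (0:ℝ) (Ioi 0)) (nhds ((-K) * -(1/a))) :=
      lhopital_top 1 one_pos g H3 (deriv g) H3' _ (fun x hx => hgd x hx.1) hH3d
        (hg'cont.mono Ioo_subset_Ioi_self) hH3'c hH3'neg hH3top hratio3
    have hzero : Tendsto (fun x => g x / H3 x) (nhdsWithin (0:ℝ) (Ioi 0)) (nhds 0) := by
      have h2 := hgm.mul ((tendsto_rpow_pos_zero0 (show 0 < a - γ*m by rw [hadef]; linarith)).mul hneginv)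
      rw [mul_zero, mul_zero] at h2
      refine h2.congr' ?_
      filter_upwards [hmem] with r hr
      have hr0 : (0:ℝ) < r := hr
      have e1 : r^(γ*m) * r^(a-γ*m) = r^a := by
        rw [← Real.rpow_add hr0, show γ*m+(a-γ*m) = a by ring]
      have e2 : (r^(-a))⁻¹ = r^a := by
        rw [show -a = -a from rfl, Real.rpow_neg hr0.le, inv_inv]
      simp only [hH3def]
      rw [div_eq_mul_inv, mul_inv, e2]
      calc r ^ (γ*m) * g r * (r^(a-γ*m) * (-Real.log r)⁻¹)
          = g r * (r^(γ*m) * r^(a-γ*m)) * (-Real.log r)⁻¹ := by ring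
        _ = g r * (r^a * (-Real.log r)⁻¹) := by rw [e1]; ring
    have hfin := tendsto_nhds_unique hgH3 hzero
    have hKa : K / a = 0 := by
      have h2 : (-K) * -(1/a) = K / a := by field_simp
      rwa [h2] at hfin
    exact hK ((div_eq_zero_iff.1 hKa).resolve_right (ne_of_gt ha))
end
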